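/- arXiv:2410.15739 — 4 statements merged into one kernel-verified Lean document; each statement's English description precedes it below -/
import Mathlib

section
/- For skew shapes: GP_{λ/μ}(β,...,β | -β^{-1}) = β^{|λ/μ|}, equivalently Σ_{T ∈ SSVT_P(λ/μ,n)} (-1)^{|T| - |λ/μ|} = 1. -/
open Finset

/- Letters of the alphabet `{1' < 1 < 2' < 2 < … < n' < n}` are encoded as
natural numbers: `2*k - 1` encodes the primed letter `k'` and `2*k` encodes the
unprimed letter `k`.  The usual order on `ℕ` then matches the alphabet order. -/

/-- A strict partition: a strictly decreasing list of positive integers. -/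
def IsStrictPartition (lam : List ℕ) : Prop :=
  lam.Chain' (· > ·) ∧ ∀ p ∈ lam, 0 < p

/-- Cells of the shifted skew Young diagram of `λ/μ` (rows are 1-indexed):
`(i,j)` with `1 ≤ i ≤ ℓ(λ)` and `μ_i + i ≤ j ≤ λ_i + i - 1`. -/
def sCells (lam mu : List ℕ) : Finset (ℕ × ℕ) :=
  (Finset.range (lam.length + 1) ×ˢ
      Finset.range (lam.length + lam.foldr max 0 + 1)).filter
    (fun c => 1 ≤ c.1 ∧ c.1 ≤ lam.length ∧
      mu.getD (c.1 - 1) 0 + c.1 ≤ c.2 ∧ c.2 ≤ lam.getD (c.1 - 1) 0 + c.1 - 1)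

/-- Shifted skew set-valued semistandard tableau of Q-type of shape `λ/μ`,
with letters from `{1' < 1 < … < n' < n}` (encoded in `[1, 2n]`). -/
structure IsSSVTQ (lam mu : List ℕ) (n : ℕ) (T : ℕ × ℕ → Finset ℕ) : Prop where
  support : ∀ c, c ∉ sCells lam mu → T c = ∅
  cellNonempty : ∀ c ∈ sCells lam mu, (T c).Nonempty
  inRange : ∀ c, ∀ a ∈ T c, 1 ≤ a ∧ a ≤ 2 * n
  rowWeak : ∀ i j, (i, j) ∈ sCells lam mu → (i, j + 1) ∈ sCells lam mu →
      ∀ a ∈ T (i, j), ∀ b ∈ T (i, j + 1), a ≤ b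
  colWeak : ∀ i j, (i, j) ∈ sCells lam mu → (i + 1, j) ∈ sCells lam mu →
      ∀ a ∈ T (i, j), ∀ b ∈ T (i + 1, j), a ≤ b
  colOnce : ∀ a, a % 2 = 0 → ∀ i i' j, a ∈ T (i, j) → a ∈ T (i', j) → i = i'
  rowOnce : ∀ a, a % 2 = 1 → ∀ i j j', a ∈ T (i, j) → a ∈ T (i, j') → j = j'

/-- P-type: additionally no primed (odd-encoded) letters on the main diagonal. -/
def IsSSVTP (lam mu : List ℕ) (n : ℕ) (T : ℕ × ℕ → Finset ℕ) : Prop :=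
  IsSSVTQ lam mu n T ∧ ∀ i, ∀ a ∈ T (i, i), a % 2 = 0

/-- `|T|`: total number of letters placed in the tableau. -/
def tabSize (lam mu : List ℕ) (T : ℕ × ℕ → Finset ℕ) : ℕ :=
  ∑ c ∈ sCells lam mu, (T c).card

/-- `ω_k(T)`: number of occurrences of `k` and `k'` in `T`. -/
def tabWeight (lam mu : List ℕ) (T : ℕ × ℕ → Finset ℕ) (k : ℕ) : ℕ :=
  ∑ c ∈ sCells lam mu, ((T c).filter (fun a => (a + 1) / 2 = k)).card

/-- Total entry sum of a tableau, where the letter encoded by `a` has value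
`a/2` (so `k'` counts as `k - 1/2` and `k` counts as `k`). -/
def entrySum (lam mu : List ℕ) (T : ℕ × ℕ → Finset ℕ) : ℚ :=
  ∑ c ∈ sCells lam mu, ∑ a ∈ T c, (a : ℚ) / 2

/-- The minimal straight-shape P-tableau `T_P`, with `(T_P)_{i,j} = {i}`. -/
def TminP (lam : List ℕ) : ℕ × ℕ → Finset ℕ :=
  fun c => if c ∈ sCells lam [] then {2 * c.1} else ∅

/-- The minimal straight-shape Q-tableau `T_Q`, with `(T_Q)_{i,i} = {i'}` and
`(T_Q)_{i,j} = {i}` off the diagonal. -/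
def TminQ (lam : List ℕ) : ℕ × ℕ → Finset ℕ :=
  fun c => if c ∈ sCells lam [] then
    (if c.1 = c.2 then {2 * c.1 - 1} else {2 * c.1}) else ∅

/-- Specialization of the K-theoretic (skew) Schur P-function
`GP_{λ/μ}(x₁,…,xₙ | β) = Σ_T β^{|T|-|λ/μ|} x^{ω(T)}`. -/
noncomputable def GPspec (lam mu : List ℕ) (n : ℕ) (x : ℕ → ℚ) (β : ℚ) : ℚ :=
  ∑ᶠ T ∈ {T : ℕ × ℕ → Finset ℕ | IsSSVTP lam mu n T},
    β ^ (tabSize lam mu T - (lam.sum - mu.sum)) *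
      ∏ k ∈ Finset.Icc 1 n, x k ^ tabWeight lam mu T k

/-- Specialization of the K-theoretic (skew) Schur Q-function. -/
noncomputable def GQspec (lam mu : List ℕ) (n : ℕ) (x : ℕ → ℚ) (β : ℚ) : ℚ :=
  ∑ᶠ T ∈ {T : ℕ × ℕ → Finset ℕ | IsSSVTQ lam mu n T},
    β ^ (tabSize lam mu T - (lam.sum - mu.sum)) *
      ∏ k ∈ Finset.Icc 1 n, x k ^ tabWeight lam mu T k

/-- Schur P-polynomial: sum of `x^{ω(T)}` over shifted semistandard tableaux
(set-valued tableaux all of whose cells are singletons), P-condition. -/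
noncomputable def Ppoly (lam : List ℕ) (n : ℕ) (x : ℕ → ℚ) : ℚ :=
  ∑ᶠ T ∈ {T : ℕ × ℕ → Finset ℕ | IsSSVTP lam [] n T ∧
      ∀ c ∈ sCells lam [], (T c).card = 1},
    ∏ k ∈ Finset.Icc 1 n, x k ^ tabWeight lam [] T k

/-- Schur Q-polynomial (no diagonal restriction). -/
noncomputable def Qpoly (lam : List ℕ) (n : ℕ) (x : ℕ → ℚ) : ℚ :=
  ∑ᶠ T ∈ {T : ℕ × ℕ → Finset ℕ | IsSSVTQ lam [] n T ∧
      ∀ c ∈ sCells lam [], (T c).card = 1},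
    ∏ k ∈ Finset.Icc 1 n, x k ^ tabWeight lam [] T k

/-- Rows of `μ` containing a removable box: row `i` (1-indexed) is removable
iff decreasing `μ_i` by one again yields a strict partition. -/
def remRows (mu : List ℕ) : Finset ℕ :=
  (Finset.Icc 1 mu.length).filter
    (fun i => mu.getD i 0 + 1 < mu.getD (i - 1) 0 ∨ mu.getD (i - 1) 0 = 1)

/-- Remove one box from each row in `B` (rows 1-indexed). -/
def removeRows (mu : List ℕ) (B : Finset ℕ) : List ℕ :=
  mu.mapIdx (fun i p => if i + 1 ∈ B then p - 1 else p)

/-- Strictly decreasing list of naturals, allowing trailing zeros. -/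
def IsStrictPartitionZ (l : List ℕ) : Prop :=
  l.Chain' (fun a b => b < a ∨ b = 0)

/-- `μ ⊆ λ` componentwise (with `μ` padded by zeros). -/
def SubPartition (mu lam : List ℕ) : Prop :=
  mu.length ≤ lam.length ∧ ∀ i, mu.getD i 0 ≤ lam.getD i 0

/-! ### Auxiliary development -/

noncomputable section AuxGP
open scoped Classical

namespace AuxGP

/-- value ≤ foldr max -/
lemma getD_le_foldr_max (l : List ℕ) (i : ℕ) : l.getD i 0 ≤ l.foldr max 0 := by
  induction l generalizing i with
  | nil => simp
  | cons a t ih =>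
    cases i with
    | zero => simp
    | succ i => simpa using le_trans (ih i) (le_max_right a _)

lemma mem_sCells_iff {lam mu : List ℕ} {c : ℕ × ℕ} :
    c ∈ sCells lam mu ↔ 1 ≤ c.1 ∧ c.1 ≤ lam.length ∧
      mu.getD (c.1 - 1) 0 + c.1 ≤ c.2 ∧ c.2 ≤ lam.getD (c.1 - 1) 0 + c.1 - 1 := by
  constructor
  · intro h
    exact (Finset.mem_filter.1 h).2
  · intro h
    refine Finset.mem_filter.2 ⟨Finset.mem_product.2 ⟨Finset.mem_range.2 ?_, Finset.mem_range.2 ?_⟩, h⟩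
    · omega
    · have := getD_le_foldr_max lam (c.1 - 1)
      omega

lemma cell_sum_bound {lam mu : List ℕ} {c : ℕ × ℕ} (h : c ∈ sCells lam mu) :
    c.1 + c.2 ≤ 2 * lam.length + lam.foldr max 0 := by
  have h2 := (Finset.mem_filter.1 h).1
  have h3 := Finset.mem_product.1 h2
  have r1 := Finset.mem_range.1 h3.1
  have r2 := Finset.mem_range.1 h3.2
  omega

/-- strictly decreasing chain: consecutive getD -/
lemma chain_getD_lt {l : List ℕ} (h : l.Chain' (· > ·)) {i : ℕ} (hi : i + 1 < l.length) :
    l.getD (i + 1) 0 < l.getD i 0 := by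
  have h2 := List.isChain_iff_getElem.1 h i (by omega)
  rw [List.getD_eq_getElem _ _ (by omega : i < l.length), List.getD_eq_getElem _ _ hi]
  simpa [List.get_eq_getElem] using h2

/-- `getD j + j ≤ getD i + i` for `i ≤ j < len` along a strictly decreasing list. -/
lemma plus_mono {l : List ℕ} (h : l.Chain' (· > ·)) :
    ∀ {i j : ℕ}, i ≤ j → j < l.length → l.getD j 0 + j ≤ l.getD i 0 + i := by
  intro i j hij hj
  induction j with
  | zero => interval_cases i; omega
  | succ j ih =>
    rcases Nat.eq_or_lt_of_le hij with rfl | hlt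
    · omega
    · have h1 := chain_getD_lt h hj
      have := ih (by omega) (by omega)
      omega

/-- rows of the diagram are intervals -/
lemma row_interval {lam mu : List ℕ} {i j j' k : ℕ}
    (h1 : (i, j) ∈ sCells lam mu) (h2 : (i, k) ∈ sCells lam mu)
    (hj : j ≤ j') (hk : j' ≤ k) : (i, j') ∈ sCells lam mu := by
  rw [mem_sCells_iff] at h1 h2 ⊢
  simp only at h1 h2 ⊢
  omega

/-- columns of the diagram are intervals -/
lemma col_interval {lam mu : List ℕ} (hl : IsStrictPartition lam) (hm : IsStrictPartition mu)
    {i j i' k : ℕ}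
    (h1 : (i, j) ∈ sCells lam mu) (h2 : (k, j) ∈ sCells lam mu)
    (hi : i ≤ i') (hk : i' ≤ k) : (i', j) ∈ sCells lam mu := by
  rw [mem_sCells_iff] at h1 h2 ⊢
  simp only at h1 h2 ⊢
  have hup : lam.getD (k - 1) 0 + (k - 1) ≤ lam.getD (i' - 1) 0 + (i' - 1) :=
    plus_mono hl.1 (by omega) (by omega)
  refine ⟨by omega, by omega, ?_, by omega⟩
  by_cases hcase : i' - 1 < mu.length
  · have hlow : mu.getD (i' - 1) 0 + (i' - 1) ≤ mu.getD (i - 1) 0 + (i - 1) :=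
      plus_mono hm.1 (by omega) hcase
    omega
  · have : mu.getD (i' - 1) 0 = 0 := List.getD_eq_default _ _ (by omega)
    omega

end AuxGP
namespace AuxGP

lemma list_sum_eq_sum_getD (l : List ℕ) :
    l.sum = ∑ i ∈ Finset.range l.length, l.getD i 0 := by
  induction l with
  | nil => simp
  | cons a t ih =>
    rw [List.sum_cons, List.length_cons, Finset.sum_range_succ']
    simp only [List.getD_cons_succ, List.getD_cons_zero]
    rw [← ih]; ring

lemma sCells_eq_biUnion (lam mu : List ℕ) :
    sCells lam mu = (Finset.range lam.length).biUnion (fun i0 =>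
      (Finset.Ico (mu.getD i0 0 + i0 + 1) (lam.getD i0 0 + i0 + 1)).image (fun j => (i0 + 1, j))) := by
  ext ⟨i, j⟩
  rw [mem_sCells_iff]
  simp only [Finset.mem_biUnion, Finset.mem_range, Finset.mem_image, Finset.mem_Ico]
  constructor
  · rintro ⟨h1, h2, h3, h4⟩
    refine ⟨i - 1, by omega, j, ⟨by omega, ?_⟩, by rw [Prod.mk.injEq]; omega⟩
    have h5 : 1 ≤ i := h1
    omega
  · rintro ⟨i0, hi0, j', ⟨hj1, hj2⟩, h⟩
    obtain ⟨rfl, rfl⟩ := Prod.mk.injEq .. ▸ h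
    simp only [Nat.add_sub_cancel]
    omega

lemma card_sCells (lam mu : List ℕ) (hsub : SubPartition mu lam) :
    (sCells lam mu).card = lam.sum - mu.sum := by
  rw [sCells_eq_biUnion]
  rw [Finset.card_biUnion]
  · have hterm : ∀ i0 ∈ Finset.range lam.length,
        ((Finset.Ico (mu.getD i0 0 + i0 + 1) (lam.getD i0 0 + i0 + 1)).image
          (fun j => (i0 + 1, j))).card = lam.getD i0 0 - mu.getD i0 0 := by
      intro i0 _
      rw [Finset.card_image_of_injective _ (by intro a b hab; simpa using hab)]
      rw [Nat.card_Ico]; omega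
    rw [Finset.sum_congr rfl hterm]
    have hmu : mu.sum = ∑ i ∈ Finset.range lam.length, mu.getD i 0 := by
      rw [list_sum_eq_sum_getD]
      apply Finset.sum_subset
      · exact Finset.range_subset_range.2 hsub.1
      · intro i _ hi
        exact List.getD_eq_default _ _ (by simpa using hi)
    rw [list_sum_eq_sum_getD lam, hmu]
    rw [eq_comm, Nat.sub_eq_iff_eq_add (Finset.sum_le_sum (fun i _ => hsub.2 i)), ← Finset.sum_add_distrib]
    apply Finset.sum_congr rfl
    intro i _
    have := hsub.2 i
    omega
  · intro a _ b _ hab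
    simp only [Finset.disjoint_left, Finset.mem_image, Finset.mem_Ico]
    rintro ⟨x, y⟩ ⟨j, _, h⟩ ⟨j', _, h'⟩
    obtain ⟨rfl, rfl⟩ := Prod.mk.injEq .. ▸ h
    obtain ⟨h1, -⟩ := Prod.mk.injEq .. ▸ h'
    omega

end AuxGP
namespace AuxGP

/-- The minimum entry of each cell (0 for empty cells). -/
def mfun (T : ℕ × ℕ → Finset ℕ) (c : ℕ × ℕ) : ℕ := ((T c).min).getD 0

lemma getD_min_eq {s : Finset ℕ} {b : ℕ} (hb : b ∈ s) (hall : ∀ x ∈ s, b ≤ x) :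
    (s.min).getD 0 = b := by
  have h1 : s.min = (b : WithTop ℕ) := by
    refine le_antisymm (Finset.min_le hb) (Finset.le_min ?_)
    intro y hy
    exact WithTop.coe_le_coe.2 (hall y hy)
  rw [h1]; rfl

lemma mfun_mem {T : ℕ × ℕ → Finset ℕ} {c : ℕ × ℕ} (h : (T c).Nonempty) :
    mfun T c ∈ T c := by
  obtain ⟨b, hb⟩ := Finset.min_of_nonempty h
  have : mfun T c = b := by rw [mfun, hb]; rfl
  rw [this]
  exact Finset.mem_of_min hb

lemma mfun_le {T : ℕ × ℕ → Finset ℕ} {c : ℕ × ℕ} {a : ℕ} (ha : a ∈ T c) :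
    mfun T c ≤ a := by
  obtain ⟨b, hb⟩ := Finset.min_of_mem ha
  have h2 : mfun T c = b := by rw [mfun, hb]; rfl
  rw [h2]
  exact Finset.min_le_of_eq ha hb

/-- The local "allowed" predicate for a letter `a` at cell `c`, relative to a
singleton filling `m` (conditions with respect to right and below neighbours). -/
def allowedL (lam mu : List ℕ) (m : ℕ × ℕ → ℕ) (c : ℕ × ℕ) (a : ℕ) : Prop :=
  (c.1 = c.2 → a % 2 = 0) ∧
  ((c.1, c.2 + 1) ∈ sCells lam mu →
    a ≤ m (c.1, c.2 + 1) ∧ (a = m (c.1, c.2 + 1) → a % 2 = 0)) ∧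
  ((c.1 + 1, c.2) ∈ sCells lam mu →
    a ≤ m (c.1 + 1, c.2) ∧ (a = m (c.1 + 1, c.2) → a % 2 = 1))

/-- Letters allowed at `c` (including the current minimum). -/
def Lfin (lam mu : List ℕ) (n : ℕ) (m : ℕ × ℕ → ℕ) (c : ℕ × ℕ) : Finset ℕ :=
  (Finset.Icc 1 (2 * n)).filter (fun a => allowedL lam mu m c a)

/-- Letters that could be added at `c` strictly above the current minimum. -/
def Afin (lam mu : List ℕ) (n : ℕ) (m : ℕ × ℕ → ℕ) (c : ℕ × ℕ) : Finset ℕ :=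
  (Lfin lam mu n m c).filter (fun a => m c < a)

lemma mem_Afin_iff {lam mu : List ℕ} {n : ℕ} {m : ℕ × ℕ → ℕ} {c : ℕ × ℕ} {a : ℕ} :
    a ∈ Afin lam mu n m c ↔ (1 ≤ a ∧ a ≤ 2 * n) ∧ allowedL lam mu m c a ∧ m c < a := by
  simp [Afin, Lfin, Finset.mem_filter, and_assoc]

lemma mem_Lfin_iff {lam mu : List ℕ} {n : ℕ} {m : ℕ × ℕ → ℕ} {c : ℕ × ℕ} {a : ℕ} :
    a ∈ Lfin lam mu n m c ↔ (1 ≤ a ∧ a ≤ 2 * n) ∧ allowedL lam mu m c a := by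
  simp [Lfin, Finset.mem_filter, and_assoc]

/-- `Afin`/`Lfin` only depend on the values of `m` on cells. -/
lemma allowedL_congr {lam mu : List ℕ} {m m' : ℕ × ℕ → ℕ} {c : ℕ × ℕ}
    (hc : c ∈ sCells lam mu) (h : ∀ d ∈ sCells lam mu, m d = m' d) {a : ℕ} :
    allowedL lam mu m c a ↔ allowedL lam mu m' c a := by
  unfold allowedL
  constructor <;> rintro ⟨h1, h2, h3⟩ <;> refine ⟨h1, ?_, ?_⟩ <;> intro hmem
  · rw [← h _ hmem]; exact h2 hmem
  · rw [← h _ hmem]; exact h3 hmem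
  · rw [h _ hmem]; exact h2 hmem
  · rw [h _ hmem]; exact h3 hmem

lemma Afin_congr {lam mu : List ℕ} {n : ℕ} {m m' : ℕ × ℕ → ℕ} {c : ℕ × ℕ}
    (hc : c ∈ sCells lam mu) (h : ∀ d ∈ sCells lam mu, m d = m' d) :
    Afin lam mu n m c = Afin lam mu n m' c := by
  ext a
  rw [mem_Afin_iff, mem_Afin_iff, allowedL_congr hc h, h c hc]

end AuxGP
namespace AuxGP

section Chains

variable {lam mu : List ℕ} {m : ℕ × ℕ → ℕ}

/-- generic monotonicity along rows for a singleton filling satisfying `allowedL`. -/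
lemma row_mono (hall : ∀ c ∈ sCells lam mu, allowedL lam mu m c (m c))
    {i j j' : ℕ} (h1 : (i, j) ∈ sCells lam mu) (h2 : (i, j') ∈ sCells lam mu)
    (hj : j ≤ j') : m (i, j) ≤ m (i, j') := by
  induction j' with
  | zero => have : j = 0 := by omega
            subst this; exact le_rfl
  | succ j' ih =>
    rcases Nat.eq_or_lt_of_le hj with rfl | hlt
    · exact le_rfl
    · have hmem : (i, j') ∈ sCells lam mu := row_interval h1 h2 (by omega) (by omega)
      have step := ((hall _ hmem).2.1 h2).1
      exact le_trans (ih hmem (by omega)) step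

lemma col_mono (hl : IsStrictPartition lam) (hm : IsStrictPartition mu)
    (hall : ∀ c ∈ sCells lam mu, allowedL lam mu m c (m c))
    {i i' j : ℕ} (h1 : (i, j) ∈ sCells lam mu) (h2 : (i', j) ∈ sCells lam mu)
    (hi : i ≤ i') : m (i, j) ≤ m (i', j) := by
  induction i' with
  | zero => have : i = 0 := by omega
            subst this; exact le_rfl
  | succ i' ih =>
    rcases Nat.eq_or_lt_of_le hi with rfl | hlt
    · exact le_rfl
    · have hmem : (i', j) ∈ sCells lam mu := col_interval hl hm h1 h2 (by omega) (by omega)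
      have step := ((hall _ hmem).2.2 h2).1
      exact le_trans (ih hmem (by omega)) step

/-- equal values in the same row force evenness. -/
lemma row_eq_even (hall : ∀ c ∈ sCells lam mu, allowedL lam mu m c (m c))
    {i j j' : ℕ} (h1 : (i, j) ∈ sCells lam mu) (h2 : (i, j') ∈ sCells lam mu)
    (hj : j < j') (heq : m (i, j) = m (i, j')) : m (i, j) % 2 = 0 := by
  have hmem : (i, j + 1) ∈ sCells lam mu := row_interval h1 h2 (by omega) (by omega)
  have step : m (i, j) ≤ m (i, j + 1) ∧ (m (i, j) = m (i, j + 1) → m (i, j) % 2 = 0) :=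
    (hall _ h1).2.1 hmem
  have hmono := row_mono hall hmem h2 (by omega)
  exact step.2 (by omega)

lemma col_eq_odd (hl : IsStrictPartition lam) (hm : IsStrictPartition mu)
    (hall : ∀ c ∈ sCells lam mu, allowedL lam mu m c (m c))
    {i i' j : ℕ} (h1 : (i, j) ∈ sCells lam mu) (h2 : (i', j) ∈ sCells lam mu)
    (hi : i < i') (heq : m (i, j) = m (i', j)) : m (i, j) % 2 = 1 := by
  have hmem : (i + 1, j) ∈ sCells lam mu := col_interval hl hm h1 h2 (by omega) (by omega)
  have step : m (i, j) ≤ m (i + 1, j) ∧ (m (i, j) = m (i + 1, j) → m (i, j) % 2 = 1) :=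
    (hall _ h1).2.2 hmem
  have hmono := col_mono hl hm hall hmem h2 (by omega)
  exact step.2 (by omega)

end Chains

section Tableau

variable {lam mu : List ℕ} {n : ℕ} {T : ℕ × ℕ → Finset ℕ}

lemma le_min_right (hT : IsSSVTP lam mu n T) {i j : ℕ}
    (h1 : (i, j) ∈ sCells lam mu) (h2 : (i, j + 1) ∈ sCells lam mu)
    {a : ℕ} (ha : a ∈ T (i, j)) : a ≤ mfun T (i, j + 1) :=
  hT.1.rowWeak i j h1 h2 a ha _ (mfun_mem (hT.1.cellNonempty _ h2))

lemma le_min_below (hT : IsSSVTP lam mu n T) {i j : ℕ}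
    (h1 : (i, j) ∈ sCells lam mu) (h2 : (i + 1, j) ∈ sCells lam mu)
    {a : ℕ} (ha : a ∈ T (i, j)) : a ≤ mfun T (i + 1, j) :=
  hT.1.colWeak i j h1 h2 a ha _ (mfun_mem (hT.1.cellNonempty _ h2))

lemma min_allowed (hT : IsSSVTP lam mu n T) :
    ∀ c ∈ sCells lam mu, allowedL lam mu (mfun T) c (mfun T c) := by
  rintro ⟨i, j⟩ hc
  have hmem : mfun T (i, j) ∈ T (i, j) := mfun_mem (hT.1.cellNonempty _ hc)
  refine ⟨?_, ?_, ?_⟩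
  · intro hdiag
    have : j = i := hdiag.symm
    subst this
    exact hT.2 j _ hmem
  · intro hr
    refine ⟨le_min_right hT hc hr hmem, ?_⟩
    intro heq
    by_contra hodd
    have hodd' : mfun T (i, j) % 2 = 1 := by omega
    have hmem' : mfun T (i, j) ∈ T (i, j + 1) := by
      rw [heq]; exact mfun_mem (hT.1.cellNonempty _ hr)
    have := hT.1.rowOnce _ hodd' i j (j + 1) hmem hmem'
    omega
  · intro hb
    refine ⟨le_min_below hT hc hb hmem, ?_⟩
    intro heq
    by_contra hodd
    have hodd' : mfun T (i, j) % 2 = 0 := by omega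
    have hmem' : mfun T (i, j) ∈ T (i + 1, j) := by
      rw [heq]; exact mfun_mem (hT.1.cellNonempty _ hb)
    have := hT.1.colOnce _ hodd' i (i + 1) j hmem hmem'
    omega

lemma extra_mem_Afin (hT : IsSSVTP lam mu n T) {c : ℕ × ℕ} (hc : c ∈ sCells lam mu)
    {a : ℕ} (ha : a ∈ T c) (hgt : mfun T c < a) :
    a ∈ Afin lam mu n (mfun T) c := by
  obtain ⟨i, j⟩ := c
  rw [mem_Afin_iff]
  refine ⟨hT.1.inRange _ _ ha, ⟨?_, ?_, ?_⟩, hgt⟩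
  · intro hdiag
    have : j = i := hdiag.symm
    subst this
    exact hT.2 j _ ha
  · intro hr
    refine ⟨le_min_right hT hc hr ha, ?_⟩
    intro heq
    by_contra hodd
    have hodd' : a % 2 = 1 := by omega
    have hmem' : a ∈ T (i, j + 1) := by
      rw [heq]; exact mfun_mem (hT.1.cellNonempty _ hr)
    have := hT.1.rowOnce _ hodd' i j (j + 1) ha hmem'
    omega
  · intro hb
    refine ⟨le_min_below hT hc hb ha, ?_⟩
    intro heq
    by_contra hodd
    have hodd' : a % 2 = 0 := by omega
    have hmem' : a ∈ T (i + 1, j) := by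
      rw [heq]; exact mfun_mem (hT.1.cellNonempty _ hb)
    have := hT.1.colOnce _ hodd' i (i + 1) j ha hmem'
    omega

/-- subset-closedness of validity -/
lemma subset_valid (hT : IsSSVTP lam mu n T) {T' : ℕ × ℕ → Finset ℕ}
    (hsub : ∀ c, T' c ⊆ T c) (hne : ∀ c ∈ sCells lam mu, (T' c).Nonempty) :
    IsSSVTP lam mu n T' := by
  refine ⟨⟨?_, hne, ?_, ?_, ?_, ?_, ?_⟩, ?_⟩
  · intro c hc
    have := hT.1.support c hc
    exact Finset.subset_empty.1 (this ▸ hsub c)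
  · intro c a ha; exact hT.1.inRange c a (hsub c ha)
  · intro i j h1 h2 a ha b hb
    exact hT.1.rowWeak i j h1 h2 a (hsub _ ha) b (hsub _ hb)
  · intro i j h1 h2 a ha b hb
    exact hT.1.colWeak i j h1 h2 a (hsub _ ha) b (hsub _ hb)
  · intro a hp i i' j h1 h2
    exact hT.1.colOnce a hp i i' j (hsub _ h1) (hsub _ h2)
  · intro a hp i j j' h1 h2
    exact hT.1.rowOnce a hp i j j' (hsub _ h1) (hsub _ h2)
  · intro i a ha
    exact hT.2 i a (hsub _ ha)

lemma remove_valid (hT : IsSSVTP lam mu n T) {c₀ : ℕ × ℕ} (hc₀ : c₀ ∈ sCells lam mu)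
    {a₀ : ℕ} (hgt : mfun T c₀ < a₀) :
    IsSSVTP lam mu n (fun c => if c = c₀ then (T c₀).erase a₀ else T c) := by
  apply subset_valid hT
  · intro c
    by_cases h : c = c₀
    · subst h; simp [Finset.erase_subset]
    · simp [h]
  · intro c hc
    by_cases h : c = c₀
    · subst h
      simp only [if_pos rfl]
      exact ⟨mfun T c, Finset.mem_erase.2 ⟨by omega, mfun_mem (hT.1.cellNonempty _ hc)⟩⟩
    · simp only [if_neg h]
      exact hT.1.cellNonempty _ hc

end Tableau

end AuxGP
namespace AuxGP

variable {lam mu : List ℕ} {n : ℕ} {T : ℕ × ℕ → Finset ℕ}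

lemma add_valid (hl : IsStrictPartition lam) (hm : IsStrictPartition mu)
    (hT : IsSSVTP lam mu n T) {c₀ : ℕ × ℕ} (hc₀ : c₀ ∈ sCells lam mu)
    {a₀ : ℕ} (ha₀ : a₀ ∈ Afin lam mu n (mfun T) c₀)
    {T' : ℕ × ℕ → Finset ℕ} (hA : T' c₀ = insert a₀ (T c₀))
    (hB : ∀ c, c ≠ c₀ → T' c = T c) :
    IsSSVTP lam mu n T' := by
  obtain ⟨i₀, j₀⟩ := c₀
  rw [mem_Afin_iff] at ha₀
  obtain ⟨⟨h1a, h2a⟩, ⟨hdg, hrt, hbl⟩, hgt⟩ := ha₀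
  have hall := min_allowed hT
  have hrt' : (i₀, j₀ + 1) ∈ sCells lam mu →
      a₀ ≤ mfun T (i₀, j₀ + 1) ∧ (a₀ = mfun T (i₀, j₀ + 1) → a₀ % 2 = 0) := hrt
  have hbl' : (i₀ + 1, j₀) ∈ sCells lam mu →
      a₀ ≤ mfun T (i₀ + 1, j₀) ∧ (a₀ = mfun T (i₀ + 1, j₀) → a₀ % 2 = 1) := hbl
  have hdg' : i₀ = j₀ → a₀ % 2 = 0 := hdg
  have hgt' : mfun T (i₀, j₀) < a₀ := hgt
  refine ⟨⟨?_, ?_, ?_, ?_, ?_, ?_, ?_⟩, ?_⟩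
  · -- support
    intro c hc
    have hne : c ≠ (i₀, j₀) := by rintro rfl; exact hc hc₀
    rw [hB c hne]
    exact hT.1.support c hc
  · -- nonempty
    intro c hc
    by_cases h : c = (i₀, j₀)
    · subst h; rw [hA]; exact Finset.insert_nonempty _ _
    · rw [hB c h]; exact hT.1.cellNonempty _ hc
  · -- range
    intro c a ha
    by_cases h : c = (i₀, j₀)
    · subst h
      rw [hA] at ha
      rcases Finset.mem_insert.1 ha with heq | ha'
      · rw [heq]; exact ⟨h1a, h2a⟩
      · exact hT.1.inRange _ _ ha'
    · rw [hB c h] at ha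
      exact hT.1.inRange _ _ ha
  · -- rowWeak
    intro i j hij hij1 a ha b hb
    by_cases e1 : (i, j) = (i₀, j₀)
    · simp only [Prod.mk.injEq] at e1
      obtain ⟨rfl, rfl⟩ := e1
      rw [hA] at ha
      have e2 : (i, j + 1) ≠ (i, j) := by simp
      rw [hB _ e2] at hb
      rcases Finset.mem_insert.1 ha with heq | ha'
      · rw [heq]; exact le_trans (hrt' hij1).1 (mfun_le hb)
      · exact hT.1.rowWeak _ _ hij hij1 a ha' b hb
    · rw [hB _ e1] at ha
      by_cases e2 : (i, j + 1) = (i₀, j₀)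
      · rw [e2, hA] at hb
        rcases Finset.mem_insert.1 hb with heq | hb'
      
        · rw [heq]
          have h5 : a ≤ mfun T (i, j + 1) := le_min_right hT hij hij1 ha
          rw [e2] at h5
          omega
        · exact hT.1.rowWeak _ _ hij hij1 a ha b (e2 ▸ hb')
      · rw [hB _ e2] at hb
        exact hT.1.rowWeak _ _ hij hij1 a ha b hb
  · -- colWeak
    intro i j hij hij1 a ha b hb
    by_cases e1 : (i, j) = (i₀, j₀)
    · simp only [Prod.mk.injEq] at e1
      obtain ⟨rfl, rfl⟩ := e1
      rw [hA] at ha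
      have e2 : (i + 1, j) ≠ (i, j) := by simp
      rw [hB _ e2] at hb
      rcases Finset.mem_insert.1 ha with heq | ha'
      · rw [heq]; exact le_trans (hbl' hij1).1 (mfun_le hb)
      · exact hT.1.colWeak _ _ hij hij1 a ha' b hb
    · rw [hB _ e1] at ha
      by_cases e2 : (i + 1, j) = (i₀, j₀)
      · rw [e2, hA] at hb
        rcases Finset.mem_insert.1 hb with heq | hb'
        · rw [heq]
          have h5 : a ≤ mfun T (i + 1, j) := le_min_below hT hij hij1 ha
          rw [e2] at h5
          omega
        · exact hT.1.colWeak _ _ hij hij1 a ha b (e2 ▸ hb')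
      · rw [hB _ e2] at hb
        exact hT.1.colWeak _ _ hij hij1 a ha b hb
  · -- colOnce
    intro a hpar i i' j hai hai'
    by_cases e1 : (i, j) = (i₀, j₀) <;> by_cases e2 : (i', j) = (i₀, j₀)
    · simp only [Prod.mk.injEq] at e1 e2; omega
    · simp only [Prod.mk.injEq] at e1
      obtain ⟨rfl, rfl⟩ := e1
      rw [hA] at hai
      rw [hB _ e2] at hai'
      rcases Finset.mem_insert.1 hai with heq | hai''
      · rw [heq] at hai' hpar
        have hcell' : (i', j) ∈ sCells lam mu := by
          by_contra hcc
          rw [hT.1.support _ hcc] at hai'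
          simp at hai'
        have hc₀' : (i, j) ∈ sCells lam mu := hc₀
        rcases lt_trichotomy i i' with hlt | heq2 | hgt2
        · exfalso
          have hb1 : (i + 1, j) ∈ sCells lam mu :=
            col_interval hl hm hc₀' hcell' (by omega) (by omega)
          have hstep := hbl' hb1
          have hne : a₀ ≠ mfun T (i + 1, j) := by
            intro h
            have := hstep.2 h
            omega
          have hmono : mfun T (i + 1, j) ≤ mfun T (i', j) :=
            col_mono hl hm hall hb1 hcell' (by omega)
          have hle : mfun T (i', j) ≤ a₀ := mfun_le hai'
          omega
        · exact heq2
        · exfalso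
          have hb1 : (i' + 1, j) ∈ sCells lam mu :=
            col_interval hl hm hcell' hc₀' (by omega) (by omega)
          have h5 : a₀ ≤ mfun T (i' + 1, j) := le_min_below hT hcell' hb1 hai'
          have hmono : mfun T (i' + 1, j) ≤ mfun T (i, j) :=
            col_mono hl hm hall hb1 hc₀' (by omega)
          omega
      · exact hT.1.colOnce a hpar i i' j hai'' hai'
    · simp only [Prod.mk.injEq] at e2
      obtain ⟨rfl, rfl⟩ := e2
      rw [hA] at hai'
      rw [hB _ e1] at hai
      rcases Finset.mem_insert.1 hai' with heq | hai''
      · rw [heq] at hai hpar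
        have hcell' : (i, j) ∈ sCells lam mu := by
          by_contra hcc
          rw [hT.1.support _ hcc] at hai
          simp at hai
        have hc₀' : (i', j) ∈ sCells lam mu := hc₀
        rcases lt_trichotomy i' i with hlt | heq2 | hgt2
        · exfalso
          have hb1 : (i' + 1, j) ∈ sCells lam mu :=
            col_interval hl hm hc₀' hcell' (by omega) (by omega)
          have hstep := hbl' hb1
          have hne : a₀ ≠ mfun T (i' + 1, j) := by
            intro h
            have := hstep.2 h
            omega
          have hmono : mfun T (i' + 1, j) ≤ mfun T (i, j) :=
            col_mono hl hm hall hb1 hcell' (by omega)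
          have hle : mfun T (i, j) ≤ a₀ := mfun_le hai
          omega
        · exact heq2.symm
        · exfalso
          have hb1 : (i + 1, j) ∈ sCells lam mu :=
            col_interval hl hm hcell' hc₀' (by omega) (by omega)
          have h5 : a₀ ≤ mfun T (i + 1, j) := le_min_below hT hcell' hb1 hai
          have hmono : mfun T (i + 1, j) ≤ mfun T (i', j) :=
            col_mono hl hm hall hb1 hc₀' (by omega)
          omega
      · exact hT.1.colOnce a hpar i i' j hai hai''
    · rw [hB _ e1] at hai
      rw [hB _ e2] at hai'
      exact hT.1.colOnce a hpar i i' j hai hai'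
  · -- rowOnce
    intro a hpar i j j' haj haj'
    by_cases e1 : (i, j) = (i₀, j₀) <;> by_cases e2 : (i, j') = (i₀, j₀)
    · simp only [Prod.mk.injEq] at e1 e2; omega
    · simp only [Prod.mk.injEq] at e1
      obtain ⟨rfl, rfl⟩ := e1
      rw [hA] at haj
      rw [hB _ e2] at haj'
      rcases Finset.mem_insert.1 haj with heq | haj''
      · rw [heq] at haj' hpar
        have hcell' : (i, j') ∈ sCells lam mu := by
          by_contra hcc
          rw [hT.1.support _ hcc] at haj'
          simp at haj'
        have hc₀' : (i, j) ∈ sCells lam mu := hc₀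
        rcases lt_trichotomy j j' with hlt | heq2 | hgt2
        · exfalso
          have hb1 : (i, j + 1) ∈ sCells lam mu :=
            row_interval hc₀' hcell' (by omega) (by omega)
          have hstep := hrt' hb1
          have hne : a₀ ≠ mfun T (i, j + 1) := by
            intro h
            have := hstep.2 h
            omega
          have hmono : mfun T (i, j + 1) ≤ mfun T (i, j') :=
            row_mono hall hb1 hcell' (by omega)
          have hle : mfun T (i, j') ≤ a₀ := mfun_le haj'
          omega
        · exact heq2
        · exfalso
          have hb1 : (i, j' + 1) ∈ sCells lam mu :=
            row_interval hcell' hc₀' (by omega) (by omega)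
          have h5 : a₀ ≤ mfun T (i, j' + 1) := le_min_right hT hcell' hb1 haj'
          have hmono : mfun T (i, j' + 1) ≤ mfun T (i, j) :=
            row_mono hall hb1 hc₀' (by omega)
          omega
      · exact hT.1.rowOnce a hpar i j j' haj'' haj'
    · simp only [Prod.mk.injEq] at e2
      obtain ⟨rfl, rfl⟩ := e2
      rw [hA] at haj'
      rw [hB _ e1] at haj
      rcases Finset.mem_insert.1 haj' with heq | haj''
      · rw [heq] at haj hpar
        have hcell' : (i, j) ∈ sCells lam mu := by
          by_contra hcc
          rw [hT.1.support _ hcc] at haj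
          simp at haj
        have hc₀' : (i, j') ∈ sCells lam mu := hc₀
        rcases lt_trichotomy j' j with hlt | heq2 | hgt2
        · exfalso
          have hb1 : (i, j' + 1) ∈ sCells lam mu :=
            row_interval hc₀' hcell' (by omega) (by omega)
          have hstep := hrt' hb1
          have hne : a₀ ≠ mfun T (i, j' + 1) := by
            intro h
            have := hstep.2 h
            omega
          have hmono : mfun T (i, j' + 1) ≤ mfun T (i, j) :=
            row_mono hall hb1 hcell' (by omega)
          have hle : mfun T (i, j) ≤ a₀ := mfun_le haj
          omega
        · exact heq2.symm
        · exfalso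
          have hb1 : (i, j + 1) ∈ sCells lam mu :=
            row_interval hcell' hc₀' (by omega) (by omega)
          have h5 : a₀ ≤ mfun T (i, j + 1) := le_min_right hT hcell' hb1 haj
          have hmono : mfun T (i, j + 1) ≤ mfun T (i, j') :=
            row_mono hall hb1 hc₀' (by omega)
          omega
      · exact hT.1.rowOnce a hpar i j j' haj haj''
    · rw [hB _ e1] at haj
      rw [hB _ e2] at haj'
      exact hT.1.rowOnce a hpar i j j' haj haj'
  · -- diagonal
    intro i a ha
    by_cases h : ((i : ℕ), i) = (i₀, j₀)
    · rw [h, hA] at ha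
      rcases Finset.mem_insert.1 ha with heq | ha'
      · rw [heq]
        simp only [Prod.mk.injEq] at h
        exact hdg' (by omega)
      · simp only [Prod.mk.injEq] at h
        obtain ⟨h1, h2⟩ := h
        have hjj : j₀ = i₀ := by omega
        exact hT.2 i₀ a (by rwa [hjj] at ha')
    · rw [hB _ h] at ha
      exact hT.2 _ _ ha

end AuxGP
namespace AuxGP

/-- The greedy (maximal) singleton filling, built from right/bottom. -/
def Mg (lam mu : List ℕ) (n : ℕ) (c : ℕ × ℕ) : ℕ :=
  let mr : Option ℕ :=
    if h : (c.1, c.2 + 1) ∈ sCells lam mu then some (Mg lam mu n (c.1, c.2 + 1)) else none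
  let mb : Option ℕ :=
    if h : (c.1 + 1, c.2) ∈ sCells lam mu then some (Mg lam mu n (c.1 + 1, c.2)) else none
  (((Finset.Icc 1 (2 * n)).filter (fun a =>
    (c.1 = c.2 → a % 2 = 0) ∧
    (∀ v ∈ mr, a ≤ v ∧ (a = v → a % 2 = 0)) ∧
    (∀ v ∈ mb, a ≤ v ∧ (a = v → a % 2 = 1)))).max).getD 0
termination_by (2 * lam.length + lam.foldr max 0 + 1) - (c.1 + c.2)
decreasing_by
  all_goals
    first
      | (have h2 : c.1 + (c.2 + 1) ≤ 2 * lam.length + lam.foldr max 0 := cell_sum_bound h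
         omega)
      | (have h2 : c.1 + 1 + c.2 ≤ 2 * lam.length + lam.foldr max 0 := cell_sum_bound h
         omega)

lemma Mg_eq (lam mu : List ℕ) (n : ℕ) (c : ℕ × ℕ) :
    Mg lam mu n c = ((Lfin lam mu n (Mg lam mu n) c).max).getD 0 := by
  rw [Mg]
  have : ∀ a : ℕ,
      ((c.1 = c.2 → a % 2 = 0) ∧
        (∀ v ∈ (if h : (c.1, c.2 + 1) ∈ sCells lam mu then
            some (Mg lam mu n (c.1, c.2 + 1)) else none),
          a ≤ v ∧ (a = v → a % 2 = 0)) ∧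
        (∀ v ∈ (if h : (c.1 + 1, c.2) ∈ sCells lam mu then
            some (Mg lam mu n (c.1 + 1, c.2)) else none),
          a ≤ v ∧ (a = v → a % 2 = 1)))
      ↔ allowedL lam mu (Mg lam mu n) c a := by
    intro a
    unfold allowedL
    by_cases hr : (c.1, c.2 + 1) ∈ sCells lam mu <;>
      by_cases hb : (c.1 + 1, c.2) ∈ sCells lam mu <;>
        simp [hr, hb]
  simp only [Lfin]
  congr 2
  apply Finset.filter_congr
  intro a _
  simpa using this a

section Greedy

variable {lam mu : List ℕ} {n : ℕ} {T₀ : ℕ × ℕ → Finset ℕ}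

lemma greedy_dom (hT₀ : IsSSVTP lam mu n T₀) :
    ∀ k : ℕ, ∀ c : ℕ × ℕ, c ∈ sCells lam mu →
      (2 * lam.length + lam.foldr max 0 + 1) - (c.1 + c.2) ≤ k →
      mfun T₀ c ≤ Mg lam mu n c ∧ Mg lam mu n c ∈ Lfin lam mu n (Mg lam mu n) c := by
  intro k
  induction k with
  | zero =>
    intro c hc hk
    exfalso
    have := cell_sum_bound hc
    omega
  | succ k ih =>
    intro c hc hk
    have hbnd := cell_sum_bound hc
    have hrange : 1 ≤ mfun T₀ c ∧ mfun T₀ c ≤ 2 * n :=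
      hT₀.1.inRange _ _ (mfun_mem (hT₀.1.cellNonempty _ hc))
    have hallc := min_allowed hT₀ c hc
    have hm₀ : mfun T₀ c ∈ Lfin lam mu n (Mg lam mu n) c := by
      rw [mem_Lfin_iff]
      refine ⟨hrange, hallc.1, ?_, ?_⟩
      · intro hr
        have hrbnd := cell_sum_bound hr
        obtain ⟨hle1, -⟩ := ih (c.1, c.2 + 1) hr (by simp only; omega)
        have h1 := hallc.2.1 hr
        refine ⟨le_trans h1.1 hle1, ?_⟩
        intro heq
        have h2 : mfun T₀ c = mfun T₀ (c.1, c.2 + 1) := by omega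
        exact h1.2 h2
      · intro hb
        have hbbnd := cell_sum_bound hb
        obtain ⟨hle1, -⟩ := ih (c.1 + 1, c.2) hb (by simp only; omega)
        have h1 := hallc.2.2 hb
        refine ⟨le_trans h1.1 hle1, ?_⟩
        intro heq
        have h2 : mfun T₀ c = mfun T₀ (c.1 + 1, c.2) := by omega
        exact h1.2 h2
    have hLne : (Lfin lam mu n (Mg lam mu n) c).Nonempty := ⟨_, hm₀⟩
    obtain ⟨mx, hmx⟩ := Finset.max_of_nonempty hLne
    have hMg : Mg lam mu n c = mx := by rw [Mg_eq, hmx]; rfl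
    constructor
    · rw [hMg]
      exact Finset.le_max_of_eq hm₀ hmx
    · rw [hMg]
      exact Finset.mem_of_max hmx

lemma greedy_spec (hT₀ : IsSSVTP lam mu n T₀) {c : ℕ × ℕ} (hc : c ∈ sCells lam mu) :
    mfun T₀ c ≤ Mg lam mu n c ∧ Mg lam mu n c ∈ Lfin lam mu n (Mg lam mu n) c :=
  greedy_dom hT₀ (2 * lam.length + lam.foldr max 0 + 1) c hc (by omega)

/-- a singleton filling from a pointwise-allowed function is a valid tableau -/
lemma singleton_valid (hl : IsStrictPartition lam) (hm : IsStrictPartition mu)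
    {m : ℕ × ℕ → ℕ} (h : ∀ c ∈ sCells lam mu, m c ∈ Lfin lam mu n m c)
    {T' : ℕ × ℕ → Finset ℕ}
    (hA : ∀ c ∈ sCells lam mu, T' c = {m c})
    (hB : ∀ c ∉ sCells lam mu, T' c = (∅ : Finset ℕ)) :
    IsSSVTP lam mu n T' := by
  have hall : ∀ c ∈ sCells lam mu, allowedL lam mu m c (m c) := by
    intro c hc
    exact (mem_Lfin_iff.1 (h c hc)).2
  have hmemiff : ∀ c, ∀ a, a ∈ T' c → c ∈ sCells lam mu ∧ a = m c := by
    intro c a ha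
    by_cases hc : c ∈ sCells lam mu
    · rw [hA c hc] at ha
      exact ⟨hc, Finset.mem_singleton.1 ha⟩
    · rw [hB c hc] at ha
      simp at ha
  refine ⟨⟨?_, ?_, ?_, ?_, ?_, ?_, ?_⟩, ?_⟩
  · exact hB
  · intro c hc
    rw [hA c hc]
    exact ⟨m c, Finset.mem_singleton_self _⟩
  · intro c a ha
    obtain ⟨hc, rfl⟩ := hmemiff c a ha
    exact (mem_Lfin_iff.1 (h c hc)).1
  · intro i j h1 h2 a ha b hb
    obtain ⟨-, rfl⟩ := hmemiff _ _ ha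
    obtain ⟨-, rfl⟩ := hmemiff _ _ hb
    exact ((hall _ h1).2.1 h2).1
  · intro i j h1 h2 a ha b hb
    obtain ⟨-, rfl⟩ := hmemiff _ _ ha
    obtain ⟨-, rfl⟩ := hmemiff _ _ hb
    exact ((hall _ h1).2.2 h2).1
  · intro a hpar i i' j hai hai'
    obtain ⟨hc1, he1⟩ := hmemiff _ _ hai
    obtain ⟨hc2, he2⟩ := hmemiff _ _ hai'
    rcases lt_trichotomy i i' with hlt | heq | hgt
    · exfalso
      have := col_eq_odd hl hm hall hc1 hc2 hlt (by omega)
      omega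
    · exact heq
    · exfalso
      have := col_eq_odd hl hm hall hc2 hc1 hgt (by omega)
      omega
  · intro a hpar i j j' haj haj'
    obtain ⟨hc1, he1⟩ := hmemiff _ _ haj
    obtain ⟨hc2, he2⟩ := hmemiff _ _ haj'
    rcases lt_trichotomy j j' with hlt | heq | hgt
    · exfalso
      have := row_eq_even hall hc1 hc2 hlt (by omega)
      omega
    · exact heq
    · exfalso
      have := row_eq_even hall hc2 hc1 hgt (by omega)
      omega
  · intro i a ha
    by_cases hc : (i, i) ∈ sCells lam mu
    · obtain ⟨-, rfl⟩ := hmemiff _ _ ha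
      exact (hall _ hc).1 rfl
    · rw [hB _ hc] at ha
      simp at ha

/-- the canonical maximal tableau -/
def TMg (lam mu : List ℕ) (n : ℕ) : ℕ × ℕ → Finset ℕ :=
  fun c => if c ∈ sCells lam mu then {Mg lam mu n c} else ∅

lemma TMg_valid (hl : IsStrictPartition lam) (hm : IsStrictPartition mu)
    (hT₀ : IsSSVTP lam mu n T₀) : IsSSVTP lam mu n (TMg lam mu n) := by
  refine singleton_valid hl hm (fun c hc => (greedy_spec hT₀ hc).2) ?_ ?_
  · intro c hc; simp [TMg, hc]
  · intro c hc; simp [TMg, hc]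

lemma mfun_TMg {c : ℕ × ℕ} (hc : c ∈ sCells lam mu) :
    mfun (TMg lam mu n) c = Mg lam mu n c := by
  rw [mfun]
  have : TMg lam mu n c = {Mg lam mu n c} := by simp [TMg, hc]
  rw [this]
  exact getD_min_eq (Finset.mem_singleton_self _) (by simp)

lemma Mg_saturated (c : ℕ × ℕ) : Afin lam mu n (Mg lam mu n) c = ∅ := by
  rw [Finset.eq_empty_iff_forall_notMem]
  intro a ha
  rw [mem_Afin_iff] at ha
  obtain ⟨hrange, hallow, hgt⟩ := ha
  have haL : a ∈ Lfin lam mu n (Mg lam mu n) c := mem_Lfin_iff.2 ⟨hrange, hallow⟩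
  obtain ⟨mx, hmx⟩ := Finset.max_of_mem haL
  have : Mg lam mu n c = mx := by rw [Mg_eq, hmx]; rfl
  have := Finset.le_max_of_eq haL hmx
  omega

/-- a tableau with saturated minimum filling has minimum `Mg` everywhere -/
lemma sat_min_eq (hT : IsSSVTP lam mu n T₀)
    (hsat : ∀ c ∈ sCells lam mu, Afin lam mu n (mfun T₀) c = ∅) :
    ∀ k : ℕ, ∀ c : ℕ × ℕ, c ∈ sCells lam mu →
      (2 * lam.length + lam.foldr max 0 + 1) - (c.1 + c.2) ≤ k →
      mfun T₀ c = Mg lam mu n c := by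
  intro k
  induction k with
  | zero =>
    intro c hc hk
    exfalso
    have := cell_sum_bound hc
    omega
  | succ k ih =>
    intro c hc hk
    have hbnd := cell_sum_bound hc
    have hrange : 1 ≤ mfun T₀ c ∧ mfun T₀ c ≤ 2 * n :=
      hT.1.inRange _ _ (mfun_mem (hT.1.cellNonempty _ hc))
    have hallc := min_allowed hT c hc
    have hm₀ : mfun T₀ c ∈ Lfin lam mu n (Mg lam mu n) c := by
      rw [mem_Lfin_iff]
      refine ⟨hrange, hallc.1, ?_, ?_⟩
      · intro hr
        have hrbnd := cell_sum_bound hr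
        have hIH := ih (c.1, c.2 + 1) hr (by simp only; omega)
        have h1 := hallc.2.1 hr
        rw [← hIH]
        exact h1
      · intro hb
        have hbbnd := cell_sum_bound hb
        have hIH := ih (c.1 + 1, c.2) hb (by simp only; omega)
        have h1 := hallc.2.2 hb
        rw [← hIH]
        exact h1
    have hLne : (Lfin lam mu n (Mg lam mu n) c).Nonempty := ⟨_, hm₀⟩
    obtain ⟨mx, hmx⟩ := Finset.max_of_nonempty hLne
    have hMg : Mg lam mu n c = mx := by rw [Mg_eq, hmx]; rfl
    have hle : mfun T₀ c ≤ Mg lam mu n c := by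
      rw [hMg]; exact Finset.le_max_of_eq hm₀ hmx
    rcases Nat.eq_or_lt_of_le hle with heq | hlt
    · exact heq
    · exfalso
      have hMgL : Mg lam mu n c ∈ Lfin lam mu n (Mg lam mu n) c := by
        rw [hMg]; exact Finset.mem_of_max hmx
      rw [mem_Lfin_iff] at hMgL
      have hmemA : Mg lam mu n c ∈ Afin lam mu n (mfun T₀) c := by
        rw [mem_Afin_iff]
        refine ⟨hMgL.1, ?_, hlt⟩
        obtain ⟨hd, hr, hb⟩ := hMgL.2
        refine ⟨hd, ?_, ?_⟩
        · intro hrc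
          have hrbnd := cell_sum_bound hrc
          rw [ih (c.1, c.2 + 1) hrc (by simp only; omega)]
          exact hr hrc
        · intro hbc
          have hbbnd := cell_sum_bound hbc
          rw [ih (c.1 + 1, c.2) hbc (by simp only; omega)]
          exact hb hbc
      rw [hsat c hc] at hmemA
      simp at hmemA

/-- uniqueness: a saturated tableau is the canonical maximal one -/
lemma sat_eq_TMg (hT : IsSSVTP lam mu n T₀)
    (hsat : ∀ c ∈ sCells lam mu, Afin lam mu n (mfun T₀) c = ∅) :
    T₀ = TMg lam mu n := by
  funext c
  by_cases hc : c ∈ sCells lam mu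
  · have hmin : mfun T₀ c = Mg lam mu n c :=
      sat_min_eq hT hsat (2 * lam.length + lam.foldr max 0 + 1) c hc (by omega)
    have hsingle : T₀ c = {mfun T₀ c} := by
      apply Finset.eq_singleton_iff_unique_mem.2
      refine ⟨mfun_mem (hT.1.cellNonempty _ hc), ?_⟩
      intro a ha
      by_contra hne
      have hlt : mfun T₀ c < a := lt_of_le_of_ne (mfun_le ha) (Ne.symm hne)
      have := extra_mem_Afin hT hc ha hlt
      rw [hsat c hc] at this
      simp at this
    rw [hsingle, hmin]
    simp [TMg, hc]
  · rw [hT.1.support c hc]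
    simp [TMg, hc]

end Greedy

end AuxGP
namespace AuxGP

section Toggle

variable {lam mu : List ℕ} {n : ℕ} {T : ℕ × ℕ → Finset ℕ}

/-- toggle letter `a₀` at cell `c₀` -/
def tog (T : ℕ × ℕ → Finset ℕ) (c₀ : ℕ × ℕ) (a₀ : ℕ) : ℕ × ℕ → Finset ℕ :=
  fun c => if c = c₀ then
    (if a₀ ∈ T c₀ then (T c₀).erase a₀ else insert a₀ (T c₀)) else T c

lemma tog_apply_ne {c₀ : ℕ × ℕ} {a₀ : ℕ} {c : ℕ × ℕ} (h : c ≠ c₀) :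
    tog T c₀ a₀ c = T c := by simp [tog, h]

lemma tog_valid (hl : IsStrictPartition lam) (hm : IsStrictPartition mu)
    (hT : IsSSVTP lam mu n T) {c₀ : ℕ × ℕ} (hc₀ : c₀ ∈ sCells lam mu)
    {a₀ : ℕ} (ha₀ : a₀ ∈ Afin lam mu n (mfun T) c₀) :
    IsSSVTP lam mu n (tog T c₀ a₀) := by
  have hgt : mfun T c₀ < a₀ := (mem_Afin_iff.1 ha₀).2.2
  by_cases hmem : a₀ ∈ T c₀
  · have heq : tog T c₀ a₀ = (fun c => if c = c₀ then (T c₀).erase a₀ else T c) := by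
      funext c
      by_cases h : c = c₀ <;> simp [tog, h, hmem]
    rw [heq]
    exact remove_valid hT hc₀ hgt
  · exact add_valid hl hm hT hc₀ ha₀ (by simp [tog, hmem]) (fun c h => by simp [tog, h])

lemma mfun_tog (hT : IsSSVTP lam mu n T) {c₀ : ℕ × ℕ} (hc₀ : c₀ ∈ sCells lam mu)
    {a₀ : ℕ} (hgt : mfun T c₀ < a₀) :
    mfun (tog T c₀ a₀) = mfun T := by
  funext c
  by_cases h : c = c₀
  · subst h
    have hmm : mfun T c ∈ T c := mfun_mem (hT.1.cellNonempty _ hc₀)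
    show ((tog T c a₀ c).min).getD 0 = mfun T c
    by_cases hmem : a₀ ∈ T c
    · have : tog T c a₀ c = (T c).erase a₀ := by simp [tog, hmem]
      rw [this]
      refine getD_min_eq (Finset.mem_erase.2 ⟨by omega, hmm⟩) ?_
      intro x hx
      exact mfun_le (Finset.mem_of_mem_erase hx)
    · have : tog T c a₀ c = insert a₀ (T c) := by simp [tog, hmem]
      rw [this]
      refine getD_min_eq (Finset.mem_insert_of_mem hmm) ?_
      intro x hx
      rcases Finset.mem_insert.1 hx with rfl | hx'
      · omega
      · exact mfun_le hx'
  · rw [mfun, tog_apply_ne h, ← mfun]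

lemma tog_tog {c₀ : ℕ × ℕ} {a₀ : ℕ} :
    tog (tog T c₀ a₀) c₀ a₀ = T := by
  funext c
  by_cases h : c = c₀
  · subst h
    by_cases hmem : a₀ ∈ T c
    · have h1 : tog T c a₀ c = (T c).erase a₀ := by simp [tog, hmem]
      have h2 : a₀ ∉ tog T c a₀ c := by rw [h1]; simp
      have h3 : tog (tog T c a₀) c a₀ c = insert a₀ (tog T c a₀ c) := by
        simp only [tog, if_pos rfl] at h2 ⊢
        rw [if_neg h2]
        simp
      rw [h3, h1, Finset.insert_erase hmem]
    · have h1 : tog T c a₀ c = insert a₀ (T c) := by simp [tog, hmem]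
      have h2 : a₀ ∈ tog T c a₀ c := by rw [h1]; simp
      have h3 : tog (tog T c a₀) c a₀ c = (tog T c a₀ c).erase a₀ := by
        simp only [tog, if_pos rfl] at h2 ⊢
        rw [if_pos h2]
        simp
      rw [h3, h1, Finset.erase_insert hmem]
  · rw [tog_apply_ne h, tog_apply_ne h]

lemma tabSize_tog_add {c₀ : ℕ × ℕ} (hc₀ : c₀ ∈ sCells lam mu)
    {a₀ : ℕ} (hmem : a₀ ∉ T c₀) :
    tabSize lam mu (tog T c₀ a₀) = tabSize lam mu T + 1 := by
  unfold tabSize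
  rw [← Finset.add_sum_erase _ _ hc₀, ← Finset.add_sum_erase _ (fun c => (T c).card) hc₀]
  have h1 : tog T c₀ a₀ c₀ = insert a₀ (T c₀) := by simp [tog, hmem]
  have h2 : ∀ c ∈ (sCells lam mu).erase c₀, (tog T c₀ a₀ c).card = (T c).card := by
    intro c hc
    rw [tog_apply_ne (Finset.mem_erase.1 hc).1]
  rw [Finset.sum_congr rfl h2, h1, Finset.card_insert_of_notMem hmem]
  ring

lemma tabSize_tog_del {c₀ : ℕ × ℕ} (hc₀ : c₀ ∈ sCells lam mu)
    {a₀ : ℕ} (hmem : a₀ ∈ T c₀) :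
    tabSize lam mu T = tabSize lam mu (tog T c₀ a₀) + 1 := by
  unfold tabSize
  rw [← Finset.add_sum_erase _ _ hc₀, ← Finset.add_sum_erase _ (fun c => ((tog T c₀ a₀) c).card) hc₀]
  have h1 : tog T c₀ a₀ c₀ = (T c₀).erase a₀ := by simp [tog, hmem]
  have h2 : ∀ c ∈ (sCells lam mu).erase c₀, (tog T c₀ a₀ c).card = (T c).card := by
    intro c hc
    rw [tog_apply_ne (Finset.mem_erase.1 hc).1]
  rw [Finset.sum_congr rfl h2, h1, Finset.card_erase_of_mem hmem]
  have : 1 ≤ (T c₀).card := Finset.card_pos.2 ⟨a₀, hmem⟩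
  omega

end Toggle

section Sums

variable {lam mu : List ℕ} {n : ℕ} {T : ℕ × ℕ → Finset ℕ}

lemma weight_sum (hT : IsSSVTP lam mu n T) :
    ∑ k ∈ Finset.Icc 1 n, tabWeight lam mu T k = tabSize lam mu T := by
  unfold tabWeight tabSize
  rw [Finset.sum_comm]
  apply Finset.sum_congr rfl
  intro c hc
  rw [eq_comm]
  apply Finset.card_eq_sum_card_fiberwise
  intro a ha
  have := hT.1.inRange c a ha
  simp only [Finset.mem_coe, Finset.mem_Icc]
  omega

lemma tabSize_lower (hT : IsSSVTP lam mu n T) :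
    (sCells lam mu).card ≤ tabSize lam mu T := by
  unfold tabSize
  calc (sCells lam mu).card = ∑ _c ∈ sCells lam mu, 1 := by simp
  _ ≤ ∑ c ∈ sCells lam mu, (T c).card := by
      apply Finset.sum_le_sum
      intro c hc
      exact Finset.card_pos.2 (hT.1.cellNonempty _ hc)

lemma tabSize_lower2 (hT : IsSSVTP lam mu n T) {c₀ : ℕ × ℕ} (hc₀ : c₀ ∈ sCells lam mu)
    (h2 : 2 ≤ (T c₀).card) :
    (sCells lam mu).card + 1 ≤ tabSize lam mu T := by
  unfold tabSize
  rw [← Finset.add_sum_erase _ _ hc₀]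
  have h3 : ((sCells lam mu).erase c₀).card ≤ ∑ c ∈ (sCells lam mu).erase c₀, (T c).card := by
    calc ((sCells lam mu).erase c₀).card = ∑ _c ∈ (sCells lam mu).erase c₀, 1 := by simp
    _ ≤ _ := by
        apply Finset.sum_le_sum
        intro c hc
        exact Finset.card_pos.2 (hT.1.cellNonempty _ (Finset.mem_of_mem_erase hc))
  have h4 := Finset.card_erase_of_mem hc₀
  have h5 : 1 ≤ (sCells lam mu).card := Finset.card_pos.2 ⟨c₀, hc₀⟩
  omega

lemma finite_tabs (lam mu : List ℕ) (n : ℕ) :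
    {T : ℕ × ℕ → Finset ℕ | IsSSVTP lam mu n T}.Finite := by
  classical
  let F : ({ x // x ∈ sCells lam mu } → Finset { a // a ∈ Finset.Icc 1 (2 * n) }) →
      (ℕ × ℕ → Finset ℕ) :=
    fun f c => if h : c ∈ sCells lam mu then
      (f ⟨c, h⟩).map (Function.Embedding.subtype _) else ∅
  apply Set.Finite.subset (Set.finite_range F)
  intro T hT
  refine ⟨fun c => (T c.1).subtype _, ?_⟩
  funext c
  show (if h : c ∈ sCells lam mu then
      (((T c).subtype (· ∈ Finset.Icc 1 (2 * n))).map (Function.Embedding.subtype _)) else ∅) = T c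
  by_cases h : c ∈ sCells lam mu
  · rw [dif_pos h, Finset.subtype_map]
    apply Finset.filter_eq_self.2
    intro a ha
    have := hT.1.inRange c a ha
    rw [Finset.mem_Icc]
    omega
  · rw [dif_neg h, eq_comm]
    exact hT.1.support c h

end Sums

section Sel

variable (lam mu : List ℕ) (n : ℕ)

/-- canonical choice of a non-saturated cell -/
def csel (m : ℕ × ℕ → ℕ) : ℕ × ℕ :=
  if h : ∃ c, c ∈ sCells lam mu ∧ (Afin lam mu n m c).Nonempty then h.choose else (0, 0)

/-- canonical choice of a letter to toggle there -/
def asel (m : ℕ × ℕ → ℕ) : ℕ :=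
  ((Afin lam mu n m (csel lam mu n m)).min).getD 0

variable {lam mu n}

lemma csel_spec {m : ℕ × ℕ → ℕ}
    (h : ∃ c, c ∈ sCells lam mu ∧ (Afin lam mu n m c).Nonempty) :
    csel lam mu n m ∈ sCells lam mu ∧ (Afin lam mu n m (csel lam mu n m)).Nonempty := by
  rw [csel, dif_pos h]
  exact h.choose_spec

lemma asel_spec {m : ℕ × ℕ → ℕ}
    (h : ∃ c, c ∈ sCells lam mu ∧ (Afin lam mu n m c).Nonempty) :
    asel lam mu n m ∈ Afin lam mu n m (csel lam mu n m) := by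
  obtain ⟨-, hne⟩ := csel_spec h
  obtain ⟨b, hb⟩ := Finset.min_of_nonempty hne
  have : asel lam mu n m = b := by rw [asel, hb]; rfl
  rw [this]
  exact Finset.mem_of_min hb

end Sel

end AuxGP
namespace AuxGP

lemma main_sum (lam mu : List ℕ) (n : ℕ)
    (hl : IsStrictPartition lam) (hm : IsStrictPartition mu)
    (hsub : SubPartition mu lam) {T₀ : ℕ × ℕ → Finset ℕ} (hT₀ : IsSSVTP lam mu n T₀)
    (β : ℚ) (hβ : β ≠ 0) :
    ∑ T ∈ (finite_tabs lam mu n).toFinset,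
      (-β⁻¹) ^ (tabSize lam mu T - (lam.sum - mu.sum)) * β ^ tabSize lam mu T =
      β ^ (lam.sum - mu.sum) := by
  classical
  set N := lam.sum - mu.sum with hN
  have hNN : (sCells lam mu).card = N := card_sCells lam mu hsub
  set S := (finite_tabs lam mu n).toFinset with hS
  have hmemS : ∀ T, T ∈ S ↔ IsSSVTP lam mu n T := by
    intro T
    rw [hS, Set.Finite.mem_toFinset]
    rfl
  set f : (ℕ × ℕ → Finset ℕ) → ℚ :=
    fun T => (-β⁻¹) ^ (tabSize lam mu T - N) * β ^ tabSize lam mu T with hf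
  set Tstar := TMg lam mu n with hTstar
  have hTstarV : IsSSVTP lam mu n Tstar := TMg_valid hl hm hT₀
  have hTstarS : Tstar ∈ S := (hmemS _).2 hTstarV
  have hsize : tabSize lam mu Tstar = N := by
    rw [← hNN]
    unfold tabSize
    rw [Finset.card_eq_sum_ones]
    apply Finset.sum_congr rfl
    intro c hc
    have : Tstar c = {Mg lam mu n c} := by simp [hTstar, TMg, hc]
    rw [this, Finset.card_singleton]
  have hfstar : f Tstar = β ^ N := by
    rw [hf]
    simp only [hsize, Nat.sub_self, pow_zero, one_mul]
  have halg : ∀ s : ℕ, N ≤ s →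
      (-β⁻¹) ^ (s + 1 - N) * β ^ (s + 1) + (-β⁻¹) ^ (s - N) * β ^ s = 0 := by
    intro s hs
    have h1 : s + 1 - N = (s - N) + 1 := by omega
    rw [h1, pow_succ, pow_succ]
    have h2 : β⁻¹ * β = 1 := inv_mul_cancel₀ hβ
    calc (-β⁻¹) ^ (s - N) * -β⁻¹ * (β ^ s * β) + (-β⁻¹) ^ (s - N) * β ^ s
        = -(β⁻¹ * β) * ((-β⁻¹) ^ (s - N) * β ^ s) + (-β⁻¹) ^ (s - N) * β ^ s := by ring
      _ = 0 := by rw [h2]; ring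
  rw [← Finset.add_sum_erase _ f hTstarS, hfstar]
  have hzero : ∑ T ∈ S.erase Tstar, f T = 0 := by
    apply Finset.sum_involution
      (g := fun T _ => tog T (csel lam mu n (mfun T)) (asel lam mu n (mfun T)))
    case hg₁ =>
      intro T hT'
      have hTv : IsSSVTP lam mu n T := (hmemS _).1 (Finset.mem_of_mem_erase hT')
      have hex : ∃ c, c ∈ sCells lam mu ∧ (Afin lam mu n (mfun T) c).Nonempty := by
        by_contra hno
        push_neg at hno
        have hsat : ∀ c ∈ sCells lam mu, Afin lam mu n (mfun T) c = ∅ := fun c hc =>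
          hno c hc
        exact (Finset.mem_erase.1 hT').1 (sat_eq_TMg hTv hsat)
      obtain ⟨hc₀, -⟩ := csel_spec hex
      have ha₀ := asel_spec hex
      have hgt : mfun T (csel lam mu n (mfun T)) < asel lam mu n (mfun T) :=
        (mem_Afin_iff.1 ha₀).2.2
      have htogV : IsSSVTP lam mu n (tog T (csel lam mu n (mfun T)) (asel lam mu n (mfun T))) :=
        tog_valid hl hm hTv hc₀ ha₀
      by_cases hmem : asel lam mu n (mfun T) ∈ T (csel lam mu n (mfun T))
      · have hdel := tabSize_tog_del (T := T) hc₀ hmem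
        have hge : N ≤ tabSize lam mu (tog T (csel lam mu n (mfun T)) (asel lam mu n (mfun T))) := by
          rw [← hNN]; exact tabSize_lower htogV
        rw [hf]
        simp only
        rw [hdel]
        exact halg _ hge
      · have hadd := tabSize_tog_add (T := T) hc₀ hmem
        have hge : N ≤ tabSize lam mu T := by
          rw [← hNN]; exact tabSize_lower hTv
        rw [hf]
        simp only
        rw [hadd, add_comm]
        exact halg _ hge
    case hg₃ =>
      intro T hT' _
      have hTv : IsSSVTP lam mu n T := (hmemS _).1 (Finset.mem_of_mem_erase hT')
      intro heq
      have := congrFun heq (csel lam mu n (mfun T))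
      by_cases hmem : asel lam mu n (mfun T) ∈ T (csel lam mu n (mfun T))
      · have h1 : tog T (csel lam mu n (mfun T)) (asel lam mu n (mfun T))
            (csel lam mu n (mfun T)) =
            (T (csel lam mu n (mfun T))).erase (asel lam mu n (mfun T)) := by
          simp [tog, hmem]
        rw [h1] at this
        exact (Finset.erase_eq_self.1 this) hmem
      · have h1 : tog T (csel lam mu n (mfun T)) (asel lam mu n (mfun T))
            (csel lam mu n (mfun T)) =
            insert (asel lam mu n (mfun T)) (T (csel lam mu n (mfun T))) := by
          simp [tog, hmem]
        rw [h1] at this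
        exact hmem (Finset.insert_eq_self.1 this)
    case g_mem =>
      intro T hT'
      have hTv : IsSSVTP lam mu n T := (hmemS _).1 (Finset.mem_of_mem_erase hT')
      have hex : ∃ c, c ∈ sCells lam mu ∧ (Afin lam mu n (mfun T) c).Nonempty := by
        by_contra hno
        push_neg at hno
        have hsat : ∀ c ∈ sCells lam mu, Afin lam mu n (mfun T) c = ∅ := fun c hc =>
          hno c hc
        exact (Finset.mem_erase.1 hT').1 (sat_eq_TMg hTv hsat)
      obtain ⟨hc₀, hAne⟩ := csel_spec hex
      have ha₀ := asel_spec hex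
      have hgt : mfun T (csel lam mu n (mfun T)) < asel lam mu n (mfun T) :=
        (mem_Afin_iff.1 ha₀).2.2
      have htogV := tog_valid hl hm hTv hc₀ ha₀
      rw [Finset.mem_erase]
      refine ⟨?_, (hmemS _).2 htogV⟩
      intro heq
      have hmt : mfun (tog T (csel lam mu n (mfun T)) (asel lam mu n (mfun T))) = mfun T :=
        mfun_tog hTv hc₀ hgt
      have hmts : mfun T = mfun Tstar := by rw [← hmt, heq]
      have h1 : ∀ c ∈ sCells lam mu, mfun T c = Mg lam mu n c := by
        intro c hc
        rw [hmts, hTstar, mfun_TMg hc]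
      have h2 : Afin lam mu n (mfun T) (csel lam mu n (mfun T)) = ∅ := by
        rw [Afin_congr hc₀ h1]
        exact Mg_saturated _
      rw [h2] at hAne
      simp at hAne
    case hg₄ =>
      intro T hT'
      have hTv : IsSSVTP lam mu n T := (hmemS _).1 (Finset.mem_of_mem_erase hT')
      have hex : ∃ c, c ∈ sCells lam mu ∧ (Afin lam mu n (mfun T) c).Nonempty := by
        by_contra hno
        push_neg at hno
        have hsat : ∀ c ∈ sCells lam mu, Afin lam mu n (mfun T) c = ∅ := fun c hc =>
          hno c hc
        exact (Finset.mem_erase.1 hT').1 (sat_eq_TMg hTv hsat)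
      obtain ⟨hc₀, -⟩ := csel_spec hex
      have ha₀ := asel_spec hex
      have hgt : mfun T (csel lam mu n (mfun T)) < asel lam mu n (mfun T) :=
        (mem_Afin_iff.1 ha₀).2.2
      have hmt : mfun (tog T (csel lam mu n (mfun T)) (asel lam mu n (mfun T))) = mfun T :=
        mfun_tog hTv hc₀ hgt
      simp only [hmt]
      exact tog_tog
  rw [hzero, add_zero]

end AuxGP
/-- `GP_{λ/μ}(β,…,β | -β⁻¹) = β^{|λ/μ|}`. -/
theorem gp_skew_special_value (lam mu : List ℕ) (n : ℕ)
    (hl : IsStrictPartition lam) (hm : IsStrictPartition mu)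
    (hsub : SubPartition mu lam)
    (hne : {T : ℕ × ℕ → Finset ℕ | IsSSVTP lam mu n T}.Nonempty)
    (β : ℚ) (hβ : β ≠ 0) :
    GPspec lam mu n (fun _ => β) (-β⁻¹) = β ^ (lam.sum - mu.sum) := by
  classical
  obtain ⟨T₀, hT₀⟩ := hne
  have hfin := AuxGP.finite_tabs lam mu n
  unfold GPspec
  have hf : ({T : ℕ × ℕ → Finset ℕ | IsSSVTP lam mu n T} ∩
      Function.support (fun T => (-β⁻¹) ^ (tabSize lam mu T - (lam.sum - mu.sum)) *
        ∏ k ∈ Finset.Icc 1 n, (fun _ : ℕ => β) k ^ tabWeight lam mu T k)).Finite :=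
    hfin.subset Set.inter_subset_left
  rw [finsum_mem_eq_sum _ hf]
  have hsub2 : hf.toFinset ⊆ hfin.toFinset := by
    intro x hx
    rw [Set.Finite.mem_toFinset] at hx ⊢
    exact hx.1
  have hvanish : ∀ x ∈ hfin.toFinset, x ∉ hf.toFinset →
      (-β⁻¹) ^ (tabSize lam mu x - (lam.sum - mu.sum)) *
        ∏ k ∈ Finset.Icc 1 n, (fun _ : ℕ => β) k ^ tabWeight lam mu x k = 0 := by
    intro x hx hx'
    by_contra h0
    apply hx'
    rw [Set.Finite.mem_toFinset]
    refine ⟨by rwa [Set.Finite.mem_toFinset] at hx, h0⟩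
  rw [Finset.sum_subset hsub2 hvanish]
  have hterm : ∀ T ∈ hfin.toFinset,
      (-β⁻¹) ^ (tabSize lam mu T - (lam.sum - mu.sum)) *
        ∏ k ∈ Finset.Icc 1 n, (fun _ : ℕ => β) k ^ tabWeight lam mu T k =
      (-β⁻¹) ^ (tabSize lam mu T - (lam.sum - mu.sum)) * β ^ tabSize lam mu T := by
    intro T hT
    have hTv : IsSSVTP lam mu n T := by rwa [Set.Finite.mem_toFinset] at hT
    simp only
    rw [Finset.prod_pow_eq_pow_sum, AuxGP.weight_sum hTv]
  rw [Finset.sum_congr rfl hterm]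
  exact AuxGP.main_sum lam mu n hl hm hsub hT₀ β hβ

end AuxGP
end

section
/- For strict partitions ∅ ≠ μ ⊆ λ, the total number Σ_{ν} |SSVT_P(λ/ν,n)|, summed over strict partitions ν ⊆ μ with μ/ν ⊆ Rem(μ), is even. -/
open Finset

/-! ### Auxiliary development -/

namespace SSVTAux

open Finset

/-- getD of a member is at most the foldr-max. -/
lemma getD_le_foldr_max (l : List ℕ) (k : ℕ) : l.getD k 0 ≤ l.foldr max 0 := by
  induction l generalizing k with
  | nil => simp [List.getD]
  | cons a t ih =>
    cases k with
    | zero => simp [List.getD]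
    | succ k =>
      simpa [List.getD] using le_trans (by simpa [List.getD] using ih k) (le_max_right _ _)

/-- Entries of a strict partition are positive. -/
lemma getD_pos_of_strict {l : List ℕ} (hl : IsStrictPartition l) {k : ℕ}
    (hk : k < l.length) : 1 ≤ l.getD k 0 := by
  have : l.getD k 0 = l[k] := by
    rw [List.getD_eq_getElem?_getD, List.getElem?_eq_getElem hk]; rfl
  rw [this]
  exact hl.2 _ (List.getElem_mem hk)

lemma chain'_gt_getD {l : List ℕ} (h : l.Chain' (· > ·)) {i : ℕ} (h2 : i + 1 < l.length) :
    l.getD (i+1) 0 < l.getD i 0 := by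
  have h1 : i < l.length := by omega
  have e1 : l.getD i 0 = l[i] := by
    rw [List.getD_eq_getElem?_getD, List.getElem?_eq_getElem h1]; rfl
  have e2 : l.getD (i+1) 0 = l[i+1] := by
    rw [List.getD_eq_getElem?_getD, List.getElem?_eq_getElem h2]; rfl
  rw [e1, e2]
  exact List.isChain_iff_getElem.1 h i (by omega)

/-- Gaps of a strict partition. -/
lemma strict_getD_gap {l : List ℕ} (hl : IsStrictPartition l) :
    ∀ (d k : ℕ), k + d < l.length → l.getD (k + d) 0 + d ≤ l.getD k 0 := by
  intro d
  induction d with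
  | zero => intro k _; simp
  | succ d ih =>
    intro k hk
    have he : k + (d + 1) = (k + 1) + d := by omega
    rw [he] at hk ⊢
    have h1 := ih (k+1) hk
    have h2 := chain'_gt_getD hl.1 (i := k) (by omega)
    omega

/-- Membership characterization for `sCells`. -/
lemma mem_sCells_iff {lam nu : List ℕ} (hl : IsStrictPartition lam) (i j : ℕ) :
    (i, j) ∈ sCells lam nu ↔
      1 ≤ i ∧ i ≤ lam.length ∧ nu.getD (i-1) 0 + i ≤ j ∧ j + 1 ≤ lam.getD (i-1) 0 + i := by
  unfold sCells
  rw [Finset.mem_filter, Finset.mem_product, Finset.mem_range, Finset.mem_range]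
  dsimp only
  constructor
  · rintro ⟨⟨-, -⟩, h1, h2, h3, h4⟩
    have hpos : 1 ≤ lam.getD (i-1) 0 := getD_pos_of_strict hl (by omega)
    exact ⟨h1, h2, h3, by omega⟩
  · rintro ⟨h1, h2, h3, h4⟩
    have hle : lam.getD (i-1) 0 ≤ lam.foldr max 0 := getD_le_foldr_max lam (i-1)
    exact ⟨⟨by omega, by omega⟩, h1, h2, h3, by omega⟩

section Shape

variable {lam nu : List ℕ}

/-- Hypotheses on the inner shape. -/
def NuGood (lam nu : List ℕ) : Prop :=
  (∀ i, nu.getD (i+1) 0 = 0 ∨ nu.getD (i+1) 0 < nu.getD i 0) ∧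
  (∀ i, nu.getD i 0 ≤ lam.getD i 0)

lemma nu_fast (hnu : NuGood lam nu) :
    ∀ (d k : ℕ), 0 < nu.getD (k + d) 0 → nu.getD (k + d) 0 + d ≤ nu.getD k 0 := by
  intro d
  induction d with
  | zero => intro k _; simp
  | succ d ih =>
    intro k hpos
    have he : k + (d + 1) = (k + d) + 1 := rfl
    rw [he] at hpos ⊢
    rcases hnu.1 (k + d) with h2 | h2
    · omega
    · have h1 := ih k (by omega)
      omega

/-- Rows are intervals. -/
lemma row_interval (hl : IsStrictPartition lam) {i j j' j'' : ℕ}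
    (h1 : (i, j) ∈ sCells lam nu) (h2 : (i, j') ∈ sCells lam nu)
    (hj : j ≤ j'') (hj' : j'' ≤ j') : (i, j'') ∈ sCells lam nu := by
  rw [mem_sCells_iff hl] at h1 h2 ⊢
  omega

/-- Columns are intervals. -/
lemma col_interval (hl : IsStrictPartition lam) (hnu : NuGood lam nu) {i i' i'' j : ℕ}
    (h1 : (i, j) ∈ sCells lam nu) (h2 : (i'', j) ∈ sCells lam nu)
    (hi : i ≤ i') (hi' : i' ≤ i'') : (i', j) ∈ sCells lam nu := by
  rw [mem_sCells_iff hl] at h1 h2 ⊢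
  refine ⟨by omega, by omega, ?_, ?_⟩
  · -- lower border
    rcases Nat.eq_zero_or_pos (nu.getD (i'-1) 0) with h0 | h0
    · -- start at diagonal: j ≥ nu_{i''-1} + i'' ≥ i'' ≥ i'
      omega
    · have := nu_fast hnu (i' - i) (i - 1) (by
        have : i - 1 + (i' - i) = i' - 1 := by omega
        rw [this]; exact h0)
      have he : i - 1 + (i' - i) = i' - 1 := by omega
      rw [he] at this
      omega
  · -- upper border
    have := strict_getD_gap hl (i'' - i') (i' - 1) (by omega)
    have he : i' - 1 + (i'' - i') = i'' - 1 := by omega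
    rw [he] at this
    omega

/-- A cell in row `i+1` lies strictly right of column `i`. -/
lemma below_not_diag (hl : IsStrictPartition lam) {i j : ℕ}
    (h : (i+1, j) ∈ sCells lam nu) : i < j := by
  rw [mem_sCells_iff hl] at h
  omega

lemma cell_pos (hl : IsStrictPartition lam) {i j : ℕ}
    (h : (i, j) ∈ sCells lam nu) : 1 ≤ i ∧ i ≤ j := by
  rw [mem_sCells_iff hl] at h
  omega

end Shape

end SSVTAux

section Tableaux

open Finset

variable {lam nu : List ℕ} {n : ℕ}

/-- Right neighbor. -/
def rightC (c : ℕ × ℕ) : ℕ × ℕ := (c.1, c.2 + 1)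
/-- Below neighbor. -/
def belowC (c : ℕ × ℕ) : ℕ × ℕ := (c.1 + 1, c.2)

/-- The minimum entry of a cell, with sentinel `2n+1` for empty cells. -/
def low (n : ℕ) (T : ℕ × ℕ → Finset ℕ) (c : ℕ × ℕ) : ℕ := (T c).min.untopD (2*n+1)

lemma low_eq_of {s : Finset ℕ} {x d : ℕ} (h1 : x ∈ s) (h2 : ∀ y ∈ s, x ≤ y) :
    s.min.untopD d = x := by
  have : s.min = (x : WithTop ℕ) :=
    le_antisymm (Finset.min_le h1) (Finset.le_min (fun y hy => WithTop.coe_le_coe.mpr (h2 y hy)))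
  rw [this]; rfl

lemma low_mem {T : ℕ × ℕ → Finset ℕ} {c : ℕ × ℕ} (h : (T c).Nonempty) :
    low n T c ∈ T c ∧ ∀ a ∈ T c, low n T c ≤ a := by
  have hx := Finset.min'_mem _ h
  have hy := fun y hy => Finset.min'_le (T c) y hy
  have : low n T c = (T c).min' h := low_eq_of (d := 2*n+1) hx hy
  rw [this]; exact ⟨hx, hy⟩

lemma low_empty {T : ℕ × ℕ → Finset ℕ} {c : ℕ × ℕ} (h : T c = ∅) :
    low n T c = 2*n+1 := by
  simp [low, h]

/-- A letter `a` may be placed in a cell whose right/below neighbor cells have minimum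
entries `v`, `w` (with sentinel `2n+1` when absent), diagonal flag `dg`. -/
def Allowed (n v w : ℕ) (dg : Bool) (a : ℕ) : Prop :=
  a ≤ 2*n ∧ a ≤ v ∧ a ≤ w ∧ (a = v → a % 2 = 0) ∧ (a = w → a % 2 = 1) ∧
    (dg = true → a % 2 = 0)

instance (n v w : ℕ) (dg : Bool) (a : ℕ) : Decidable (Allowed n v w dg a) := by
  unfold Allowed; infer_instance

/-- The set of letters that can be added to cell `c` of tableau `T`. -/
def Xset (n : ℕ) (T : ℕ × ℕ → Finset ℕ) (c : ℕ × ℕ) : Finset ℕ :=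
  (Finset.Ioc (low n T c) (2*n)).filter
    (fun a => Allowed n (low n T (rightC c)) (low n T (belowC c)) (decide (c.1 = c.2)) a)

section ValidT

variable {T : ℕ × ℕ → Finset ℕ}

lemma cell_nonempty (hT : IsSSVTP lam nu n T) {c : ℕ × ℕ} (hc : c ∈ sCells lam nu) :
    (T c).Nonempty := hT.1.cellNonempty c hc

lemma mem_cell_of_mem (hT : IsSSVTP lam nu n T) {c : ℕ × ℕ} {a : ℕ} (ha : a ∈ T c) :
    c ∈ sCells lam nu := by
  by_contra h
  rw [hT.1.support c h] at ha
  exact absurd ha (Finset.notMem_empty a)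

lemma lowT_off (hT : IsSSVTP lam nu n T) {c : ℕ × ℕ} (hc : c ∉ sCells lam nu) :
    low n T c = 2*n+1 := low_empty (hT.1.support c hc)

/-- Entries weakly increase down a (contiguous) column. -/
lemma chain_col (hl : IsStrictPartition lam) (hnu : SSVTAux.NuGood lam nu)
    (hT : IsSSVTP lam nu n T) :
    ∀ (d i j a b : ℕ), (i, j) ∈ sCells lam nu → (i + d + 1, j) ∈ sCells lam nu →
      a ∈ T (i, j) → b ∈ T (i + d + 1, j) → a ≤ b := by
  intro d
  induction d with
  | zero => exact fun i j a b h1 h2 ha hb => hT.1.colWeak i j h1 h2 a ha b hb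
  | succ d ih =>
    intro i j a b h1 h2 ha hb
    have hmid : (i + d + 1, j) ∈ sCells lam nu :=
      SSVTAux.col_interval hl hnu h1 h2 (by omega) (by omega)
    obtain ⟨m, hm⟩ := cell_nonempty hT hmid
    have step : m ≤ b := by
      have := hT.1.colWeak (i + d + 1) j hmid (by
        have he : (i + d + 1 + 1, j) = (i + (d + 1) + 1, j) := by
          simp; omega
        rw [he]; exact h2) m hm b
      apply this
      have he : (i + d + 1 + 1, j) = (i + (d + 1) + 1, j) := by simp; omega
      rw [he]; exact hb
    exact le_trans (ih i j a m h1 hmid ha hm) step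

/-- Entries weakly increase along a row. -/
lemma chain_row (hl : IsStrictPartition lam) (hT : IsSSVTP lam nu n T) :
    ∀ (d i j a b : ℕ), (i, j) ∈ sCells lam nu → (i, j + d + 1) ∈ sCells lam nu →
      a ∈ T (i, j) → b ∈ T (i, j + d + 1) → a ≤ b := by
  intro d
  induction d with
  | zero => exact fun i j a b h1 h2 ha hb => hT.1.rowWeak i j h1 h2 a ha b hb
  | succ d ih =>
    intro i j a b h1 h2 ha hb
    have hmid : (i, j + d + 1) ∈ sCells lam nu :=
      SSVTAux.row_interval hl h1 h2 (by omega) (by omega)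
    obtain ⟨m, hm⟩ := cell_nonempty hT hmid
    have step : m ≤ b := by
      have he : (i, j + d + 1 + 1) = (i, j + (d + 1) + 1) := by simp; omega
      have := hT.1.rowWeak i (j + d + 1) hmid (by rw [he]; exact h2) m hm b
      apply this
      rw [he]; exact hb
    exact le_trans (ih i j a m h1 hmid ha hm) step

/-- Every non-minimal entry of a cell of a valid tableau is an addable letter. -/
lemma extras_mem_X (hl : IsStrictPartition lam) (hT : IsSSVTP lam nu n T)
    {c : ℕ × ℕ} {a : ℕ} (hc : c ∈ sCells lam nu) (ha : a ∈ T c) (hne : a ≠ low n T c) :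
    a ∈ Xset n T c := by
  obtain ⟨i, j⟩ := c
  obtain ⟨hlm, hlmin⟩ := low_mem (n := n) (cell_nonempty hT hc)
  have hrange := hT.1.inRange _ a ha
  have hlt : low n T (i, j) < a := lt_of_le_of_ne (hlmin a ha) (Ne.symm hne)
  rw [Xset, Finset.mem_filter, Finset.mem_Ioc]
  refine ⟨⟨hlt, hrange.2⟩, ?_, ?_, ?_, ?_, ?_, ?_⟩
  · exact hrange.2
  · -- a ≤ low of right cell
    by_cases hr : rightC (i, j) ∈ sCells lam nu
    · obtain ⟨hrm, -⟩ := low_mem (n := n) (cell_nonempty hT hr)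
      exact hT.1.rowWeak i j hc hr a ha _ hrm
    · rw [lowT_off hT hr]; omega
  · -- a ≤ low of below cell
    by_cases hb : belowC (i, j) ∈ sCells lam nu
    · obtain ⟨hbm, -⟩ := low_mem (n := n) (cell_nonempty hT hb)
      exact hT.1.colWeak i j hc hb a ha _ hbm
    · rw [lowT_off hT hb]; omega
  · -- equality with right min forces even
    intro heq
    by_cases hr : rightC (i, j) ∈ sCells lam nu
    · obtain ⟨hrm, -⟩ := low_mem (n := n) (cell_nonempty hT hr)
      rw [← heq] at hrm
      by_contra hodd
      have h1 : a % 2 = 1 := by omega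
      have := hT.1.rowOnce a h1 i j (j+1) ha hrm
      omega
    · rw [lowT_off hT hr] at heq; omega
  · -- equality with below min forces odd
    intro heq
    by_cases hb : belowC (i, j) ∈ sCells lam nu
    · obtain ⟨hbm, -⟩ := low_mem (n := n) (cell_nonempty hT hb)
      rw [← heq] at hbm
      by_contra hodd
      have h0 : a % 2 = 0 := by omega
      have := hT.1.colOnce a h0 i (i+1) j ha hbm
      omega
    · rw [lowT_off hT hb] at heq; omega
  · -- diagonal
    intro hdg
    have hij : i = j := by simpa using hdg
    subst hij
    exact hT.2 i a ha

end ValidT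

end Tableaux

section Greedy

open Finset

/-- Fuel bound. -/
def BBd (lam : List ℕ) : ℕ := 2 * lam.length + lam.foldr max 0 + 3

lemma cell_row_le {lam nu : List ℕ} (hl : IsStrictPartition lam) {i j : ℕ}
    (hc : (i, j) ∈ sCells lam nu) : i ≤ lam.length := by
  rw [SSVTAux.mem_sCells_iff hl] at hc; omega

lemma sum_add_four_le {lam nu : List ℕ} (hl : IsStrictPartition lam) {i j : ℕ}
    (hc : (i, j) ∈ sCells lam nu) : i + j + 4 ≤ BBd lam := by
  rw [SSVTAux.mem_sCells_iff hl] at hc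
  have := SSVTAux.getD_le_foldr_max lam (i - 1)
  unfold BBd
  omega

/-- Fueled greedy recursion. -/
def gval (lam nu : List ℕ) (n : ℕ) : ℕ → ℕ × ℕ → ℕ
  | 0, _ => 0
  | k+1, c =>
    if c ∈ sCells lam nu then
      Nat.findGreatest
        (Allowed n (gval lam nu n k (rightC c)) (gval lam nu n k (belowC c))
          (decide (c.1 = c.2))) (2*n)
    else 2*n+1

/-- The greedy (unique saturated) filling. -/
def greedy (lam nu : List ℕ) (n : ℕ) (c : ℕ × ℕ) : ℕ :=
  if c ∈ sCells lam nu then gval lam nu n (BBd lam - (c.1 + c.2)) c else 2*n+1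

variable {lam nu : List ℕ} {n : ℕ}

lemma gval_off {k : ℕ} (hk : 1 ≤ k) {c : ℕ × ℕ} (hc : c ∉ sCells lam nu) :
    gval lam nu n k c = 2*n+1 := by
  cases k with
  | zero => omega
  | succ k => simp [gval, hc]

lemma greedy_off {c : ℕ × ℕ} (hc : c ∉ sCells lam nu) : greedy lam nu n c = 2*n+1 :=
  if_neg hc

lemma greedy_unfold (hl : IsStrictPartition lam) {i j : ℕ} (hc : (i, j) ∈ sCells lam nu) :
    greedy lam nu n (i, j) =
      Nat.findGreatest
        (Allowed n (greedy lam nu n (rightC (i, j))) (greedy lam nu n (belowC (i, j)))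
          (decide (i = j))) (2*n) := by
  have h4 : i + j + 4 ≤ BBd lam := sum_add_four_le hl hc
  have hr : gval lam nu n (BBd lam - (i + j) - 1) (rightC (i, j)) =
      greedy lam nu n (rightC (i, j)) := by
    by_cases h : rightC (i, j) ∈ sCells lam nu
    · rw [greedy, if_pos h]
      have e : BBd lam - ((rightC (i, j)).1 + (rightC (i, j)).2) = BBd lam - (i + j) - 1 := by
        simp only [rightC]; omega
      rw [e]
    · rw [gval_off (by omega) h, greedy_off h]
  have hb : gval lam nu n (BBd lam - (i + j) - 1) (belowC (i, j)) =
      greedy lam nu n (belowC (i, j)) := by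
    by_cases h : belowC (i, j) ∈ sCells lam nu
    · rw [greedy, if_pos h]
      have e : BBd lam - ((belowC (i, j)).1 + (belowC (i, j)).2) = BBd lam - (i + j) - 1 := by
        simp only [belowC]; omega
      rw [e]
    · rw [gval_off (by omega) h, greedy_off h]
  have he : BBd lam - (i + j) = (BBd lam - (i + j) - 1) + 1 := by omega
  rw [greedy, if_pos hc]
  show gval lam nu n (BBd lam - (i + j)) (i, j) = _
  rw [he]
  rw [gval]
  rw [if_pos hc, hr, hb]

lemma greedy_invariant (hl : IsStrictPartition lam) (hnu : SSVTAux.NuGood lam nu)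
    (hn : lam.length ≤ n) :
    ∀ (t : ℕ) (i j : ℕ), (i, j) ∈ sCells lam nu → BBd lam - (i + j) ≤ t →
      2 * (n - lam.length + i) ≤ greedy lam nu n (i, j) ∧
      Allowed n (greedy lam nu n (rightC (i, j))) (greedy lam nu n (belowC (i, j)))
        (decide (i = j)) (greedy lam nu n (i, j)) := by
  intro t
  induction t with
  | zero =>
    intro i j hc hbb
    exact absurd (sum_add_four_le hl hc) (by omega)
  | succ t ih =>
    intro i j hc hbb
    have h4 : i + j + 4 ≤ BBd lam := sum_add_four_le hl hc
    have hKn : 1 ≤ i ∧ i ≤ lam.length :=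
      ⟨(SSVTAux.cell_pos hl hc).1, cell_row_le hl hc⟩
    rw [greedy_unfold hl hc]
    set v := greedy lam nu n (rightC (i, j)) with hvdef
    set w := greedy lam nu n (belowC (i, j)) with hwdef
    have hv : (v ≤ 2*n ∧ 2 * (n - lam.length + i) ≤ v) ∨ v = 2*n+1 := by
      by_cases h : rightC (i, j) ∈ sCells lam nu
      · left
        have h2 := ih i (j+1) h (by omega)
        exact ⟨h2.2.1, h2.1⟩
      · right; rw [hvdef]; exact greedy_off h
    have hw : (w ≤ 2*n ∧ 2 * (n - lam.length + i) + 2 ≤ w ∧ i < j) ∨ w = 2*n+1 := by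
      by_cases h : belowC (i, j) ∈ sCells lam nu
      · left
        have h2 := ih (i+1) j h (by omega)
        have hij : i < j := SSVTAux.below_not_diag hl h
        have h21 : 2 * (n - lam.length + (i+1)) ≤ w := h2.1
        have h22 : w ≤ 2*n := h2.2.1
        exact ⟨h22, by omega, hij⟩
      · right; rw [hwdef]; exact greedy_off h
    rcases hw with ⟨hw1, hw2, hij⟩ | hw1
    · -- below neighbor present; not a diagonal cell
      have hdg : decide (i = j) = false := by simp; omega
      rw [hdg]
      have hAiff : ∀ a, Allowed n v w false a ↔
          (a ≤ 2*n ∧ a ≤ v ∧ a ≤ w ∧ (a = v → a % 2 = 0) ∧ (a = w → a % 2 = 1)) := by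
        intro a; unfold Allowed; simp
      by_cases hA : Allowed n v w false (min v w)
      · have h1 : min v w ≤ 2*n := ((hAiff _).1 hA).1
        refine ⟨le_trans ?_ (Nat.le_findGreatest h1 hA), Nat.findGreatest_spec h1 hA⟩
        rcases hv with ⟨hv1, hv2⟩ | hv1 <;> omega
      · have hgood : Allowed n v w false (min v w - 1) ∧
            2 * (n - lam.length + i) ≤ min v w - 1 := by
          rw [hAiff] at hA ⊢
          rcases hv with ⟨hv1, hv2⟩ | hv1 <;> omega
        refine ⟨le_trans hgood.2 (Nat.le_findGreatest
            (show min v w - 1 ≤ 2*n by omega) hgood.1),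
          Nat.findGreatest_spec (show min v w - 1 ≤ 2*n by omega) hgood.1⟩
    · -- no below neighbor
      rw [hw1]
      by_cases hdg : i = j
      · have hdg' : decide (i = j) = true := by simp [hdg]
        rw [hdg']
        have hAiff : ∀ a, Allowed n v (2*n+1) true a ↔
            (a ≤ 2*n ∧ a ≤ v ∧ (a = v → a % 2 = 0) ∧ a % 2 = 0) := by
          intro a; unfold Allowed
          constructor
          · rintro ⟨a1, a2, a3, a4, a5, a6⟩; exact ⟨a1, a2, a4, a6 rfl⟩
          · rintro ⟨a1, a2, a3, a4⟩
            exact ⟨a1, a2, by omega, a3, by omega, fun _ => a4⟩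
        by_cases hA : Allowed n v (2*n+1) true (min v (2*n))
        · have h1 : min v (2*n) ≤ 2*n := min_le_right _ _
          refine ⟨le_trans ?_ (Nat.le_findGreatest h1 hA), Nat.findGreatest_spec h1 hA⟩
          rcases hv with ⟨hv1, hv2⟩ | hv1 <;> omega
        · have hgood : Allowed n v (2*n+1) true (min v (2*n) - 1) ∧
              2 * (n - lam.length + i) ≤ min v (2*n) - 1 := by
            rw [hAiff] at hA ⊢
            rcases hv with ⟨hv1, hv2⟩ | hv1 <;> omega
          refine ⟨le_trans hgood.2 (Nat.le_findGreatest
              (show min v (2*n) - 1 ≤ 2*n by omega) hgood.1),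
            Nat.findGreatest_spec (show min v (2*n) - 1 ≤ 2*n by omega) hgood.1⟩
      · have hdg' : decide (i = j) = false := by simp [hdg]
        rw [hdg']
        have hAiff : ∀ a, Allowed n v (2*n+1) false a ↔
            (a ≤ 2*n ∧ a ≤ v ∧ (a = v → a % 2 = 0)) := by
          intro a; unfold Allowed
          constructor
          · rintro ⟨a1, a2, a3, a4, a5, a6⟩; exact ⟨a1, a2, a4⟩
          · rintro ⟨a1, a2, a3⟩
            exact ⟨a1, a2, by omega, a3, by omega, by simp⟩
        by_cases hA : Allowed n v (2*n+1) false (min v (2*n))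
        · have h1 : min v (2*n) ≤ 2*n := min_le_right _ _
          refine ⟨le_trans ?_ (Nat.le_findGreatest h1 hA), Nat.findGreatest_spec h1 hA⟩
          rcases hv with ⟨hv1, hv2⟩ | hv1 <;> omega
        · have hgood : Allowed n v (2*n+1) false (min v (2*n) - 1) ∧
              2 * (n - lam.length + i) ≤ min v (2*n) - 1 := by
            rw [hAiff] at hA ⊢
            rcases hv with ⟨hv1, hv2⟩ | hv1 <;> omega
          refine ⟨le_trans hgood.2 (Nat.le_findGreatest
              (show min v (2*n) - 1 ≤ 2*n by omega) hgood.1),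
            Nat.findGreatest_spec (show min v (2*n) - 1 ≤ 2*n by omega) hgood.1⟩

end Greedy

section GreedyTab

open Finset

variable {lam nu : List ℕ} {n : ℕ}

lemma greedy_spec (hl : IsStrictPartition lam) (hnu : SSVTAux.NuGood lam nu)
    (hn : lam.length ≤ n) {i j : ℕ} (hc : (i, j) ∈ sCells lam nu) :
    2 * (n - lam.length + i) ≤ greedy lam nu n (i, j) ∧
      Allowed n (greedy lam nu n (rightC (i, j))) (greedy lam nu n (belowC (i, j)))
        (decide (i = j)) (greedy lam nu n (i, j)) :=
  greedy_invariant hl hnu hn (BBd lam - (i + j)) i j hc le_rfl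

lemma greedy_pos (hl : IsStrictPartition lam) (hnu : SSVTAux.NuGood lam nu)
    (hn : lam.length ≤ n) {i j : ℕ} (hc : (i, j) ∈ sCells lam nu) :
    1 ≤ greedy lam nu n (i, j) := by
  have h1 := (greedy_spec hl hnu hn hc).1
  have h2 := (SSVTAux.cell_pos hl hc).1
  have h3 := cell_row_le hl hc
  omega

lemma greedy_le_2n (hl : IsStrictPartition lam) (hnu : SSVTAux.NuGood lam nu)
    (hn : lam.length ≤ n) {i j : ℕ} (hc : (i, j) ∈ sCells lam nu) :
    greedy lam nu n (i, j) ≤ 2*n :=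
  (greedy_spec hl hnu hn hc).2.1

lemma greedy_diag_even (hl : IsStrictPartition lam) (hnu : SSVTAux.NuGood lam nu)
    (hn : lam.length ≤ n) {i : ℕ} (hc : (i, i) ∈ sCells lam nu) :
    greedy lam nu n (i, i) % 2 = 0 :=
  (greedy_spec hl hnu hn hc).2.2.2.2.2.2 (by simp)

lemma greedy_chain_col (hl : IsStrictPartition lam) (hnu : SSVTAux.NuGood lam nu)
    (hn : lam.length ≤ n) :
    ∀ (d i j : ℕ), (i, j) ∈ sCells lam nu → (i + d + 1, j) ∈ sCells lam nu →
      greedy lam nu n (i, j) ≤ greedy lam nu n (i + d + 1, j) ∧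
      (greedy lam nu n (i, j) = greedy lam nu n (i + d + 1, j) →
        greedy lam nu n (i, j) % 2 = 1) := by
  intro d
  induction d with
  | zero =>
    intro i j h1 h2
    have hA := (greedy_spec hl hnu hn h1).2
    exact ⟨hA.2.2.1, hA.2.2.2.2.1⟩
  | succ d ih =>
    intro i j h1 h2
    have h2' : ((i+1) + d + 1, j) ∈ sCells lam nu := by
      rw [show ((i+1) + d + 1 : ℕ) = i + (d+1) + 1 from by omega]; exact h2
    have hmid : (i + 1, j) ∈ sCells lam nu :=
      SSVTAux.col_interval hl hnu h1 h2 (by omega) (by omega)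
    have hstep : greedy lam nu n (i, j) ≤ greedy lam nu n (i+1, j) ∧
        (greedy lam nu n (i, j) = greedy lam nu n (i+1, j) →
          greedy lam nu n (i, j) % 2 = 1) := by
      have hA := (greedy_spec hl hnu hn h1).2
      exact ⟨hA.2.2.1, hA.2.2.2.2.1⟩
    have hrest := ih (i+1) j hmid h2'
    rw [show (i + (d+1) + 1 : ℕ) = (i+1) + d + 1 from by omega]
    constructor
    · exact le_trans hstep.1 hrest.1
    · intro heq
      have e1 : greedy lam nu n (i, j) = greedy lam nu n (i+1, j) := by
        have := hstep.1
        have := hrest.1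
        omega
      exact hstep.2 e1

lemma greedy_chain_row (hl : IsStrictPartition lam) (hnu : SSVTAux.NuGood lam nu)
    (hn : lam.length ≤ n) :
    ∀ (d i j : ℕ), (i, j) ∈ sCells lam nu → (i, j + d + 1) ∈ sCells lam nu →
      greedy lam nu n (i, j) ≤ greedy lam nu n (i, j + d + 1) ∧
      (greedy lam nu n (i, j) = greedy lam nu n (i, j + d + 1) →
        greedy lam nu n (i, j) % 2 = 0) := by
  intro d
  induction d with
  | zero =>
    intro i j h1 h2
    have hA := (greedy_spec hl hnu hn h1).2
    exact ⟨hA.2.1, hA.2.2.2.1⟩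
  | succ d ih =>
    intro i j h1 h2
    have h2' : (i, (j+1) + d + 1) ∈ sCells lam nu := by
      rw [show ((j+1) + d + 1 : ℕ) = j + (d+1) + 1 from by omega]; exact h2
    have hmid : (i, j + 1) ∈ sCells lam nu :=
      SSVTAux.row_interval hl h1 h2 (by omega) (by omega)
    have hstep : greedy lam nu n (i, j) ≤ greedy lam nu n (i, j+1) ∧
        (greedy lam nu n (i, j) = greedy lam nu n (i, j+1) →
          greedy lam nu n (i, j) % 2 = 0) := by
      have hA := (greedy_spec hl hnu hn h1).2
      exact ⟨hA.2.1, hA.2.2.2.1⟩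
    have hrest := ih i (j+1) hmid h2'
    rw [show (j + (d+1) + 1 : ℕ) = (j+1) + d + 1 from by omega]
    constructor
    · exact le_trans hstep.1 hrest.1
    · intro heq
      have e1 : greedy lam nu n (i, j) = greedy lam nu n (i, j+1) := by
        have := hstep.1
        have := hrest.1
        omega
      exact hstep.2 e1

/-- The greedy tableau. -/
def greedyTab (lam nu : List ℕ) (n : ℕ) : ℕ × ℕ → Finset ℕ :=
  fun c => if c ∈ sCells lam nu then {greedy lam nu n c} else ∅

lemma low_greedyTab (c : ℕ × ℕ) : low n (greedyTab lam nu n) c = greedy lam nu n c := by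
  by_cases h : c ∈ sCells lam nu
  · rw [low, greedyTab]
    simp only [if_pos h, Finset.min_singleton]
    rfl
  · rw [greedy_off h]
    simp [low, greedyTab, h]

lemma mem_greedyTab {c : ℕ × ℕ} {a : ℕ} (ha : a ∈ greedyTab lam nu n c) :
    c ∈ sCells lam nu ∧ a = greedy lam nu n c := by
  by_cases h : c ∈ sCells lam nu
  · rw [greedyTab, if_pos h, Finset.mem_singleton] at ha
    exact ⟨h, ha⟩
  · rw [greedyTab, if_neg h] at ha
    exact absurd ha (Finset.notMem_empty a)

lemma greedyTab_valid (hl : IsStrictPartition lam) (hnu : SSVTAux.NuGood lam nu)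
    (hn : lam.length ≤ n) : IsSSVTP lam nu n (greedyTab lam nu n) := by
  constructor
  · constructor
    · exact fun c hc => if_neg hc
    · intro c hc
      rw [greedyTab, if_pos hc]
      exact Finset.singleton_nonempty _
    · intro c a ha
      obtain ⟨hc, rfl⟩ := mem_greedyTab ha
      obtain ⟨i, j⟩ := c
      exact ⟨greedy_pos hl hnu hn hc, greedy_le_2n hl hnu hn hc⟩
    · intro i j h1 h2 a ha b hb
      obtain ⟨-, rfl⟩ := mem_greedyTab ha
      obtain ⟨-, rfl⟩ := mem_greedyTab hb
      exact ((greedy_spec hl hnu hn h1).2).2.1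
    · intro i j h1 h2 a ha b hb
      obtain ⟨-, rfl⟩ := mem_greedyTab ha
      obtain ⟨-, rfl⟩ := mem_greedyTab hb
      exact ((greedy_spec hl hnu hn h1).2).2.2.1
    · -- colOnce
      intro a ha0 i i' j hai hai'
      obtain ⟨hc1, he1⟩ := mem_greedyTab hai
      obtain ⟨hc2, he2⟩ := mem_greedyTab hai'
      by_contra hne
      rcases Nat.lt_or_ge i i' with hlt | hge
      · have := greedy_chain_col hl hnu hn (i' - i - 1) i j hc1 (by
          rw [show (i + (i' - i - 1) + 1 : ℕ) = i' from by omega]; exact hc2)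
        rw [show (i + (i' - i - 1) + 1 : ℕ) = i' from by omega] at this
        have := this.2 (by omega)
        omega
      · have hlt : i' < i := by omega
        have := greedy_chain_col hl hnu hn (i - i' - 1) i' j hc2 (by
          rw [show (i' + (i - i' - 1) + 1 : ℕ) = i from by omega]; exact hc1)
        rw [show (i' + (i - i' - 1) + 1 : ℕ) = i from by omega] at this
        have := this.2 (by omega)
        omega
    · -- rowOnce
      intro a ha0 i j j' haj haj'
      obtain ⟨hc1, he1⟩ := mem_greedyTab haj
      obtain ⟨hc2, he2⟩ := mem_greedyTab haj'
      by_contra hne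
      rcases Nat.lt_or_ge j j' with hlt | hge
      · have := greedy_chain_row hl hnu hn (j' - j - 1) i j hc1 (by
          rw [show (j + (j' - j - 1) + 1 : ℕ) = j' from by omega]; exact hc2)
        rw [show (j + (j' - j - 1) + 1 : ℕ) = j' from by omega] at this
        have := this.2 (by omega)
        omega
      · have hlt : j' < j := by omega
        have := greedy_chain_row hl hnu hn (j - j' - 1) i j' hc2 (by
          rw [show (j' + (j - j' - 1) + 1 : ℕ) = j from by omega]; exact hc1)
        rw [show (j' + (j - j' - 1) + 1 : ℕ) = j from by omega] at this
        have := this.2 (by omega)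
        omega
  · intro i a ha
    obtain ⟨hc, rfl⟩ := mem_greedyTab ha
    exact greedy_diag_even hl hnu hn hc

lemma greedy_saturated (hl : IsStrictPartition lam) (hnu : SSVTAux.NuGood lam nu)
    (hn : lam.length ≤ n) {c : ℕ × ℕ} (hc : c ∈ sCells lam nu) :
    Xset n (greedyTab lam nu n) c = ∅ := by
  rw [Finset.eq_empty_iff_forall_notMem]
  intro a ha
  rw [Xset, Finset.mem_filter, Finset.mem_Ioc, low_greedyTab, low_greedyTab,
    low_greedyTab] at ha
  obtain ⟨i, j⟩ := c
  obtain ⟨⟨hlt, hle⟩, hA⟩ := ha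
  rw [greedy_unfold hl hc] at hlt
  exact Nat.findGreatest_is_greatest hlt hle hA

end GreedyTab

section Toggle

open Finset

variable {lam nu : List ℕ} {n : ℕ} {T : ℕ × ℕ → Finset ℕ}

/-- Insert letter `a₀` into cell `c₀`. -/
def ins (T : ℕ × ℕ → Finset ℕ) (c₀ : ℕ × ℕ) (a₀ : ℕ) : ℕ × ℕ → Finset ℕ :=
  fun c => if c = c₀ then insert a₀ (T c₀) else T c

/-- Erase letter `a₀` from cell `c₀`. -/
def ers (T : ℕ × ℕ → Finset ℕ) (c₀ : ℕ × ℕ) (a₀ : ℕ) : ℕ × ℕ → Finset ℕ :=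
  fun c => if c = c₀ then (T c₀).erase a₀ else T c

lemma ins_mem {c₀ c : ℕ × ℕ} {a₀ a : ℕ} :
    a ∈ ins T c₀ a₀ c ↔ a ∈ T c ∨ (c = c₀ ∧ a = a₀) := by
  unfold ins
  by_cases h : c = c₀
  · subst h; simp [Finset.mem_insert]; tauto
  · simp [h]

lemma ers_mem {c₀ c : ℕ × ℕ} {a₀ a : ℕ} :
    a ∈ ers T c₀ a₀ c ↔ a ∈ T c ∧ ¬(c = c₀ ∧ a = a₀) := by
  unfold ers
  by_cases h : c = c₀
  · subst h; simp [Finset.mem_erase]; tauto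
  · simp [h]

lemma chain_col' (hl : IsStrictPartition lam) (hnu : SSVTAux.NuGood lam nu)
    (hT : IsSSVTP lam nu n T) {i1 i2 j a b : ℕ}
    (h1 : (i1, j) ∈ sCells lam nu) (h2 : (i2, j) ∈ sCells lam nu) (hlt : i1 < i2)
    (ha : a ∈ T (i1, j)) (hb : b ∈ T (i2, j)) : a ≤ b := by
  have he : i1 + (i2 - i1 - 1) + 1 = i2 := by omega
  exact chain_col hl hnu hT (i2 - i1 - 1) i1 j a b h1 (by rw [he]; exact h2) ha
    (by rw [he]; exact hb)

lemma chain_row' (hl : IsStrictPartition lam) (hT : IsSSVTP lam nu n T) {i j1 j2 a b : ℕ}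
    (h1 : (i, j1) ∈ sCells lam nu) (h2 : (i, j2) ∈ sCells lam nu) (hlt : j1 < j2)
    (ha : a ∈ T (i, j1)) (hb : b ∈ T (i, j2)) : a ≤ b := by
  have he : j1 + (j2 - j1 - 1) + 1 = j2 := by omega
  exact chain_row hl hT (j2 - j1 - 1) i j1 a b h1 (by rw [he]; exact h2) ha
    (by rw [he]; exact hb)

/-- Erasing a non-minimal letter preserves validity. -/
lemma ers_valid (hT : IsSSVTP lam nu n T) {c₀ : ℕ × ℕ} {a₀ : ℕ}
    (hc₀ : c₀ ∈ sCells lam nu) (hne : low n T c₀ ≠ a₀) :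
    IsSSVTP lam nu n (ers T c₀ a₀) := by
  have hsub : ∀ c, ers T c₀ a₀ c ⊆ T c := by
    intro c a ha
    exact (ers_mem.1 ha).1
  constructor
  · constructor
    · intro c hc
      have : c ≠ c₀ := fun h => hc (h ▸ hc₀)
      rw [ers, if_neg this]
      exact hT.1.support c hc
    · intro c hc
      by_cases h : c = c₀
      · subst h
        refine ⟨low n T c, ?_⟩
        rw [ers, if_pos rfl, Finset.mem_erase]
        exact ⟨hne, (low_mem (cell_nonempty hT hc)).1⟩
      · rw [ers, if_neg h]
        exact cell_nonempty hT hc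
    · exact fun c a ha => hT.1.inRange c a (hsub c ha)
    · exact fun i j h1 h2 a ha b hb =>
        hT.1.rowWeak i j h1 h2 a (hsub _ ha) b (hsub _ hb)
    · exact fun i j h1 h2 a ha b hb =>
        hT.1.colWeak i j h1 h2 a (hsub _ ha) b (hsub _ hb)
    · exact fun a h0 i i' j h1 h2 => hT.1.colOnce a h0 i i' j (hsub _ h1) (hsub _ h2)
    · exact fun a h0 i j j' h1 h2 => hT.1.rowOnce a h0 i j j' (hsub _ h1) (hsub _ h2)
  · exact fun i a ha => hT.2 i a (hsub _ ha)

/-- Inserting an addable letter preserves validity. -/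
lemma ins_valid (hl : IsStrictPartition lam) (hnu : SSVTAux.NuGood lam nu)
    (hT : IsSSVTP lam nu n T) {c₀ : ℕ × ℕ} {a₀ : ℕ}
    (hc₀ : c₀ ∈ sCells lam nu) (hX : a₀ ∈ Xset n T c₀) :
    IsSSVTP lam nu n (ins T c₀ a₀) := by
  rw [Xset, Finset.mem_filter, Finset.mem_Ioc] at hX
  obtain ⟨⟨hlt, hle⟩, hA⟩ := hX
  have hlow := low_mem (n := n) (cell_nonempty hT hc₀)
  have hlowrange := hT.1.inRange c₀ _ hlow.1
  constructor
  · constructor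
    · intro c hc
      have : c ≠ c₀ := fun h => hc (h ▸ hc₀)
      rw [ins, if_neg this]
      exact hT.1.support c hc
    · intro c hc
      by_cases h : c = c₀
      · subst h
        rw [ins, if_pos rfl]
        exact Finset.insert_nonempty _ _
      · rw [ins, if_neg h]
        exact cell_nonempty hT hc
    · intro c a ha
      rcases ins_mem.1 ha with h | ⟨-, rfl⟩
      · exact hT.1.inRange c a h
      · omega
    · -- rowWeak
      intro i j h1 h2 a ha b hb
      rcases ins_mem.1 ha with ha' | ⟨hce, hae⟩
      · rcases ins_mem.1 hb with hb' | ⟨hce', hbe⟩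
        · exact hT.1.rowWeak i j h1 h2 a ha' b hb'
        · -- b is the new letter, so c₀ = (i, j+1); a ≤ low c₀ < a₀
          subst hce'
          have : a ≤ low n T (i, j+1) :=
            hT.1.rowWeak i j h1 h2 a ha' _ hlow.1
          omega
      · -- a is the new letter at c₀ = (i,j); a₀ ≤ low (rightC c₀) ≤ b
        subst hce
        rcases ins_mem.1 hb with hb' | ⟨hce', hbe⟩
        · have h3 := hA.2.1
          have h4 : low n T (rightC (i, j)) ≤ b :=
            (low_mem (cell_nonempty hT h2)).2 b hb'
          omega
        · -- both new: c₀ = (i,j) and c₀ = (i,j+1): impossible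
          exfalso
          simp [Prod.ext_iff] at hce'
    · -- colWeak
      intro i j h1 h2 a ha b hb
      rcases ins_mem.1 ha with ha' | ⟨hce, hae⟩
      · rcases ins_mem.1 hb with hb' | ⟨hce', hbe⟩
        · exact hT.1.colWeak i j h1 h2 a ha' b hb'
        · subst hce'
          have : a ≤ low n T (i+1, j) :=
            hT.1.colWeak i j h1 h2 a ha' _ hlow.1
          omega
      · subst hce
        rcases ins_mem.1 hb with hb' | ⟨hce', hbe⟩
        · have h3 := hA.2.2.1
          have h4 : low n T (belowC (i, j)) ≤ b :=
            (low_mem (cell_nonempty hT h2)).2 b hb'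
          omega
        · exfalso
          simp [Prod.ext_iff] at hce'
    · -- colOnce
      intro a h0 i i' j hai hai'
      have aux : ∀ i1 i2 : ℕ, (i1, j) = c₀ → a = a₀ → a ∈ T (i2, j) → i1 = i2 := by
        intro i1 i2 hce hae hmem'
        by_contra hcon
        have hC2 : (i2, j) ∈ sCells lam nu := mem_cell_of_mem hT hmem'
        have hC1 : (i1, j) ∈ sCells lam nu := hce ▸ hc₀
        rcases Nat.lt_or_ge i1 i2 with hlt2 | hge
        · have hbC : (i1 + 1, j) ∈ sCells lam nu :=
            SSVTAux.col_interval hl hnu hC1 hC2 (by omega) (by omega)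
          have hble : low n T (i1 + 1, j) ≤ a := by
            rcases Nat.eq_or_lt_of_le (show i1 + 1 ≤ i2 by omega) with heq | hlt3
            · rw [← heq] at hmem'
              exact (low_mem (cell_nonempty hT hbC)).2 a hmem'
            · exact chain_col' hl hnu hT hbC hC2 (by omega)
                (low_mem (cell_nonempty hT hbC)).1 hmem'
          have hb1 : a₀ ≤ low n T (belowC c₀) := hA.2.2.1
          have hb2 : a₀ = low n T (belowC c₀) → a₀ % 2 = 1 := hA.2.2.2.2.1
          have hbeq : belowC c₀ = (i1 + 1, j) := by rw [← hce]; rfl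
          rw [hbeq] at hb1 hb2
          omega
        · have : a ≤ low n T (i1, j) := by
            have := hlow
            rw [← hce] at this
            exact chain_col' hl hnu hT hC2 hC1 (by omega) hmem' this.1
          rw [← hce] at hlt
          omega
      rcases ins_mem.1 hai with h | ⟨hce, hae⟩
      · rcases ins_mem.1 hai' with h' | ⟨hce', hae'⟩
        · exact hT.1.colOnce a h0 i i' j h h'
        · exact (aux i' i hce' hae' h).symm
      · rcases ins_mem.1 hai' with h' | ⟨hce', hae'⟩
        · exact aux i i' hce hae h'
        · exact (Prod.ext_iff.1 (hce.trans hce'.symm)).1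
    · -- rowOnce
      intro a h0 i j j' haj haj'
      have aux : ∀ j1 j2 : ℕ, (i, j1) = c₀ → a = a₀ → a ∈ T (i, j2) → j1 = j2 := by
        intro j1 j2 hce hae hmem'
        by_contra hcon
        have hC2 : (i, j2) ∈ sCells lam nu := mem_cell_of_mem hT hmem'
        have hC1 : (i, j1) ∈ sCells lam nu := hce ▸ hc₀
        rcases Nat.lt_or_ge j1 j2 with hlt2 | hge
        · have hbC : (i, j1 + 1) ∈ sCells lam nu :=
            SSVTAux.row_interval hl hC1 hC2 (by omega) (by omega)
          have hble : low n T (i, j1 + 1) ≤ a := by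
            rcases Nat.eq_or_lt_of_le (show j1 + 1 ≤ j2 by omega) with heq | hlt3
            · rw [← heq] at hmem'
              exact (low_mem (cell_nonempty hT hbC)).2 a hmem'
            · exact chain_row' hl hT hbC hC2 (by omega)
                (low_mem (cell_nonempty hT hbC)).1 hmem'
          have hb1 : a₀ ≤ low n T (rightC c₀) := hA.2.1
          have hb2 : a₀ = low n T (rightC c₀) → a₀ % 2 = 0 := hA.2.2.2.1
          have hbeq : rightC c₀ = (i, j1 + 1) := by rw [← hce]; rfl
          rw [hbeq] at hb1 hb2
          omega
        · have : a ≤ low n T (i, j1) := by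
            have := hlow
            rw [← hce] at this
            exact chain_row' hl hT hC2 hC1 (by omega) hmem' this.1
          rw [← hce] at hlt
          omega
      rcases ins_mem.1 haj with h | ⟨hce, hae⟩
      · rcases ins_mem.1 haj' with h' | ⟨hce', hae'⟩
        · exact hT.1.rowOnce a h0 i j j' h h'
        · exact (aux j' j hce' hae' h).symm
      · rcases ins_mem.1 haj' with h' | ⟨hce', hae'⟩
        · exact aux j j' hce hae h'
        · exact (Prod.ext_iff.1 (hce.trans hce'.symm)).2
  · -- diagonal condition
    intro i a ha
    rcases ins_mem.1 ha with h | ⟨hce, rfl⟩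
    · exact hT.2 i a h
    · have : decide (c₀.1 = c₀.2) = true := by rw [← hce]; simp
      exact hA.2.2.2.2.2 this

end Toggle

section Involution

open Finset

/-- Cells with a nonempty set of addable letters. -/
def PFset (lam nu : List ℕ) (n : ℕ) (T : ℕ × ℕ → Finset ℕ) : Finset (ℕ × ℕ) :=
  (sCells lam nu).filter (fun c => (Xset n T c).Nonempty)

def pivotKey (lam nu : List ℕ) (n : ℕ) (T : ℕ × ℕ → Finset ℕ) : ℕ :=
  (((PFset lam nu n T).image (fun c => BBd lam * c.1 + c.2)).min.untopD 0)

def pivotCell (lam nu : List ℕ) (n : ℕ) (T : ℕ × ℕ → Finset ℕ) : ℕ × ℕ :=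
  (pivotKey lam nu n T / BBd lam, pivotKey lam nu n T % BBd lam)

def pivotLet (lam nu : List ℕ) (n : ℕ) (T : ℕ × ℕ → Finset ℕ) : ℕ :=
  (Xset n T (pivotCell lam nu n T)).max.unbotD 0

/-- The toggle of the pivot letter at the pivot cell. -/
def toggle (T : ℕ × ℕ → Finset ℕ) (c₀ : ℕ × ℕ) (a₀ : ℕ) : ℕ × ℕ → Finset ℕ :=
  if a₀ ∈ T c₀ then ers T c₀ a₀ else ins T c₀ a₀

/-- The involution. -/
def iota (lam nu : List ℕ) (n : ℕ) (T : ℕ × ℕ → Finset ℕ) : ℕ × ℕ → Finset ℕ :=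
  if (PFset lam nu n T).Nonempty then toggle T (pivotCell lam nu n T) (pivotLet lam nu n T)
  else T

variable {lam nu : List ℕ} {n : ℕ} {T : ℕ × ℕ → Finset ℕ}

lemma min_untop'_mem {s : Finset ℕ} (h : s.Nonempty) : s.min.untopD 0 ∈ s := by
  have e : s.min.untopD 0 = s.min' h := by rw [← Finset.coe_min' h]; rfl
  rw [e]; exact Finset.min'_mem s h

lemma max_unbot'_mem {s : Finset ℕ} (h : s.Nonempty) : s.max.unbotD 0 ∈ s := by
  have e : s.max.unbotD 0 = s.max' h := by rw [← Finset.coe_max' h]; rfl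
  rw [e]; exact Finset.max'_mem s h

lemma pivotCell_mem (hl : IsStrictPartition lam) (hPF : (PFset lam nu n T).Nonempty) :
    pivotCell lam nu n T ∈ PFset lam nu n T := by
  have himg := hPF.image (fun c => BBd lam * c.1 + c.2)
  have hkey := min_untop'_mem himg
  obtain ⟨c, hc, hck⟩ := Finset.mem_image.1 hkey
  obtain ⟨i, j⟩ := c
  have hcC : (i, j) ∈ sCells lam nu := (Finset.mem_filter.1 hc).1
  have hj : j < BBd lam := by
    have := sum_add_four_le hl hcC
    omega
  have hBB : 0 < BBd lam := by unfold BBd; omega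
  have hdiv : pivotKey lam nu n T / BBd lam = i := by
    rw [pivotKey, ← hck]
    simp only []
    rw [Nat.mul_add_div hBB, Nat.div_eq_of_lt hj]
    omega
  have hmod : pivotKey lam nu n T % BBd lam = j := by
    rw [pivotKey, ← hck]
    simp only []
    rw [Nat.mul_add_mod, Nat.mod_eq_of_lt hj]
  have : pivotCell lam nu n T = (i, j) := by
    rw [pivotCell, hdiv, hmod]
  rw [this]
  exact hc

lemma pivotLet_mem (hl : IsStrictPartition lam) (hPF : (PFset lam nu n T).Nonempty) :
    pivotLet lam nu n T ∈ Xset n T (pivotCell lam nu n T) := by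
  have h := pivotCell_mem hl hPF
  have hX : (Xset n T (pivotCell lam nu n T)).Nonempty := (Finset.mem_filter.1 h).2
  exact max_unbot'_mem hX

lemma low_toggle {c₀ : ℕ × ℕ} {a₀ : ℕ} (hTne : (T c₀).Nonempty)
    (hlt : low n T c₀ < a₀) (c : ℕ × ℕ) :
    low n (toggle T c₀ a₀) c = low n T c := by
  obtain ⟨hm0, hb0⟩ := low_mem (n := n) hTne
  unfold toggle
  by_cases hm : a₀ ∈ T c₀
  · rw [if_pos hm]
    by_cases hc : c = c₀
    · subst hc
      have h1 : low n T c ∈ ers T c a₀ c := by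
        rw [ers, if_pos rfl, Finset.mem_erase]
        exact ⟨by omega, hm0⟩
      have h2 : ∀ y ∈ ers T c a₀ c, low n T c ≤ y := by
        intro y hy
        rw [ers, if_pos rfl, Finset.mem_erase] at hy
        exact hb0 y hy.2
      exact low_eq_of h1 h2
    · show ((ers T c₀ a₀) c).min.untopD _ = _
      rw [ers, if_neg hc]
      rfl
  · rw [if_neg hm]
    by_cases hc : c = c₀
    · subst hc
      have h1 : low n T c ∈ ins T c a₀ c := by
        rw [ins, if_pos rfl]
        exact Finset.mem_insert_of_mem hm0
      have h2 : ∀ y ∈ ins T c a₀ c, low n T c ≤ y := by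
        intro y hy
        rw [ins, if_pos rfl, Finset.mem_insert] at hy
        rcases hy with rfl | hy
        · omega
        · exact hb0 y hy
      exact low_eq_of h1 h2
    · show ((ins T c₀ a₀) c).min.untopD _ = _
      rw [ins, if_neg hc]
      rfl

lemma Xset_toggle {c₀ : ℕ × ℕ} {a₀ : ℕ} (hTne : (T c₀).Nonempty)
    (hlt : low n T c₀ < a₀) (c : ℕ × ℕ) :
    Xset n (toggle T c₀ a₀) c = Xset n T c := by
  unfold Xset
  rw [low_toggle hTne hlt c, low_toggle hTne hlt (rightC c), low_toggle hTne hlt (belowC c)]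

lemma PFset_toggle {c₀ : ℕ × ℕ} {a₀ : ℕ} (hTne : (T c₀).Nonempty)
    (hlt : low n T c₀ < a₀) :
    PFset lam nu n (toggle T c₀ a₀) = PFset lam nu n T := by
  unfold PFset
  apply Finset.filter_congr
  intro c _
  rw [Xset_toggle hTne hlt c]

lemma toggle_toggle {c₀ : ℕ × ℕ} {a₀ : ℕ} :
    toggle (toggle T c₀ a₀) c₀ a₀ = T := by
  funext c
  unfold toggle
  by_cases hm : a₀ ∈ T c₀
  · rw [if_pos hm]
    have h1 : a₀ ∉ ers T c₀ a₀ c₀ := by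
      rw [ers, if_pos rfl]
      simp
    rw [if_neg h1, ins]
    by_cases hc : c = c₀
    · subst hc
      rw [if_pos rfl, ers, if_pos rfl, Finset.insert_erase hm]
    · rw [if_neg hc, ers, if_neg hc]
  · rw [if_neg hm]
    have h1 : a₀ ∈ ins T c₀ a₀ c₀ := by
      rw [ins, if_pos rfl]
      exact Finset.mem_insert_self _ _
    rw [if_pos h1, ers]
    by_cases hc : c = c₀
    · subst hc
      rw [if_pos rfl, ins, if_pos rfl, Finset.erase_insert hm]
    · rw [if_neg hc, ins, if_neg hc]

end Involution

section Fixed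

open Finset

variable {lam nu : List ℕ} {n : ℕ} {T : ℕ × ℕ → Finset ℕ}

/-- The minimum of each cell is itself an allowed letter. -/
lemma low_allowed (hT : IsSSVTP lam nu n T) {i j : ℕ} (hc : (i, j) ∈ sCells lam nu) :
    Allowed n (low n T (rightC (i, j))) (low n T (belowC (i, j))) (decide (i = j))
      (low n T (i, j)) := by
  obtain ⟨hm0, hb0⟩ := low_mem (n := n) (cell_nonempty hT hc)
  have hrange := hT.1.inRange _ _ hm0
  refine ⟨hrange.2, ?_, ?_, ?_, ?_, ?_⟩
  · by_cases hr : rightC (i, j) ∈ sCells lam nu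
    · exact hT.1.rowWeak i j hc hr _ hm0 _ (low_mem (n := n) (cell_nonempty hT hr)).1
    · rw [lowT_off hT hr]; omega
  · by_cases hb : belowC (i, j) ∈ sCells lam nu
    · exact hT.1.colWeak i j hc hb _ hm0 _ (low_mem (n := n) (cell_nonempty hT hb)).1
    · rw [lowT_off hT hb]; omega
  · intro heq
    by_cases hr : rightC (i, j) ∈ sCells lam nu
    · obtain ⟨hrm, -⟩ := low_mem (n := n) (cell_nonempty hT hr)
      rw [← heq] at hrm
      by_contra hodd
      have h1 : low n T (i, j) % 2 = 1 := by omega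
      have := hT.1.rowOnce _ h1 i j (j+1) hm0 hrm
      omega
    · rw [lowT_off hT hr] at heq; omega
  · intro heq
    by_cases hb : belowC (i, j) ∈ sCells lam nu
    · obtain ⟨hbm, -⟩ := low_mem (n := n) (cell_nonempty hT hb)
      rw [← heq] at hbm
      by_contra hodd
      have h0 : low n T (i, j) % 2 = 0 := by omega
      have := hT.1.colOnce _ h0 i (i+1) j hm0 hbm
      omega
    · rw [lowT_off hT hb] at heq; omega
  · intro hdg
    have hij : i = j := by simpa using hdg
    subst hij
    exact hT.2 i _ hm0

/-- A saturated cell is a singleton. -/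
lemma sat_singleton (hl : IsStrictPartition lam) (hT : IsSSVTP lam nu n T)
    {c : ℕ × ℕ} (hc : c ∈ sCells lam nu) (hX : Xset n T c = ∅) :
    T c = {low n T c} := by
  rw [Finset.eq_singleton_iff_unique_mem]
  refine ⟨(low_mem (n := n) (cell_nonempty hT hc)).1, ?_⟩
  intro a ha
  by_contra hne
  have := extras_mem_X hl hT hc ha hne
  rw [hX] at this
  exact absurd this (Finset.notMem_empty a)

/-- If every cell is saturated, the mins agree with the greedy filling. -/
lemma fixed_low_eq_greedy (hl : IsStrictPartition lam) (hnu : SSVTAux.NuGood lam nu)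
    (hn : lam.length ≤ n) (hT : IsSSVTP lam nu n T)
    (hall : ∀ c ∈ sCells lam nu, Xset n T c = ∅) :
    ∀ (t i j : ℕ), (i, j) ∈ sCells lam nu → BBd lam - (i + j) ≤ t →
      low n T (i, j) = greedy lam nu n (i, j) := by
  intro t
  induction t with
  | zero =>
    intro i j hc hbb
    exact absurd (sum_add_four_le hl hc) (by omega)
  | succ t ih =>
    intro i j hc hbb
    have h4 : i + j + 4 ≤ BBd lam := sum_add_four_le hl hc
    have hlr : low n T (rightC (i, j)) = greedy lam nu n (rightC (i, j)) := by
      by_cases h : rightC (i, j) ∈ sCells lam nu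
      · exact ih i (j+1) h (by omega)
      · rw [lowT_off hT h, greedy_off h]
    have hlb : low n T (belowC (i, j)) = greedy lam nu n (belowC (i, j)) := by
      by_cases h : belowC (i, j) ∈ sCells lam nu
      · exact ih (i+1) j h (by omega)
      · rw [lowT_off hT h, greedy_off h]
    have hA := low_allowed hT hc
    rw [hlr, hlb] at hA
    have h2n : low n T (i, j) ≤ 2*n := (hT.1.inRange _ _
      (low_mem (n := n) (cell_nonempty hT hc)).1).2
    have hle : low n T (i, j) ≤ greedy lam nu n (i, j) := by
      rw [greedy_unfold hl hc]
      exact Nat.le_findGreatest h2n hA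
    rcases Nat.eq_or_lt_of_le hle with heq | hlt
    · exact heq
    · exfalso
      have hmemX : greedy lam nu n (i, j) ∈ Xset n T (i, j) := by
        rw [Xset, Finset.mem_filter, Finset.mem_Ioc]
        refine ⟨⟨hlt, greedy_le_2n hl hnu hn hc⟩, ?_⟩
        rw [hlr, hlb]
        exact (greedy_spec hl hnu hn hc).2
      rw [hall _ hc] at hmemX
      exact absurd hmemX (Finset.notMem_empty _)

lemma fixed_eq_greedyTab (hl : IsStrictPartition lam) (hnu : SSVTAux.NuGood lam nu)
    (hn : lam.length ≤ n) (hT : IsSSVTP lam nu n T)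
    (hall : ∀ c ∈ sCells lam nu, Xset n T c = ∅) :
    T = greedyTab lam nu n := by
  funext c
  by_cases hc : c ∈ sCells lam nu
  · obtain ⟨i, j⟩ := c
    rw [sat_singleton hl hT hc (hall _ hc), greedyTab, if_pos hc,
      fixed_low_eq_greedy hl hnu hn hT hall (BBd lam - (i + j)) i j hc le_rfl]
  · rw [hT.1.support c hc, greedyTab, if_neg hc]

lemma iota_mem (hl : IsStrictPartition lam) (hnu : SSVTAux.NuGood lam nu)
    (hT : IsSSVTP lam nu n T) : IsSSVTP lam nu n (iota lam nu n T) := by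
  unfold iota
  by_cases hPF : (PFset lam nu n T).Nonempty
  · rw [if_pos hPF]
    have hc₀ : pivotCell lam nu n T ∈ sCells lam nu :=
      (Finset.mem_filter.1 (pivotCell_mem hl hPF)).1
    have hX := pivotLet_mem hl hPF
    have hlt : low n T (pivotCell lam nu n T) < pivotLet lam nu n T := by
      have := Finset.mem_filter.1 hX
      exact (Finset.mem_Ioc.1 (Finset.mem_filter.1 hX).1).1
    unfold toggle
    by_cases hm : pivotLet lam nu n T ∈ T (pivotCell lam nu n T)
    · rw [if_pos hm]
      exact ers_valid hT hc₀ (by omega)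
    · rw [if_neg hm]
      exact ins_valid hl hnu hT hc₀ hX
  · rw [if_neg hPF]
    exact hT

lemma iota_invol (hl : IsStrictPartition lam) (hT : IsSSVTP lam nu n T) :
    iota lam nu n (iota lam nu n T) = T := by
  by_cases hPF : (PFset lam nu n T).Nonempty
  · set c₀ := pivotCell lam nu n T with hc0def
    set a₀ := pivotLet lam nu n T with ha0def
    have hc₀ : c₀ ∈ sCells lam nu := (Finset.mem_filter.1 (pivotCell_mem hl hPF)).1
    have hX : a₀ ∈ Xset n T c₀ := pivotLet_mem hl hPF
    have hlt : low n T c₀ < a₀ := (Finset.mem_Ioc.1 (Finset.mem_filter.1 hX).1).1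
    have hTne : (T c₀).Nonempty := cell_nonempty hT hc₀
    have h1 : iota lam nu n T = toggle T c₀ a₀ := by
      rw [iota, if_pos hPF]
    have hPFt : PFset lam nu n (toggle T c₀ a₀) = PFset lam nu n T := PFset_toggle hTne hlt
    have hPF2 : (PFset lam nu n (toggle T c₀ a₀)).Nonempty := by rw [hPFt]; exact hPF
    have hkey : pivotKey lam nu n (toggle T c₀ a₀) = pivotKey lam nu n T := by
      unfold pivotKey
      rw [hPFt]
    have hpc : pivotCell lam nu n (toggle T c₀ a₀) = c₀ := by
      unfold pivotCell
      rw [hkey, hc0def]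
      rfl
    have hpl : pivotLet lam nu n (toggle T c₀ a₀) = a₀ := by
      unfold pivotLet
      rw [hpc, Xset_toggle hTne hlt, ha0def]
      rfl
    rw [h1, iota, if_pos hPF2, hpc, hpl, toggle_toggle]
  · have h1 : iota lam nu n T = T := by rw [iota, if_neg hPF]
    rw [h1, h1]

lemma iota_ne_of_PF (hl : IsStrictPartition lam) (hT : IsSSVTP lam nu n T)
    (hPF : (PFset lam nu n T).Nonempty) : iota lam nu n T ≠ T := by
  intro heq
  have hX := pivotLet_mem hl hPF
  have h1 : iota lam nu n T (pivotCell lam nu n T) = T (pivotCell lam nu n T) :=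
    congrFun heq _
  rw [iota, if_pos hPF] at h1
  unfold toggle at h1
  by_cases hm : pivotLet lam nu n T ∈ T (pivotCell lam nu n T)
  · rw [if_pos hm, ers, if_pos rfl] at h1
    have : pivotLet lam nu n T ∈ (T (pivotCell lam nu n T)).erase (pivotLet lam nu n T) := by
      rw [h1]; exact hm
    simp at this
  · rw [if_neg hm, ins, if_pos rfl] at h1
    have : pivotLet lam nu n T ∈ T (pivotCell lam nu n T) := by
      rw [← h1]; exact Finset.mem_insert_self _ _
    exact hm this

lemma iota_fix_iff (hl : IsStrictPartition lam) (hnu : SSVTAux.NuGood lam nu)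
    (hn : lam.length ≤ n) (hT : IsSSVTP lam nu n T) :
    iota lam nu n T = T ↔ T = greedyTab lam nu n := by
  constructor
  · intro hfix
    have hPF : ¬ (PFset lam nu n T).Nonempty := fun h => iota_ne_of_PF hl hT h hfix
    have hall : ∀ c ∈ sCells lam nu, Xset n T c = ∅ := by
      intro c hc
      rw [Finset.not_nonempty_iff_eq_empty] at hPF
      by_contra hne
      have : c ∈ PFset lam nu n T := by
        rw [PFset, Finset.mem_filter]
        exact ⟨hc, Finset.nonempty_iff_ne_empty.2 hne⟩
      rw [hPF] at this
      exact absurd this (Finset.notMem_empty c)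
    exact fixed_eq_greedyTab hl hnu hn hT hall
  · intro heq
    subst heq
    have hPF : ¬ (PFset lam nu n (greedyTab lam nu n)).Nonempty := by
      rw [Finset.not_nonempty_iff_eq_empty, PFset, Finset.filter_eq_empty_iff]
      intro c hc
      rw [greedy_saturated hl hnu hn hc]
      simp
    rw [iota, if_neg hPF]

end Fixed

section Parity

open Finset

lemma even_ncard_of_involution {α : Type} (f : α → α) :
    ∀ (k : ℕ) (S : Set α), S.Finite → S.ncard = k → (∀ a ∈ S, f a ∈ S) →
      (∀ a ∈ S, f (f a) = a) → (∀ a ∈ S, f a ≠ a) → Even k := by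
  intro k
  induction k using Nat.strong_induction_on with
  | _ k ih =>
    intro S hfin hcard hmaps hinv hnf
    rcases Set.eq_empty_or_nonempty S with rfl | ⟨a, ha⟩
    · have : k = 0 := by simpa using hcard.symm
      simp [this]
    · have hfa : f a ∈ S := hmaps a ha
      have hne : a ≠ f a := (hnf a ha).symm
      have hsub : ({a, f a} : Set α) ⊆ S :=
        Set.insert_subset_iff.2 ⟨ha, Set.singleton_subset_iff.2 hfa⟩
      have hfin' : (S \ {a, f a}).Finite := hfin.subset Set.diff_subset
      have hpair : ({a, f a} : Set α).ncard = 2 := Set.ncard_pair hne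
      have hcard' : (S \ {a, f a}).ncard = k - 2 := by
        rw [Set.ncard_diff hsub (Set.toFinite _), hpair, hcard]
      have hk2 : 2 ≤ k := by
        rw [← hcard, ← hpair]
        exact Set.ncard_le_ncard hsub hfin
      have hmaps' : ∀ b ∈ S \ {a, f a}, f b ∈ S \ {a, f a} := by
        intro b hb
        obtain ⟨hbS, hbn⟩ := hb
        simp only [Set.mem_insert_iff, Set.mem_singleton_iff] at hbn
        push_neg at hbn
        refine ⟨hmaps b hbS, ?_⟩
        simp only [Set.mem_insert_iff, Set.mem_singleton_iff]
        push_neg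
        constructor
        · intro h
          exact hbn.2 ((hinv b hbS).symm.trans (congrArg f h))
        · intro h
          exact hbn.1 (((hinv b hbS).symm.trans (congrArg f h)).trans (hinv a ha))
      have hinv' : ∀ b ∈ S \ {a, f a}, f (f b) = b := fun b hb => hinv b hb.1
      have hnf' : ∀ b ∈ S \ {a, f a}, f b ≠ b := fun b hb => hnf b hb.1
      obtain ⟨m, hm⟩ := ih (k - 2) (by omega) _ hfin' hcard' hmaps' hinv' hnf'
      exact ⟨m + 1, by omega⟩

lemma odd_ncard_of_involution {α : Type} (S : Set α) (hfin : S.Finite) (f : α → α)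
    (hmaps : ∀ a ∈ S, f a ∈ S) (hinv : ∀ a ∈ S, f (f a) = a) (x₀ : α) (hx₀ : x₀ ∈ S)
    (hfix : ∀ a ∈ S, (f a = a ↔ a = x₀)) : Odd S.ncard := by
  have h1 : (S \ {x₀}).ncard + 1 = S.ncard := Set.ncard_diff_singleton_add_one hx₀ hfin
  have hfixx : f x₀ = x₀ := (hfix x₀ hx₀).2 rfl
  have heven : Even (S \ {x₀}).ncard := by
    apply even_ncard_of_involution f _ _ (hfin.subset Set.diff_subset) rfl
    · intro b hb
      refine ⟨hmaps b hb.1, ?_⟩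
      simp only [Set.mem_singleton_iff]
      intro h
      have : b = x₀ := by
        rw [← hinv b hb.1, h, hfixx]
      exact (by simpa [this] using hb.2 : False)
    · exact fun b hb => hinv b hb.1
    · intro b hb h
      have := (hfix b hb.1).1 h
      simpa [this] using hb.2
  obtain ⟨m, hm⟩ := heven
  rw [Nat.odd_iff]
  omega

lemma SSVTP_finite (lam nu : List ℕ) (n : ℕ) :
    {T : ℕ × ℕ → Finset ℕ | IsSSVTP lam nu n T}.Finite := by
  set φ : (ℕ × ℕ → Finset ℕ) → Finset ((ℕ × ℕ) × ℕ) :=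
    fun T => (sCells lam nu).biUnion (fun c => (T c).image (fun a => (c, a))) with hφ
  have hmemφ : ∀ T c a, ((c, a) ∈ φ T ↔ c ∈ sCells lam nu ∧ a ∈ T c) := by
    intro T c a
    rw [hφ]
    simp only [Finset.mem_biUnion, Finset.mem_image]
    constructor
    · rintro ⟨c', hc', a', ha', heq⟩
      cases heq
      exact ⟨hc', ha'⟩
    · rintro ⟨hc, ha⟩
      exact ⟨c, hc, a, ha, rfl⟩
  apply Set.Finite.of_finite_image (f := φ)
  · apply Set.Finite.subset
      (Finset.finite_toSet ((sCells lam nu ×ˢ Finset.Icc 1 (2*n)).powerset))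
    rintro x ⟨T, hT, rfl⟩
    simp only [Finset.coe_powerset, Set.mem_preimage, Set.mem_powerset_iff,
      Finset.coe_subset, Finset.mem_coe]
    intro p hp
    obtain ⟨c, a⟩ := p
    rw [hmemφ] at hp
    rw [Finset.mem_product]
    refine ⟨hp.1, ?_⟩
    rw [Finset.mem_Icc]
    exact hT.1.inRange c a hp.2
  · intro T1 h1 T2 h2 heq
    funext c
    by_cases hc : c ∈ sCells lam nu
    · ext a
      have e1 : a ∈ T1 c ↔ (c, a) ∈ φ T1 := by rw [hmemφ]; tauto
      have e2 : a ∈ T2 c ↔ (c, a) ∈ φ T2 := by rw [hmemφ]; tauto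
      rw [e1, e2, heq]
    · rw [h1.1.support c hc, h2.1.support c hc]

/-- The number of `SSVT_P` tableaux of any shifted skew shape is odd. -/
lemma odd_ncard_SSVTP {lam nu : List ℕ} {n : ℕ} (hl : IsStrictPartition lam)
    (hnu : SSVTAux.NuGood lam nu) (hn : lam.length ≤ n) :
    Odd {T : ℕ × ℕ → Finset ℕ | IsSSVTP lam nu n T}.ncard := by
  apply odd_ncard_of_involution _ (SSVTP_finite lam nu n) (iota lam nu n)
    (fun T hT => iota_mem hl hnu hT) (fun T hT => iota_invol hl hT)
    (greedyTab lam nu n) (greedyTab_valid hl hnu hn)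
    (fun T hT => iota_fix_iff hl hnu hn hT)

end Parity

section RemoveRows

lemma removeRows_getD (mu : List ℕ) (B : Finset ℕ) (i : ℕ) :
    (removeRows mu B).getD i 0 =
      if i < mu.length then (if i + 1 ∈ B then mu.getD i 0 - 1 else mu.getD i 0) else 0 := by
  have hlen : (removeRows mu B).length = mu.length := by
    simp [removeRows]
  by_cases h : i < mu.length
  · rw [if_pos h]
    have h2 : i < (removeRows mu B).length := by omega
    have hget : (removeRows mu B).get ⟨i, h2⟩ =
        (fun i p => if i + 1 ∈ B then p - 1 else p) i (mu.get ⟨i, h⟩) :=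
      List.getElem_mapIdx (h := h2)
    rw [List.getD_eq_getElem?_getD, List.getElem?_eq_getElem h2]
    have e1 : (removeRows mu B)[i] = (removeRows mu B).get ⟨i, h2⟩ := rfl
    have e2 : mu.getD i 0 = mu.get ⟨i, h⟩ := by
      rw [List.getD_eq_getElem?_getD, List.getElem?_eq_getElem h]
      rfl
    rw [Option.getD_some, e1, hget, e2]
  · rw [if_neg h]
    rw [List.getD_eq_getElem?_getD, List.getElem?_eq_none (by omega)]
    rfl

lemma removeRows_NuGood {lam mu : List ℕ} {B : Finset ℕ} (hl : IsStrictPartition lam)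
    (hm : IsStrictPartition mu) (hsub : SubPartition mu lam) (hB : B ⊆ remRows mu) :
    SSVTAux.NuGood lam (removeRows mu B) := by
  constructor
  · intro i
    by_cases h1 : i + 1 < mu.length
    · have e1 : (removeRows mu B).getD (i+1) 0 =
          if i + 1 + 1 ∈ B then mu.getD (i+1) 0 - 1 else mu.getD (i+1) 0 := by
        rw [removeRows_getD, if_pos h1]
      have e0 : (removeRows mu B).getD i 0 =
          if i + 1 ∈ B then mu.getD i 0 - 1 else mu.getD i 0 := by
        rw [removeRows_getD, if_pos (show i < mu.length by omega)]
      rw [e1, e0]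
      have hlt : mu.getD (i+1) 0 < mu.getD i 0 := SSVTAux.chain'_gt_getD hm.1 h1
      have hpos1 : 1 ≤ mu.getD (i+1) 0 := SSVTAux.getD_pos_of_strict hm h1
      by_cases hB1 : i + 1 ∈ B
      · have hrem := hB hB1
        rw [remRows, Finset.mem_filter] at hrem
        have hcond : mu.getD (i+1) 0 + 1 < mu.getD i 0 ∨ mu.getD i 0 = 1 := by
          have h := hrem.2
          simpa using h
        rw [if_pos hB1]
        by_cases hB2 : i + 1 + 1 ∈ B
        · rw [if_pos hB2]; omega
        · rw [if_neg hB2]; omega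
      · rw [if_neg hB1]
        by_cases hB2 : i + 1 + 1 ∈ B
        · rw [if_pos hB2]; omega
        · rw [if_neg hB2]; omega
    · left
      rw [removeRows_getD, if_neg (by omega)]
  · intro i
    rw [removeRows_getD]
    by_cases h : i < mu.length
    · rw [if_pos h]
      have := hsub.2 i
      by_cases hB1 : i + 1 ∈ B
      · rw [if_pos hB1]; omega
      · rw [if_neg hB1]; omega
    · rw [if_neg h]
      omega

end RemoveRows

/-- for `∅ ≠ μ ⊆ λ`, the total number `Σ_ν |SSVT_P(λ/ν,n)|`
over `ν ⊆ μ` with `μ/ν ⊆ Rem(μ)` is even. -/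
theorem total_skew_count_even (lam mu : List ℕ) (n : ℕ)
    (hl : IsStrictPartition lam) (hm : IsStrictPartition mu)
    (hne : mu ≠ []) (hsub : SubPartition mu lam) (hn : lam.length ≤ n) :
    Even (∑ B ∈ (remRows mu).powerset,
      {T : ℕ × ℕ → Finset ℕ | IsSSVTP lam (removeRows mu B) n T}.ncard) := by
  have hlen : 1 ≤ mu.length := List.length_pos_iff.2 hne
  have hrem : mu.length ∈ remRows mu := by
    rw [remRows, Finset.mem_filter, Finset.mem_Icc]
    refine ⟨⟨hlen, le_rfl⟩, ?_⟩
    have hgd : mu.getD mu.length 0 = 0 := by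
      rw [List.getD_eq_getElem?_getD, List.getElem?_eq_none (by omega)]
      rfl
    have hpos : 1 ≤ mu.getD (mu.length - 1) 0 := SSVTAux.getD_pos_of_strict hm (by omega)
    omega
  have hodd : ∀ B ∈ (remRows mu).powerset,
      {T : ℕ × ℕ → Finset ℕ | IsSSVTP lam (removeRows mu B) n T}.ncard % 2 = 1 := by
    intro B hB
    rw [← Nat.odd_iff]
    exact odd_ncard_SSVTP hl
      (removeRows_NuGood hl hm hsub (Finset.mem_powerset.1 hB)) hn
  rw [Nat.even_iff, Finset.sum_nat_mod, Finset.sum_congr rfl hodd, Finset.sum_const,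
    smul_eq_mul, mul_one, Finset.card_powerset]
  have hcard : 1 ≤ (remRows mu).card := Finset.card_pos.2 ⟨_, hrem⟩
  obtain ⟨m, hm2⟩ : ∃ m, (remRows mu).card = m + 1 := ⟨(remRows mu).card - 1, by omega⟩
  rw [hm2, pow_succ]
  simp [Nat.mul_mod]
end

section
/- The minimal Q-type shifted set-valued tableau T_Q of shape λ, defined by (T_Q)_{i,i} = {i'} on the diagonal and (T_Q)_{i,j} = {i} off the diagonal, is the unique minimizer of the total entry sum Σ_{(i,j)}Σ_{t∈T_{i,j}} t over SSVT_Q(λ,n), where k' is counted as k - 1/2. -/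
open Finset

lemma getD_le_foldr_max (l : List ℕ) (k : ℕ) : l.getD k 0 ≤ l.foldr max 0 := by
  induction l generalizing k with
  | nil => simp
  | cons a l ih =>
    cases k with
    | zero => simp [List.getD_cons_zero]
    | succ k =>
      simp only [List.getD_cons_succ, List.foldr_cons]
      exact le_trans (ih k) (le_max_right _ _)

lemma mem_sCells_nil (lam : List ℕ) (i j : ℕ) :
    (i, j) ∈ sCells lam [] ↔
      1 ≤ i ∧ i ≤ lam.length ∧ i ≤ j ∧ j ≤ lam.getD (i - 1) 0 + i - 1 := by
  unfold sCells
  simp only [Finset.mem_filter, Finset.mem_product, Finset.mem_range]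
  constructor
  · rintro ⟨⟨_, _⟩, h1, h2, h3, h4⟩
    simp only [List.getD] at h3
    exact ⟨h1, h2, by simpa using h3, h4⟩
  · rintro ⟨h1, h2, h3, h4⟩
    have hm := getD_le_foldr_max lam (i - 1)
    refine ⟨⟨by omega, by omega⟩, h1, h2, ?_, h4⟩
    simp only [List.getD]
    simpa using h3

lemma chain'_getD {lam : List ℕ} (h : lam.Chain' (· > ·)) (k : ℕ)
    (hk : k + 1 < lam.length) : lam.getD (k + 1) 0 < lam.getD k 0 := by
  rw [List.getD_eq_getElem lam 0 hk, List.getD_eq_getElem lam 0 (by omega)]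
  have := List.isChain_iff_getElem.mp h k (by omega)
  simpa [List.get_eq_getElem] using this

lemma sum_lower (s : Finset ℕ) (hs : s.Nonempty) (b : ℕ) (hb : 1 ≤ b)
    (h : ∀ a ∈ s, b ≤ a) : b ≤ ∑ a ∈ s, a ∧ (s ≠ {b} → b < ∑ a ∈ s, a) := by
  obtain ⟨x, hx⟩ := hs
  have hbx := h x hx
  have hxs : x ≤ ∑ a ∈ s, a :=
    Finset.single_le_sum (f := fun a => a) (fun a _ => Nat.zero_le a) hx
  refine ⟨le_trans hbx hxs, fun hne => ?_⟩
  by_cases hbmem : b ∈ s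
  · have hex : ∃ y ∈ s, y ≠ b := by
      by_contra hall
      push_neg at hall
      exact hne (Finset.eq_singleton_iff_unique_mem.mpr ⟨hbmem, hall⟩)
    obtain ⟨y, hy, hyb⟩ := hex
    have hby := h y hy
    have hsub : ({b, y} : Finset ℕ) ⊆ s := by
      intro z hz
      simp only [Finset.mem_insert, Finset.mem_singleton] at hz
      rcases hz with rfl | rfl <;> assumption
    have hps : ∑ a ∈ ({b, y} : Finset ℕ), a ≤ ∑ a ∈ s, a :=
      Finset.sum_le_sum_of_subset hsub
    rw [Finset.sum_pair (Ne.symm hyb)] at hps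
    omega
  · have : b < x := lt_of_le_of_ne hbx (fun e => hbmem (e ▸ hx))
    omega

lemma mem_TminQ {lam : List ℕ} {a : ℕ} {c : ℕ × ℕ} :
    a ∈ TminQ lam c ↔ c ∈ sCells lam [] ∧
      a = (if c.1 = c.2 then 2 * c.1 - 1 else 2 * c.1) := by
  unfold TminQ
  split_ifs with h1 h2 <;> simp_all

lemma minBound {lam : List ℕ} {n : ℕ} {T : ℕ × ℕ → Finset ℕ}
    (h : IsStrictPartition lam) (hT : IsSSVTQ lam [] n T) :
    ∀ i j, (i, j) ∈ sCells lam [] → ∀ a ∈ T (i, j),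
      (if i = j then 2 * i - 1 else 2 * i) ≤ a := by
  suffices H : ∀ N i j, i + j ≤ N → (i, j) ∈ sCells lam [] → ∀ a ∈ T (i, j),
      (if i = j then 2 * i - 1 else 2 * i) ≤ a by
    intro i j hc a ha; exact H (i + j) i j le_rfl hc a ha
  intro N
  induction N with
  | zero =>
    intro i j hij hc a ha
    rw [mem_sCells_nil] at hc
    omega
  | succ N IH =>
    intro i j hij hc a ha
    have hc' := hc
    rw [mem_sCells_nil] at hc'
    obtain ⟨hi1, hil, hijle, hjr⟩ := hc'
    -- Step 1: 2 * i - 1 ≤ a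
    have key1 : 2 * i - 1 ≤ a := by
      rcases Nat.lt_or_ge i 2 with h2 | h2
      · have := (hT.inRange (i, j) a ha).1; omega
      · have hd : lam.getD (i - 1) 0 < lam.getD (i - 2) 0 := by
          have := chain'_getD h.1 (i - 2) (by omega)
          have e : i - 2 + 1 = i - 1 := by omega
          rwa [e] at this
        have hcell : (i - 1, j) ∈ sCells lam [] := by
          rw [mem_sCells_nil]
          have e : i - 1 - 1 = i - 2 := by omega
          rw [e]
          omega
        obtain ⟨b, hb⟩ := hT.cellNonempty _ hcell
        have hba : b ≤ a := by
          have e : i - 1 + 1 = i := by omega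
          exact hT.colWeak (i - 1) j hcell (by rw [e]; exact hc) b hb a (by rw [e]; exact ha)
        have hbI : 2 * (i - 1) ≤ b := by
          have := IH (i - 1) j (by omega) hcell b hb
          have hne : i - 1 ≠ j := by omega
          rw [if_neg hne] at this
          exact this
        by_contra hcon
        have hae : a = 2 * i - 2 := by omega
        have hbe : b = a := by omega
        have := hT.colOnce a (by omega) (i - 1) i j (hbe ▸ hb) ha
        omega
    -- Step 2: if i < j then 2 * i ≤ a
    rcases Nat.lt_or_ge i j with hlt | hge
    · rw [if_neg (by omega)]
      have hcell : (i, j - 1) ∈ sCells lam [] := by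
        rw [mem_sCells_nil]; omega
      obtain ⟨b, hb⟩ := hT.cellNonempty _ hcell
      have hba : b ≤ a := by
        have e : j - 1 + 1 = j := by omega
        exact hT.rowWeak i (j - 1) hcell (by rw [e]; exact hc) b hb a (by rw [e]; exact ha)
      have hbI : 2 * i - 1 ≤ b := by
        have := IH i (j - 1) (by omega) hcell b hb
        split_ifs at this <;> omega
      by_contra hcon
      have hae : a = 2 * i - 1 := by omega
      have hbe : b = a := by omega
      have := hT.rowOnce a (by omega) i (j - 1) j (hbe ▸ hb) ha
      omega
    · rw [if_pos (by omega)]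
      exact key1

lemma TminQ_isSSVTQ (lam : List ℕ) (n : ℕ) (hn : lam.length ≤ n) :
    IsSSVTQ lam [] n (TminQ lam) := by
  constructor
  · intro c hc
    unfold TminQ
    rw [if_neg hc]
  · intro c hc
    unfold TminQ
    rw [if_pos hc]
    split_ifs <;> exact Finset.singleton_nonempty _
  · intro c a ha
    rw [mem_TminQ] at ha
    obtain ⟨hc, hae⟩ := ha
    rw [mem_sCells_nil] at hc
    split_ifs at hae <;> omega
  · intro i j hc hc' a ha b hb
    rw [mem_TminQ] at ha hb
    obtain ⟨_, hae⟩ := ha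
    obtain ⟨_, hbe⟩ := hb
    rw [mem_sCells_nil] at hc hc'
    simp only at hae hbe
    split_ifs at hae hbe <;> omega
  · intro i j hc hc' a ha b hb
    rw [mem_TminQ] at ha hb
    obtain ⟨_, hae⟩ := ha
    obtain ⟨_, hbe⟩ := hb
    rw [mem_sCells_nil] at hc hc'
    simp only at hae hbe
    split_ifs at hae hbe <;> omega
  · intro a hpar i i' j ha ha'
    rw [mem_TminQ] at ha ha'
    obtain ⟨hc, hae⟩ := ha
    obtain ⟨hc', hae'⟩ := ha'
    rw [mem_sCells_nil] at hc hc'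
    simp only at hae hae'
    split_ifs at hae hae' <;> omega
  · intro a hpar i j j' ha ha'
    rw [mem_TminQ] at ha ha'
    obtain ⟨hc, hae⟩ := ha
    obtain ⟨hc', hae'⟩ := ha'
    rw [mem_sCells_nil] at hc hc'
    simp only at hae hae'
    split_ifs at hae hae' <;> omega

/-- `T_Q` (primed `i'` on the diagonal, `i` off the diagonal) is
the unique minimizer of the total entry sum over `SSVT_Q(λ,n)`. -/
theorem TminQ_unique_minimizer (lam : List ℕ) (n : ℕ)
    (h : IsStrictPartition lam) (hn : lam.length ≤ n) :
    IsSSVTQ lam [] n (TminQ lam) ∧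
    ∀ T, IsSSVTQ lam [] n T → T ≠ TminQ lam →
      entrySum lam [] (TminQ lam) < entrySum lam [] T := by
  refine ⟨TminQ_isSSVTQ lam n hn, ?_⟩
  intro T hT hne
  obtain ⟨c, hc⟩ : ∃ c, T c ≠ TminQ lam c := Function.ne_iff.mp hne
  have hcc : c ∈ sCells lam [] := by
    by_contra hnc
    apply hc
    rw [hT.support c hnc]
    unfold TminQ
    rw [if_neg hnc]
  -- per-cell comparison
  have key : ∀ d ∈ sCells lam [],
      (∑ a ∈ TminQ lam d, (a : ℚ) / 2) ≤ ∑ a ∈ T d, (a : ℚ) / 2 ∧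
      (T d ≠ TminQ lam d → (∑ a ∈ TminQ lam d, (a : ℚ) / 2) < ∑ a ∈ T d, (a : ℚ) / 2) := by
    intro d hd
    set b : ℕ := if d.1 = d.2 then 2 * d.1 - 1 else 2 * d.1 with hbdef
    have hd' := hd
    rw [show d = (d.1, d.2) from rfl, mem_sCells_nil] at hd'
    have hTm : TminQ lam d = {b} := by
      ext a
      rw [mem_TminQ]
      simp [hd, hbdef]
    have hb1 : 1 ≤ b := by rw [hbdef]; split_ifs <;> omega
    have hbd : ∀ a ∈ T d, b ≤ a := by
      intro a ha
      exact minBound h hT d.1 d.2 (by rwa [show (d.1, d.2) = d from rfl]) a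
        (by rwa [show (d.1, d.2) = d from rfl])
    have hlo := sum_lower (T d) (hT.cellNonempty d hd) b hb1 hbd
    have hsum : (∑ a ∈ T d, (a : ℚ) / 2) = ((∑ a ∈ T d, a : ℕ) : ℚ) / 2 := by
      rw [← Finset.sum_div]
      push_cast
      rfl
    have hmsum : (∑ a ∈ TminQ lam d, (a : ℚ) / 2) = (b : ℚ) / 2 := by
      rw [hTm, Finset.sum_singleton]
    constructor
    · rw [hsum, hmsum]
      have : (b : ℚ) ≤ ((∑ a ∈ T d, a : ℕ) : ℚ) := by exact_mod_cast hlo.1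
      linarith
    · intro hdne
      rw [hsum, hmsum]
      have hs : b < ∑ a ∈ T d, a := hlo.2 (by rw [← hTm]; exact hdne)
      have : (b : ℚ) < ((∑ a ∈ T d, a : ℕ) : ℚ) := by exact_mod_cast hs
      linarith
  unfold entrySum
  exact Finset.sum_lt_sum (fun d hd => (key d hd).1) ⟨c, hcc, (key c hcc).2 hc⟩
end

section
/- With GQ_λ(x|β) := Σ_{T ∈ SSVT_Q(λ,n)} β^{|T|-|λ|} x^{ω(T)}, one has GQ_λ(β,...,β | -β^{-1}) = β^{|λ|}, equivalently Σ_{T ∈ SSVT_Q(λ,n)} (-1)^{|T|-|λ|} = 1. -/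
open Finset

namespace GQ

/-! ### Basic lemmas about strict partitions and shifted cells -/

lemma getD_le_max (lam : List ℕ) (k : ℕ) : lam.getD k 0 ≤ lam.foldr max 0 := by
  induction lam generalizing k with
  | nil => simp
  | cons a l ih =>
    cases k with
    | zero => simp [List.getD]
    | succ k => simpa using le_trans (ih k) (le_max_right _ _)

lemma getD_pos {lam : List ℕ} (h : IsStrictPartition lam) {k : ℕ} (hk : k < lam.length) :
    0 < lam.getD k 0 := by
  rw [List.getD_eq_getElem _ _ hk]
  exact h.2 _ (List.getElem_mem _)

lemma getD_step {lam : List ℕ} (h : IsStrictPartition lam) {k : ℕ} (hk : k + 1 < lam.length) :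
    lam.getD (k+1) 0 < lam.getD k 0 := by
  rw [List.getD_eq_getElem _ _ hk, List.getD_eq_getElem _ _ (by omega)]
  exact List.isChain_iff_getElem.mp h.1 k (by omega)

lemma getD_add_mono {lam : List ℕ} (h : IsStrictPartition lam) {k k' : ℕ}
    (hkk : k ≤ k') (hk' : k' < lam.length) :
    lam.getD k' 0 + k' ≤ lam.getD k 0 + k := by
  induction k' with
  | zero =>
    obtain rfl : k = 0 := Nat.le_zero.mp hkk
    omega
  | succ m ih =>
    rcases Nat.eq_or_lt_of_le hkk with rfl | hlt
    · omega
    · have h1 := getD_step h hk'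
      have h2 := ih (by omega) (by omega)
      omega

lemma mem_sCells_nil {lam : List ℕ} (h : IsStrictPartition lam) {i j : ℕ} :
    (i, j) ∈ sCells lam [] ↔ 1 ≤ i ∧ i ≤ lam.length ∧ i ≤ j ∧ j < lam.getD (i-1) 0 + i := by
  simp only [sCells, Finset.mem_filter, Finset.mem_product, Finset.mem_range]
  constructor
  · rintro ⟨⟨h1, h2⟩, h3, h4, h5, h6⟩
    simp only [List.getD_nil] at h5
    refine ⟨h3, h4, by omega, ?_⟩
    have : 0 < lam.getD (i-1) 0 := getD_pos h (by omega)
    omega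
  · rintro ⟨h1, h2, h3, h4⟩
    have hm := getD_le_max lam (i-1)
    simp only [List.getD_nil]
    exact ⟨⟨by omega, by omega⟩, h1, h2, by omega, by omega⟩

lemma sum_getD (l : List ℕ) : ∑ k ∈ Finset.range l.length, l.getD k 0 = l.sum := by
  induction l with
  | nil => simp
  | cons a t ih =>
    simp only [List.length_cons, Finset.sum_range_succ']
    simp only [List.getD_cons_succ, List.getD_cons_zero, List.sum_cons, ih]
    omega

lemma sCells_nil_eq {lam : List ℕ} (h : IsStrictPartition lam) :
    sCells lam [] = (Finset.range lam.length).biUnion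
      (fun k => {k+1} ×ˢ Finset.Ico (k+1) (lam.getD k 0 + (k+1))) := by
  ext ⟨i, j⟩
  simp only [mem_sCells_nil h, Finset.mem_biUnion, Finset.mem_range, Finset.mem_product,
    Finset.mem_singleton, Finset.mem_Ico]
  constructor
  · rintro ⟨h1, h2, h3, h4⟩
    exact ⟨i - 1, by omega, by omega, by omega, by omega⟩
  · rintro ⟨k, hk, rfl, h3, h4⟩
    refine ⟨by omega, by omega, h3, by simpa using h4⟩

lemma card_sCells_nil {lam : List ℕ} (h : IsStrictPartition lam) :
    (sCells lam []).card = lam.sum := by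
  rw [sCells_nil_eq h, Finset.card_biUnion]
  · rw [← sum_getD lam]
    refine Finset.sum_congr rfl fun k _ => ?_
    rw [Finset.card_product, Finset.card_singleton, Nat.card_Ico]
    omega
  · intro a _ b _ hab
    simp only [Finset.disjoint_left, Finset.mem_product, Finset.mem_singleton]
    rintro ⟨x, y⟩ ⟨hx, -⟩ ⟨hx', -⟩
    omega

/-! ### The minimal tableau -/

lemma TminQ_apply {lam : List ℕ} {c : ℕ × ℕ} (hc : c ∈ sCells lam []) :
    TminQ lam c = if c.1 = c.2 then {2 * c.1 - 1} else {2 * c.1} := by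
  simp [TminQ, hc]

lemma TminQ_mem_le {lam : List ℕ} {i j : ℕ}
    (hc : (i, j) ∈ sCells lam []) {a : ℕ} (ha : a ∈ TminQ lam (i, j)) :
    (a = 2 * i - 1 ∨ a = 2 * i) ∧ 2 * i - 1 ≤ a := by
  rw [TminQ_apply hc] at ha
  split_ifs at ha <;> simp only [Finset.mem_singleton] at ha <;> omega

lemma TminQ_support {lam : List ℕ} {c : ℕ × ℕ} (hc : c ∉ sCells lam []) :
    TminQ lam c = ∅ := by simp [TminQ, hc]

lemma TminQ_isSSVTQ {lam : List ℕ} {n : ℕ} (h : IsStrictPartition lam)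
    (hn : lam.length ≤ n) : IsSSVTQ lam [] n (TminQ lam) := by
  constructor
  · exact fun c hc => TminQ_support hc
  · intro c hc
    rw [TminQ_apply hc]
    split_ifs <;> simp
  · rintro ⟨i, j⟩ a ha
    by_cases hc : (i, j) ∈ sCells lam []
    · obtain ⟨h1, -⟩ := TminQ_mem_le hc ha
      have hc' := (mem_sCells_nil h).mp hc
      rcases h1 with rfl | rfl <;> omega
    · simp [TminQ_support hc] at ha
  · intro i j h1 h2 a ha b hb
    have hi := (mem_sCells_nil h).mp h1
    rw [TminQ_apply h2, if_neg (show ¬((i, j+1).1 = (i, j+1).2) by simp; omega),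
      Finset.mem_singleton] at hb
    obtain ⟨ha1, -⟩ := TminQ_mem_le h1 ha
    rcases ha1 with rfl | rfl <;> omega
  · intro i j h1 h2 a ha b hb
    have hi := (mem_sCells_nil h).mp h1
    obtain ⟨ha1, -⟩ := TminQ_mem_le h1 ha
    obtain ⟨hb1, hb2⟩ := TminQ_mem_le h2 hb
    rcases ha1 with rfl | rfl <;> omega
  · intro a hpar i i' j ha ha'
    have hiS : (i, j) ∈ sCells lam [] := by
      by_contra hc; simp [TminQ_support hc] at ha
    have hiS' : (i', j) ∈ sCells lam [] := by
      by_contra hc; simp [TminQ_support hc] at ha'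
    have h1 := (mem_sCells_nil h).mp hiS
    have h1' := (mem_sCells_nil h).mp hiS'
    obtain ⟨hv, -⟩ := TminQ_mem_le hiS ha
    obtain ⟨hv', -⟩ := TminQ_mem_le hiS' ha'
    rcases hv with rfl | rfl <;> rcases hv' with h2 | h2 <;> omega
  · intro a hpar i j j' ha ha'
    have hiS : (i, j) ∈ sCells lam [] := by
      by_contra hc; simp [TminQ_support hc] at ha
    have hiS' : (i, j') ∈ sCells lam [] := by
      by_contra hc; simp [TminQ_support hc] at ha'
    have key : ∀ j0, (i, j0) ∈ sCells lam [] → a ∈ TminQ lam (i, j0) → j0 = i := by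
      intro j0 hS0 ha0
      rw [TminQ_apply hS0] at ha0
      by_contra hne
      rw [if_neg (show ¬((i, j0).1 = (i, j0).2) by simp; omega),
        Finset.mem_singleton] at ha0
      omega
    rw [key j hiS ha, key j' hiS' ha']

end GQ
namespace GQ

/-! ### The toggle involution -/

def M (lam : List ℕ) : ℕ := lam.length + lam.foldr max 0 + 1

lemma M_pos (lam : List ℕ) : 0 < M lam := by simp [M]

lemma snd_lt_M {lam : List ℕ} {c : ℕ × ℕ} (hc : c ∈ sCells lam []) : c.2 < M lam := by
  simp only [sCells, Finset.mem_filter, Finset.mem_product, Finset.mem_range] at hc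
  exact hc.1.2

def key (lam : List ℕ) (c : ℕ × ℕ) : ℕ := c.1 * M lam + c.2

lemma key_lt {lam : List ℕ} {c c' : ℕ × ℕ} (hc : c.2 < M lam)
    (h : c.1 < c'.1 ∨ (c.1 = c'.1 ∧ c.2 < c'.2)) : key lam c < key lam c' := by
  rcases h with h | ⟨h1, h2⟩
  · have h3 : key lam c < (c.1 + 1) * M lam := by
      simp only [key, Nat.succ_mul]; omega
    have h4 : (c.1 + 1) * M lam ≤ c'.1 * M lam := Nat.mul_le_mul_right _ h
    have h5 : c'.1 * M lam ≤ key lam c' := Nat.le_add_right _ _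
    omega
  · simp only [key, h1]; omega

/-- If `key c' < key c` for cells, `c'` comes strictly earlier in row-major order. -/
lemma earlier_of_key_lt {lam : List ℕ} {c c' : ℕ × ℕ} (hc : c.2 < M lam)
    (hk : key lam c' < key lam c) : c'.1 < c.1 ∨ (c'.1 = c.1 ∧ c'.2 < c.2) := by
  by_contra hcon
  push_neg at hcon
  rcases Nat.lt_trichotomy c'.1 c.1 with h | h | h
  · omega
  · have := hcon.2 h
    rcases Nat.lt_or_ge c.2 c'.2 with h2 | h2
    · exact absurd (key_lt hc (Or.inr ⟨h.symm, h2⟩)) (by omega)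
    · have : c.2 = c'.2 := by omega
      have : key lam c = key lam c' := by simp [key, h, this]
      omega
  · exact absurd (key_lt hc (Or.inl h)) (by omega)

def togSet (lam : List ℕ) (T : ℕ × ℕ → Finset ℕ) : Finset (ℕ × ℕ) :=
  (sCells lam []).filter (fun c => T c ≠ TminQ lam c)

def pick (lam : List ℕ) (T : ℕ × ℕ → Finset ℕ) : ℕ × ℕ :=
  if h : (togSet lam T).Nonempty then
    (((togSet lam T).image (key lam)).min' (h.image _) / M lam,
     ((togSet lam T).image (key lam)).min' (h.image _) % M lam)
  else (0, 0)

lemma togSet_nonempty {lam : List ℕ} {n : ℕ} {T : ℕ × ℕ → Finset ℕ}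
    (hT : IsSSVTQ lam [] n T) (hne : T ≠ TminQ lam) : (togSet lam T).Nonempty := by
  have : ∃ d, T d ≠ TminQ lam d := by
    by_contra hcon
    push_neg at hcon
    exact hne (funext hcon)
  obtain ⟨d, hd⟩ := this
  refine ⟨d, Finset.mem_filter.mpr ⟨?_, hd⟩⟩
  by_contra hd'
  exact hd ((hT.support d hd').trans (TminQ_support hd').symm)

lemma pick_spec {lam : List ℕ} {T : ℕ × ℕ → Finset ℕ} (hne : (togSet lam T).Nonempty) :
    pick lam T ∈ togSet lam T ∧
      ∀ c' ∈ togSet lam T, key lam (pick lam T) ≤ key lam c' := by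
  rw [pick, dif_pos hne]
  set k := ((togSet lam T).image (key lam)).min' (hne.image _) with hk
  have hkmem : k ∈ (togSet lam T).image (key lam) := Finset.min'_mem _ _
  obtain ⟨c, hc, hck⟩ := Finset.mem_image.mp hkmem
  have hc2 : c.2 < M lam := snd_lt_M (Finset.mem_filter.mp hc).1
  have hM := M_pos lam
  have hdiv : k / M lam = c.1 := by
    rw [← hck]; simp only [key]
    rw [mul_comm, Nat.mul_add_div hM, Nat.div_eq_of_lt hc2]
    omega
  have hmod : k % M lam = c.2 := by
    rw [← hck]; simp only [key]
    rw [mul_comm, Nat.mul_add_mod, Nat.mod_eq_of_lt hc2]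
  have hpc : (k / M lam, k % M lam) = c := by
    rw [hdiv, hmod]
  rw [hpc]
  refine ⟨hc, fun c' hc' => ?_⟩
  rw [hck]
  exact Finset.min'_le _ _ (Finset.mem_image_of_mem _ hc')

end GQ
namespace GQ
lemma pick_congr {lam : List ℕ} {T T' : ℕ × ℕ → Finset ℕ}
    (hs : togSet lam T = togSet lam T') : pick lam T = pick lam T' := by
  unfold pick
  by_cases hne : (togSet lam T).Nonempty
  · have hne' : (togSet lam T').Nonempty := hs ▸ hne
    rw [dif_pos hne, dif_pos hne']
    have himg : (togSet lam T).image (key lam) = (togSet lam T').image (key lam) := by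
      rw [hs]
    simp only [himg]
  · have hne' : ¬ (togSet lam T').Nonempty := hs ▸ hne
    rw [dif_neg hne, dif_neg hne']
end GQ
namespace GQ

def tlet (c : ℕ × ℕ) : ℕ := if c.1 = c.2 then 2 * c.1 - 1 else 2 * c.1

noncomputable def tog (lam : List ℕ) (T : ℕ × ℕ → Finset ℕ) : ℕ × ℕ → Finset ℕ :=
  fun d => if d = pick lam T then
    (if tlet d ∈ T d then (T d).erase (tlet d) else insert (tlet d) (T d))
  else T d

lemma row_chain {lam : List ℕ} {n : ℕ} {T : ℕ × ℕ → Finset ℕ}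
    (h : IsStrictPartition lam) (hT : IsSSVTQ lam [] n T) {i : ℕ} :
    ∀ j2 j1, j1 < j2 → (i, j1) ∈ sCells lam [] → (i, j2) ∈ sCells lam [] →
      ∀ a ∈ T (i, j1), ∀ b ∈ T (i, j2), a ≤ b := by
  intro j2
  induction j2 with
  | zero => omega
  | succ m ih =>
    intro j1 hlt h1 h2 a ha b hb
    rcases Nat.lt_succ_iff_lt_or_eq.mp hlt with hlt' | rfl
    · have hmS : (i, m) ∈ sCells lam [] := by
        rw [mem_sCells_nil h] at h1 h2 ⊢
        omega
      obtain ⟨x, hx⟩ := hT.cellNonempty _ hmS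
      exact le_trans (ih j1 hlt' h1 hmS a ha x hx) (hT.rowWeak i m hmS h2 x hx b hb)
    · exact hT.rowWeak i j1 h1 h2 a ha b hb

lemma col_chain {lam : List ℕ} {n : ℕ} {T : ℕ × ℕ → Finset ℕ}
    (h : IsStrictPartition lam) (hT : IsSSVTQ lam [] n T) {j : ℕ} :
    ∀ i2 i1, i1 < i2 → (i1, j) ∈ sCells lam [] → (i2, j) ∈ sCells lam [] →
      ∀ a ∈ T (i1, j), ∀ b ∈ T (i2, j), a ≤ b := by
  intro i2
  induction i2 with
  | zero => omega
  | succ m ih =>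
    intro i1 hlt h1 h2 a ha b hb
    rcases Nat.lt_succ_iff_lt_or_eq.mp hlt with hlt' | rfl
    · have hmono : lam.getD (m - 1) 0 + (m - 1) ≥ lam.getD ((m+1) - 1) 0 + ((m+1) - 1) := by
        apply getD_add_mono h (by omega)
        have := (mem_sCells_nil h).mp h2
        omega
      have hmS : (m, j) ∈ sCells lam [] := by
        rw [mem_sCells_nil h] at h1 h2 ⊢
        omega
      obtain ⟨x, hx⟩ := hT.cellNonempty _ hmS
      exact le_trans (ih i1 hlt' h1 hmS a ha x hx) (hT.colWeak m j hmS h2 x hx b hb)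
    · exact hT.colWeak i1 j h1 h2 a ha b hb

/-- membership in a cell forces the cell to be in the diagram -/
lemma mem_cell {lam mu : List ℕ} {n : ℕ} {T : ℕ × ℕ → Finset ℕ}
    (hT : IsSSVTQ lam mu n T) {c : ℕ × ℕ} {a : ℕ} (ha : a ∈ T c) : c ∈ sCells lam mu := by
  by_contra hc
  rw [hT.support c hc] at ha
  exact absurd ha (Finset.notMem_empty a)

end GQ
namespace GQ
lemma tog_apply (lam : List ℕ) (T : ℕ × ℕ → Finset ℕ) (d : ℕ × ℕ) :
    tog lam T d = if d = pick lam T then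
      (if tlet d ∈ T d then (T d).erase (tlet d) else insert (tlet d) (T d))
    else T d := rfl
end GQ
namespace GQ

variable {lam : List ℕ} {n : ℕ} {T : ℕ × ℕ → Finset ℕ} {i j : ℕ}

lemma pick_facts (h : IsStrictPartition lam) (hT : IsSSVTQ lam [] n T)
    (hne : T ≠ TminQ lam) :
    pick lam T ∈ sCells lam [] ∧ T (pick lam T) ≠ TminQ lam (pick lam T) ∧
    ∀ c' ∈ sCells lam [],
      (c'.1 < (pick lam T).1 ∨ (c'.1 = (pick lam T).1 ∧ c'.2 < (pick lam T).2)) →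
      T c' = TminQ lam c' := by
  have hne' := togSet_nonempty hT hne
  obtain ⟨hmem, hmin⟩ := pick_spec hne'
  obtain ⟨h1, h2⟩ := Finset.mem_filter.mp hmem
  refine ⟨h1, h2, fun c' hc' hlt => ?_⟩
  by_contra hcon
  have hmem' : c' ∈ togSet lam T := Finset.mem_filter.mpr ⟨hc', hcon⟩
  have h3 := hmin c' hmem'
  have h4 := key_lt (snd_lt_M hc') hlt
  omega

/-- Lower bound on the first differing diagonal cell. -/
lemma lb_diag (h : IsStrictPartition lam) (hT : IsSSVTQ lam [] n T)
    (hcS : (i, i) ∈ sCells lam [])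
    (hearly : ∀ i' j', (i', j') ∈ sCells lam [] →
      (i' < i ∨ (i' = i ∧ j' < i)) → T (i', j') = TminQ lam (i', j')) :
    ∀ a ∈ T (i, i), 2 * i - 1 ≤ a := by
  intro a ha
  have h1 := (mem_sCells_nil h).mp hcS
  have ha1 := (hT.inRange _ a ha).1
  rcases Nat.lt_or_ge i 2 with hi2 | hi2
  · omega
  · have huS : (i - 1, i) ∈ sCells lam [] := by
      rw [mem_sCells_nil h]
      have hstep : lam.getD (i-1) 0 < lam.getD (i-2) 0 := by
        have := getD_step h (k := i - 2) (by omega)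
        simpa [show i - 2 + 1 = i - 1 by omega] using this
      have hpos : 0 < lam.getD (i-1) 0 := getD_pos h (by omega)
      refine ⟨by omega, by omega, by omega, ?_⟩
      rw [show (i - 1) - 1 = i - 2 by omega]
      omega
    have hu := hearly (i-1) i huS (Or.inl (by omega))
    rw [TminQ_apply huS, if_neg (show ¬((i-1, i).1 = (i-1, i).2) by simp; omega)] at hu
    have hcol := hT.colWeak (i-1) i huS (by rwa [show i - 1 + 1 = i by omega])
        (2*(i-1)) (by rw [hu]; simp) a (by rw [show i - 1 + 1 = i by omega]; exact ha)
    by_contra hlt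
    have haeq : a = 2*(i-1) := by omega
    have := hT.colOnce a (by omega) (i-1) i i (by rw [haeq, hu]; simp) ha
    omega

/-- Lower bound on the first differing off-diagonal cell. -/
lemma lb_off (h : IsStrictPartition lam) (hT : IsSSVTQ lam [] n T)
    (hcS : (i, j) ∈ sCells lam []) (hij : i < j)
    (hearly : ∀ i' j', (i', j') ∈ sCells lam [] →
      (i' < i ∨ (i' = i ∧ j' < j)) → T (i', j') = TminQ lam (i', j')) :
    ∀ a ∈ T (i, j), 2 * i ≤ a := by
  intro a ha
  have h1 := (mem_sCells_nil h).mp hcS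
  have hwS : (i, j - 1) ∈ sCells lam [] := by
    rw [mem_sCells_nil h]
    omega
  have hw := hearly i (j-1) hwS (Or.inr ⟨rfl, by omega⟩)
  rw [TminQ_apply hwS] at hw
  have hS2 : (i, j - 1 + 1) ∈ sCells lam [] := by rwa [show j - 1 + 1 = j by omega]
  by_cases hd : i = j - 1
  · rw [if_pos (show (i, j-1).1 = (i, j-1).2 by simpa using hd)] at hw
    have hrow := hT.rowWeak i (j-1) hwS hS2 (2*i-1) (by rw [hw]; simp) a
      (by rw [show j - 1 + 1 = j by omega]; exact ha)
    by_contra hlt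
    have haeq : a = 2*i - 1 := by omega
    have := hT.rowOnce a (by omega) i (j-1) j (by rw [haeq, hw]; simp)
      ha
    omega
  · rw [if_neg (show ¬((i, j-1).1 = (i, j-1).2) by simpa using hd)] at hw
    have hrow := hT.rowWeak i (j-1) hwS hS2 (2*i) (by rw [hw]; simp) a
      (by rw [show j - 1 + 1 = j by omega]; exact ha)
    omega

/-- The primed letter `i'` can occur in row `i` only in the toggled diagonal cell. -/
lemma odd_unique (h : IsStrictPartition lam) (hT : IsSSVTQ lam [] n T)
    (hcS : (i, i) ∈ sCells lam []) (hcne : T (i, i) ≠ TminQ lam (i, i))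
    (hlb : ∀ a ∈ T (i, i), 2 * i - 1 ≤ a) :
    ∀ j', 2 * i - 1 ∈ T (i, j') → j' = i := by
  intro j' hj'
  by_contra hne'
  have hS' : (i, j') ∈ sCells lam [] := mem_cell hT hj'
  have hgt : i < j' := by
    have := (mem_sCells_nil h).mp hS'
    omega
  have hub : ∀ b ∈ T (i, i), b ≤ 2*i - 1 :=
    fun b hb => row_chain h hT j' i hgt hcS hS' b hb _ hj'
  have hsub : T (i, i) ⊆ {2*i - 1} := by
    intro b hb
    rw [Finset.mem_singleton]
    exact le_antisymm (hub b hb) (hlb b hb)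
  have hnonempty := hT.cellNonempty _ hcS
  have heq : T (i, i) = {2*i - 1} := by
    rcases Finset.subset_singleton_iff.mp hsub with he | he
    · rw [he] at hnonempty
      exact absurd hnonempty (by simp)
    · exact he
  apply hcne
  rw [heq, TminQ_apply hcS, if_pos rfl]

/-- The letter `i` can occur in column `j` only in the toggled cell. -/
lemma even_unique (h : IsStrictPartition lam) (hT : IsSSVTQ lam [] n T)
    (hcS : (i, j) ∈ sCells lam []) (hij : i < j) (hcne : T (i, j) ≠ TminQ lam (i, j))
    (hlb : ∀ a ∈ T (i, j), 2 * i ≤ a)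
    (hearly : ∀ i' j', (i', j') ∈ sCells lam [] →
      (i' < i ∨ (i' = i ∧ j' < j)) → T (i', j') = TminQ lam (i', j')) :
    ∀ i', 2 * i ∈ T (i', j) → i' = i := by
  intro i' hj'
  by_contra hne'
  have hS' : (i', j) ∈ sCells lam [] := mem_cell hT hj'
  rcases Nat.lt_or_ge i' i with hlt | hge
  · have he := hearly i' j hS' (Or.inl hlt)
    rw [he] at hj'
    obtain ⟨hv, -⟩ := TminQ_mem_le hS' hj'
    have := (mem_sCells_nil h).mp hS'
    rcases hv with h2 | h2 <;> omega
  · have hgt : i < i' := by omega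
    have hub : ∀ b ∈ T (i, j), b ≤ 2*i :=
      fun b hb => col_chain h hT i' i hgt hcS hS' b hb _ hj'
    have hsub : T (i, j) ⊆ {2*i} := by
      intro b hb
      rw [Finset.mem_singleton]
      exact le_antisymm (hub b hb) (hlb b hb)
    have hnonempty := hT.cellNonempty _ hcS
    have heq : T (i, j) = {2*i} := by
      rcases Finset.subset_singleton_iff.mp hsub with he | he
      · rw [he] at hnonempty
        exact absurd hnonempty (by simp)
      · exact he
    apply hcne
    rw [heq, TminQ_apply hcS, if_neg (show ¬((i, j).1 = (i, j).2) by simp; omega)]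

end GQ
namespace GQ
variable {lam : List ℕ} {n : ℕ} {T : ℕ × ℕ → Finset ℕ} {i j : ℕ}

lemma lb_diag' (h : IsStrictPartition lam) (hT : IsSSVTQ lam [] n T)
    (hcS : (i, j) ∈ sCells lam []) (hd : i = j)
    (hearly : ∀ i' j', (i', j') ∈ sCells lam [] →
      (i' < i ∨ (i' = i ∧ j' < j)) → T (i', j') = TminQ lam (i', j')) :
    ∀ a ∈ T (i, j), 2 * i - 1 ≤ a := by
  subst hd
  exact lb_diag h hT hcS hearly

lemma odd_unique' (h : IsStrictPartition lam) (hT : IsSSVTQ lam [] n T)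
    (hcS : (i, j) ∈ sCells lam []) (hd : i = j)
    (hcne : T (i, j) ≠ TminQ lam (i, j))
    (hlb : ∀ a ∈ T (i, j), 2 * i - 1 ≤ a) :
    ∀ j', 2 * i - 1 ∈ T (i, j') → j' = j := by
  subst hd
  exact odd_unique h hT hcS hcne hlb

end GQ
namespace GQ

set_option maxHeartbeats 1000000 in
theorem tog_good {lam : List ℕ} {n : ℕ} {T : ℕ × ℕ → Finset ℕ}
    (h : IsStrictPartition lam) (hn : lam.length ≤ n)
    (hT : IsSSVTQ lam [] n T) (hne : T ≠ TminQ lam) :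
    IsSSVTQ lam [] n (tog lam T) ∧ tog lam T ≠ TminQ lam ∧
      tog lam (tog lam T) = T ∧
      (tabSize lam [] (tog lam T) = tabSize lam [] T + 1 ∨
        tabSize lam [] T = tabSize lam [] (tog lam T) + 1) := by
  classical
  obtain ⟨hcS0, hcne0, hearly0⟩ := pick_facts h hT hne
  rcases hpk : pick lam T with ⟨i, j⟩
  rw [hpk] at hcS0 hcne0 hearly0
  set v := tlet (i, j) with hvdef
  have hfacts := (mem_sCells_nil h).mp hcS0
  have hearly : ∀ i' j', (i', j') ∈ sCells lam [] →
      (i' < i ∨ (i' = i ∧ j' < j)) → T (i', j') = TminQ lam (i', j') := by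
    intro i' j' hS hlt
    exact hearly0 (i', j') hS (by simpa using hlt)
  have hij : i ≤ j := hfacts.2.2.1
  have hv : v = if i = j then 2*i - 1 else 2*i := by simp [hvdef, tlet]
  have hv1 : 2*i - 1 ≤ v ∧ v ≤ 2*i := by rw [hv]; split_ifs <;> omega
  have hlbv : ∀ a ∈ T (i, j), v ≤ a := by
    intro a ha
    rcases Nat.eq_or_lt_of_le hij with heq | hlt
    · rw [hv, if_pos heq]
      exact lb_diag' h hT hcS0 heq hearly a ha
    · rw [hv, if_neg (by omega)]
      exact lb_off h hT hcS0 hlt hearly a ha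
  have hTminc : TminQ lam (i, j) = {v} := by
    rw [TminQ_apply hcS0, hv]
    by_cases hd : i = j <;> simp [hd]
  have hTogc : tog lam T (i, j) =
      if v ∈ T (i, j) then (T (i, j)).erase v else insert v (T (i, j)) := by
    rw [tog_apply, hpk, if_pos rfl, ← hvdef]
  have hTogne : ∀ d, d ≠ (i, j) → tog lam T d = T d := by
    intro d hd
    rw [tog_apply, hpk, if_neg hd]
  have hmemtog : ∀ d a, a ∈ tog lam T d ↔
      ((a ∈ T d ∧ ¬(d = (i, j) ∧ a = v ∧ v ∈ T (i, j))) ∨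
        (d = (i, j) ∧ a = v ∧ v ∉ T (i, j))) := by
    intro d a
    by_cases hd : d = (i, j)
    · subst hd
      rw [hTogc]
      by_cases hvm : v ∈ T (i, j)
      · rw [if_pos hvm]
        simp only [Finset.mem_erase]
        tauto
      · rw [if_neg hvm]
        simp only [Finset.mem_insert]
        tauto
    · rw [hTogne d hd]
      simp [hd]
  have hvbound : v ≤ 2*n := by
    have := hfacts.2.1
    omega
  obtain ⟨a₀, ha₀⟩ := hT.cellNonempty _ hcS0
  have ha₀v : v ≤ a₀ := hlbv a₀ ha₀
  have hQ : IsSSVTQ lam [] n (tog lam T) := by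
    constructor
    · intro d hd
      rw [hTogne d (by rintro rfl; exact hd hcS0)]
      exact hT.support d hd
    · intro d hd
      by_cases hdc : d = (i, j)
      · subst hdc
        rw [hTogc]
        by_cases hvm : v ∈ T (i, j)
        · rw [if_pos hvm]
          have hex : ∃ b ∈ T (i, j), b ≠ v := by
            by_contra hcon
            push_neg at hcon
            apply hcne0
            rw [hTminc]
            exact Finset.eq_singleton_iff_unique_mem.mpr ⟨hvm, hcon⟩
          obtain ⟨b, hb, hbv⟩ := hex
          exact ⟨b, Finset.mem_erase.mpr ⟨hbv, hb⟩⟩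
        · rw [if_neg hvm]
          exact ⟨v, Finset.mem_insert_self _ _⟩
      · rw [hTogne d hdc]
        exact hT.cellNonempty d hd
    · intro d a ha
      rw [hmemtog] at ha
      rcases ha with ⟨ha, -⟩ | ⟨-, rfl, -⟩
      · exact hT.inRange d a ha
      · have := hfacts.1
        exact ⟨by omega, hvbound⟩
    · -- rowWeak
      intro i₀ j₀ hS1 hS2 a ha b hb
      rw [hmemtog] at ha hb
      rcases ha with ⟨ha, -⟩ | ⟨hd1, rfl, -⟩
      · rcases hb with ⟨hb, -⟩ | ⟨hd2, rfl, -⟩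
        · exact hT.rowWeak _ _ hS1 hS2 a ha b hb
        · have he1 : i₀ = i := congrArg Prod.fst hd2
          have he2 : j₀ + 1 = j := congrArg Prod.snd hd2
          have hmm := hearly i₀ j₀ hS1 (Or.inr ⟨he1, by omega⟩)
          rw [hmm] at ha
          obtain ⟨hv2, -⟩ := TminQ_mem_le hS1 ha
          have hfS1 := (mem_sCells_nil h).mp hS1
          rw [hv, if_neg (show ¬ i = j by omega)]
          rcases hv2 with h2 | h2 <;> omega
      · have he1 : i₀ = i := congrArg Prod.fst hd1
        have he2 : j₀ = j := congrArg Prod.snd hd1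
        rcases hb with ⟨hb, -⟩ | ⟨hd2, rfl, -⟩
        · refine le_trans ha₀v (hT.rowWeak i j hcS0 ?_ a₀ ha₀ b ?_)
          · rw [← he1, ← he2]; exact hS2
          · rw [← he1, ← he2]; exact hb
        · have he3 : j₀ + 1 = j := congrArg Prod.snd hd2
          omega
    · -- colWeak
      intro i₀ j₀ hS1 hS2 a ha b hb
      rw [hmemtog] at ha hb
      rcases ha with ⟨ha, -⟩ | ⟨hd1, rfl, -⟩
      · rcases hb with ⟨hb, -⟩ | ⟨hd2, rfl, -⟩
        · exact hT.colWeak _ _ hS1 hS2 a ha b hb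
        · have he1 : i₀ + 1 = i := congrArg Prod.fst hd2
          have he2 : j₀ = j := congrArg Prod.snd hd2
          have hmm := hearly i₀ j₀ hS1 (Or.inl (by omega))
          rw [hmm] at ha
          obtain ⟨hv2, -⟩ := TminQ_mem_le hS1 ha
          rcases hv2 with h2 | h2 <;> omega
      · have he1 : i₀ = i := congrArg Prod.fst hd1
        have he2 : j₀ = j := congrArg Prod.snd hd1
        rcases hb with ⟨hb, -⟩ | ⟨hd2, rfl, -⟩
        · refine le_trans ha₀v (hT.colWeak i j hcS0 ?_ a₀ ha₀ b ?_)
          · rw [← he1, ← he2]; exact hS2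
          · rw [← he1, ← he2]; exact hb
        · have he3 : i₀ + 1 = i := congrArg Prod.fst hd2
          omega
    · -- colOnce
      intro a hpar i₁ i₂ j₀ h1 h2
      rw [hmemtog] at h1 h2
      rcases h1 with ⟨h1, -⟩ | ⟨hd1, rfl, -⟩
      · rcases h2 with ⟨h2, -⟩ | ⟨hd2, rfl, -⟩
        · exact hT.colOnce a hpar _ _ _ h1 h2
        · have he1 : i₂ = i := congrArg Prod.fst hd2
          have he2 : j₀ = j := congrArg Prod.snd hd2
          have hine : ¬ i = j := by
            intro hh
            rw [hv, if_pos hh] at hpar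
            have := hfacts.1
            omega
          have hiv : v = 2*i := by rw [hv, if_neg hine]
          rw [he2, hiv] at h1
          have := even_unique h hT hcS0 (by omega) hcne0
            (by rw [← hiv]; exact hlbv) hearly i₁ h1
          omega
      · have he1 : i₁ = i := congrArg Prod.fst hd1
        have he2 : j₀ = j := congrArg Prod.snd hd1
        rcases h2 with ⟨h2, -⟩ | ⟨hd2, -, -⟩
        · have hine : ¬ i = j := by
            intro hh
            rw [hv, if_pos hh] at hpar
            have := hfacts.1
            omega
          have hiv : v = 2*i := by rw [hv, if_neg hine]
          rw [he2, hiv] at h2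
          have := even_unique h hT hcS0 (by omega) hcne0
            (by rw [← hiv]; exact hlbv) hearly i₂ h2
          omega
        · have he3 : i₂ = i := congrArg Prod.fst hd2
          omega
    · -- rowOnce
      intro a hpar i₁ j₁ j₂ h1 h2
      rw [hmemtog] at h1 h2
      rcases h1 with ⟨h1, -⟩ | ⟨hd1, rfl, -⟩
      · rcases h2 with ⟨h2, -⟩ | ⟨hd2, rfl, -⟩
        · exact hT.rowOnce a hpar _ _ _ h1 h2
        · have he1 : i₁ = i := congrArg Prod.fst hd2
          have he2 : j₂ = j := congrArg Prod.snd hd2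
          have hdiag : i = j := by
            by_contra hh
            rw [hv, if_neg hh] at hpar
            omega
          have hiv : v = 2*i - 1 := by rw [hv, if_pos hdiag]
          rw [he1, hiv] at h1
          have := odd_unique' h hT hcS0 hdiag hcne0
            (by rw [← hiv]; exact hlbv) j₁ h1
          omega
      · have he1 : i₁ = i := congrArg Prod.fst hd1
        have he2 : j₁ = j := congrArg Prod.snd hd1
        rcases h2 with ⟨h2, -⟩ | ⟨hd2, -, -⟩
        · have hdiag : i = j := by
            by_contra hh
            rw [hv, if_neg hh] at hpar
            omega
          have hiv : v = 2*i - 1 := by rw [hv, if_pos hdiag]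
          rw [he1, hiv] at h2
          have := odd_unique' h hT hcS0 hdiag hcne0
            (by rw [← hiv]; exact hlbv) j₂ h2
          omega
        · have he3 : j₂ = j := congrArg Prod.snd hd2
          omega
  have hQcne : tog lam T (i, j) ≠ TminQ lam (i, j) := by
    rw [hTminc, hTogc]
    by_cases hvm : v ∈ T (i, j)
    · rw [if_pos hvm]
      intro heq
      have hmv : v ∈ (T (i, j)).erase v := heq ▸ Finset.mem_singleton_self v
      exact (Finset.mem_erase.mp hmv).1 rfl
    · rw [if_neg hvm]
      intro heq
      have h1 : a₀ ∈ insert v (T (i, j)) := Finset.mem_insert_of_mem ha₀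
      rw [heq, Finset.mem_singleton] at h1
      exact hvm (h1 ▸ ha₀)
  have hQne : tog lam T ≠ TminQ lam := fun hh => hQcne (congrFun hh (i, j))
  have hsets : togSet lam (tog lam T) = togSet lam T := by
    unfold togSet
    ext d
    simp only [Finset.mem_filter]
    refine and_congr_right fun hdS => ?_
    by_cases hdc : d = (i, j)
    · subst hdc
      exact iff_of_true hQcne hcne0
    · rw [hTogne d hdc]
  have hpick2 : pick lam (tog lam T) = (i, j) := by
    rw [pick_congr hsets, hpk]
  have hinv : tog lam (tog lam T) = T := by
    funext d
    by_cases hdc : d = (i, j)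
    · subst hdc
      rw [tog_apply, hpick2, if_pos rfl, ← hvdef, hTogc]
      by_cases hvm : v ∈ T (i, j)
      · rw [if_pos hvm, if_neg (fun hh => (Finset.mem_erase.mp hh).1 rfl),
          Finset.insert_erase hvm]
      · rw [if_neg hvm, if_pos (Finset.mem_insert_self _ _), Finset.erase_insert hvm]
    · rw [tog_apply, hpick2, if_neg hdc, hTogne d hdc]
  have htab : tabSize lam [] (tog lam T) + (T (i, j)).card
      = tabSize lam [] T + (tog lam T (i, j)).card := by
    unfold tabSize
    rw [← Finset.sum_erase_add _ _ hcS0, ← Finset.sum_erase_add _ _ hcS0]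
    have hc : ∀ d ∈ (sCells lam []).erase (i, j), (tog lam T d).card = (T d).card := by
      intro d hd
      rw [hTogne d (Finset.ne_of_mem_erase hd)]
    rw [Finset.sum_congr rfl hc]
    omega
  have hcard : (tog lam T (i, j)).card = (T (i, j)).card + 1 ∨
      (T (i, j)).card = (tog lam T (i, j)).card + 1 := by
    rw [hTogc]
    by_cases hvm : v ∈ T (i, j)
    · right
      rw [if_pos hvm, Finset.card_erase_of_mem hvm]
      have h1 : 1 ≤ (T (i, j)).card := Finset.card_pos.mpr ⟨a₀, ha₀⟩
      omega
    · left
      rw [if_neg hvm, Finset.card_insert_of_notMem hvm]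
  refine ⟨hQ, hQne, hinv, ?_⟩
  rcases hcard with hc | hc
  · left; omega
  · right; omega

end GQ
namespace GQ

lemma ssvtq_finite (lam : List ℕ) (n : ℕ) :
    {T : ℕ × ℕ → Finset ℕ | IsSSVTQ lam [] n T}.Finite := by
  classical
  have hinj : Function.Injective
      (fun (T : {T : ℕ × ℕ → Finset ℕ // IsSSVTQ lam [] n T})
        (c : {c // c ∈ sCells lam []}) =>
        (⟨T.1 c.1, Finset.mem_powerset.mpr (fun a ha =>
          Finset.mem_Icc.mpr (T.2.inRange c.1 a ha))⟩ :
          {s // s ∈ (Finset.Icc 1 (2*n)).powerset})) := by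
    intro T1 T2 hEq
    apply Subtype.ext
    funext d
    by_cases hd : d ∈ sCells lam []
    · have h1 := congrFun hEq ⟨d, hd⟩
      simpa using congrArg Subtype.val h1
    · rw [T1.2.support d hd, T2.2.support d hd]
  have hfin : Finite {T : ℕ × ℕ → Finset ℕ // IsSSVTQ lam [] n T} :=
    Finite.of_injective _ hinj
  exact Set.finite_coe_iff.mp hfin

lemma weight_sum {lam : List ℕ} {n : ℕ} {T : ℕ × ℕ → Finset ℕ}
    (hT : IsSSVTQ lam [] n T) :
    ∑ k ∈ Finset.Icc 1 n, tabWeight lam [] T k = tabSize lam [] T := by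
  unfold tabWeight tabSize
  rw [Finset.sum_comm]
  refine Finset.sum_congr rfl fun c hc => ?_
  exact (Finset.card_eq_sum_card_fiberwise (fun a ha => Finset.mem_Icc.mpr (by
    have := hT.inRange c a ha
    omega))).symm

lemma tabSize_ge {lam : List ℕ} {n : ℕ} {T : ℕ × ℕ → Finset ℕ}
    (h : IsStrictPartition lam) (hT : IsSSVTQ lam [] n T) :
    lam.sum ≤ tabSize lam [] T := by
  unfold tabSize
  calc lam.sum = ∑ _c ∈ sCells lam [], 1 := by
        rw [Finset.sum_const, smul_eq_mul, mul_one, card_sCells_nil h]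
    _ ≤ ∑ c ∈ sCells lam [], (T c).card :=
        Finset.sum_le_sum fun c hc => Finset.card_pos.mpr (hT.cellNonempty c hc)

lemma tabSize_TminQ {lam : List ℕ} (h : IsStrictPartition lam) :
    tabSize lam [] (TminQ lam) = lam.sum := by
  unfold tabSize
  rw [← card_sCells_nil h, Finset.card_eq_sum_ones]
  refine Finset.sum_congr rfl fun c hc => ?_
  rw [TminQ_apply hc]
  split_ifs <;> simp

end GQ

/-- `GQ_λ(β,…,β | -β⁻¹) = β^{|λ|}`. -/
theorem gq_special_value (lam : List ℕ) (n : ℕ)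
    (h : IsStrictPartition lam) (hn : lam.length ≤ n) (β : ℚ) (hβ : β ≠ 0) :
    GQspec lam [] n (fun _ => β) (-β⁻¹) = β ^ lam.sum := by
  classical
  have hfin := GQ.ssvtq_finite lam n
  unfold GQspec
  rw [finsum_mem_eq_finite_toFinset_sum _ hfin]
  have hmem : ∀ T ∈ hfin.toFinset, IsSSVTQ lam [] n T :=
    fun T hT => (Set.Finite.mem_toFinset hfin).mp hT
  have hterm : ∀ T ∈ hfin.toFinset,
      (-β⁻¹) ^ (tabSize lam [] T - (lam.sum - List.sum [])) *
        ∏ k ∈ Finset.Icc 1 n, (fun _ => β) k ^ tabWeight lam [] T k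
      = (-1 : ℚ) ^ (tabSize lam [] T - lam.sum) * β ^ lam.sum := by
    intro T hTm
    have hT := hmem T hTm
    have hprod : ∏ k ∈ Finset.Icc 1 n, β ^ tabWeight lam [] T k
        = β ^ tabSize lam [] T := by
      rw [Finset.prod_pow_eq_pow_sum, GQ.weight_sum hT]
    have hge := GQ.tabSize_ge h hT
    simp only [List.sum_nil, Nat.sub_zero]
    rw [hprod, show tabSize lam [] T = lam.sum + (tabSize lam [] T - lam.sum) by omega,
      pow_add, neg_pow]
    rw [inv_pow]
    field_simp
    ring_nf
    simp only [Nat.add_sub_cancel]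
  rw [Finset.sum_congr rfl hterm, ← Finset.sum_mul]
  have hTmin_mem : TminQ lam ∈ hfin.toFinset :=
    (Set.Finite.mem_toFinset hfin).mpr (GQ.TminQ_isSSVTQ h hn)
  have hzero : ∑ T ∈ hfin.toFinset.erase (TminQ lam),
      (-1 : ℚ) ^ (tabSize lam [] T - lam.sum) = 0 := by
    apply Finset.sum_involution (fun T _ => GQ.tog lam T)
    · intro T hTm
      have hTe := Finset.mem_erase.mp hTm
      have hT := hmem T hTe.2
      obtain ⟨hQ, hQne, hinv, hpm⟩ := GQ.tog_good h hn hT hTe.1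
      have hge1 := GQ.tabSize_ge h hT
      have hge2 := GQ.tabSize_ge h hQ
      rcases hpm with hc | hc
      · rw [show tabSize lam [] (GQ.tog lam T) - lam.sum
            = (tabSize lam [] T - lam.sum) + 1 by omega, pow_succ]
        ring
      · rw [show tabSize lam [] T - lam.sum
            = (tabSize lam [] (GQ.tog lam T) - lam.sum) + 1 by omega, pow_succ]
        ring
    · intro T hTm _
      have hTe := Finset.mem_erase.mp hTm
      have hT := hmem T hTe.2
      obtain ⟨hQ, hQne, hinv, hpm⟩ := GQ.tog_good h hn hT hTe.1
      intro hEq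
      rcases hpm with hc | hc <;> rw [hEq] at hc <;> omega
    · intro T hTm
      have hTe := Finset.mem_erase.mp hTm
      have hT := hmem T hTe.2
      obtain ⟨hQ, hQne, hinv, hpm⟩ := GQ.tog_good h hn hT hTe.1
      exact Finset.mem_erase.mpr ⟨hQne, (Set.Finite.mem_toFinset hfin).mpr hQ⟩
    · intro T hTm
      have hTe := Finset.mem_erase.mp hTm
      have hT := hmem T hTe.2
      exact (GQ.tog_good h hn hT hTe.1).2.2.1
  rw [← Finset.add_sum_erase _ _ hTmin_mem, hzero, add_zero,
    GQ.tabSize_TminQ h, Nat.sub_self, pow_zero, one_mul]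
end
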